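/- arXiv:2208.10173 — 10 statements merged into one kernel-verified Lean document; each statement's English description precedes it below -/
import Mathlib

section
/- Assume the system has finite fractal codimension j+1, i.e. there exist α ≠ 0 and C, δ > 0 with |g̃(x) + g̃(−x) − α x^{2j}| ≤ C x^{2j+2} for all |x| < δ. Then lim_{y→0⁺} I(y) / y^{(2n−m+2j)/n} = n² α / (2n − m + 2j); equivalently, I(y) = (n² α / (2n − m + 2j)) · y^{(2n−m+2j)/n} · (1 + o(1)) as y → 0⁺. -/
set_option maxHeartbeats 1000000


open MeasureTheory Set Filter Topology

/-- The slow divergence integral `I(y, ỹ)` for the normal form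
`ẋ = y - xⁿ, ẏ = ε g(x)` with `g(x) = g_m xᵐ + x^{m+1} g̃(x)`. -/
noncomputable def SDI (n m : ℕ) (gm : ℝ) (gt : ℝ → ℝ) (y yt : ℝ) : ℝ :=
  -∫ x in (-(y ^ ((1:ℝ)/(n:ℝ))))..(yt ^ ((1:ℝ)/(n:ℝ))),
      ((n:ℝ) * x ^ (n-1)) ^ 2 / (gm * x ^ m + x ^ (m+1) * gt x)

lemma psi_est (n a j : ℕ) (gm α C M x δ₀ : ℝ) (gt : ℝ → ℝ)
    (hgm : gm = 1 ∨ gm = -1) (ha : Odd a)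
    (hM0 : 0 ≤ M) (hδ1 : δ₀ ≤ 1) (hC : 0 ≤ C)
    (hx0 : 0 ≤ x) (hxδ : x ≤ δ₀)
    (hb1 : |gt x| ≤ M) (hb2 : |gt (-x)| ≤ M)
    (hMδ : δ₀ * M ≤ 1/2)
    (he : |gt x + gt (-x) - α * x ^ (2*j)| ≤ C * x ^ (2*j+2)) :
    |(-((n:ℝ)^2 * x^a / (gm + x * gt x) + (n:ℝ)^2 * (-x)^a / (gm + (-x) * gt (-x))))
      - (n:ℝ)^2 * α * x^(a+2*j+1)|
      ≤ 4*(n:ℝ)^2*(C + |α| * (2*M+M^2)) * x^(a+2*j+2) := by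
  have hgmabs : |gm| = 1 := by rcases hgm with h|h <;> simp [h]
  set P : ℝ := gm + x * gt x with hPdef
  set Q : ℝ := gm + (-x) * gt (-x) with hQdef
  have hx1 : x ≤ 1 := hxδ.trans hδ1
  have hsx : |x * gt x| ≤ x * M := by
    rw [abs_mul, abs_of_nonneg hx0]; exact mul_le_mul_of_nonneg_left hb1 hx0
  have htx : |(-x) * gt (-x)| ≤ x * M := by
    rw [abs_mul, abs_neg, abs_of_nonneg hx0]
    exact mul_le_mul_of_nonneg_left hb2 hx0
  have hxM : x * M ≤ 1/2 := le_trans (mul_le_mul_of_nonneg_right hxδ hM0) hMδ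
  have hP : 1/2 ≤ |P| := by
    have h1 : |gm| ≤ |P| + |x * gt x| := by
      calc |gm| = |P - x * gt x| := by rw [hPdef]; ring_nf
        _ ≤ |P| + |x * gt x| := abs_sub _ _
    rw [hgmabs] at h1; linarith
  have hQ : 1/2 ≤ |Q| := by
    have h1 : |gm| ≤ |Q| + |(-x) * gt (-x)| := by
      calc |gm| = |Q - (-x) * gt (-x)| := by rw [hQdef]; ring_nf
        _ ≤ |Q| + |(-x) * gt (-x)| := abs_sub _ _
    rw [hgmabs] at h1; linarith
  have hP0 : P ≠ 0 := by intro h; rw [h] at hP; simp at hP; linarith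
  have hQ0 : Q ≠ 0 := by intro h; rw [h] at hQ; simp at hQ; linarith
  have hPQ : 1/4 ≤ |P * Q| := by
    rw [abs_mul]; nlinarith [abs_nonneg P, abs_nonneg Q]
  have h1PQ : |P * Q - 1| ≤ (2*M + M^2) * x := by
    have hgm2 : gm * gm = 1 := by rcases hgm with h|h <;> rw [h] <;> norm_num
    have hexp : P * Q - 1 = gm * ((-x) * gt (-x)) + (x * gt x) * gm
        + (x * gt x) * ((-x) * gt (-x)) := by
      have : P * Q = gm * gm + gm * ((-x) * gt (-x)) + (x * gt x) * gm
          + (x * gt x) * ((-x) * gt (-x)) := by rw [hPdef, hQdef]; ring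
      rw [this, hgm2]; ring
    rw [hexp]
    have h2 := abs_add_le (gm * ((-x) * gt (-x)) + (x * gt x) * gm)
        ((x * gt x) * ((-x) * gt (-x)))
    have h3 := abs_add_le (gm * ((-x) * gt (-x))) ((x * gt x) * gm)
    have e1 : |gm * ((-x) * gt (-x))| ≤ x * M := by
      rw [abs_mul, hgmabs, one_mul]; exact htx
    have e2 : |(x * gt x) * gm| ≤ x * M := by
      rw [abs_mul, hgmabs, mul_one]; exact hsx
    have e3 : |(x * gt x) * ((-x) * gt (-x))| ≤ (x*M) * (x*M) := by
      rw [abs_mul]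
      exact mul_le_mul hsx htx (abs_nonneg _) (by positivity)
    have e4 : x * M * (x * M) ≤ M^2 * x := by
      nlinarith [mul_nonneg (mul_nonneg hM0 hM0) hx0]
    linarith
  have hid : (-((n:ℝ)^2 * x^a / P + (n:ℝ)^2 * (-x)^a / Q)) - (n:ℝ)^2 * α * x^(a+2*j+1)
      = (n:ℝ)^2 * x^(a+1) * ((gt x + gt (-x) - α * x^(2*j)) + α * x^(2*j) * (1 - P*Q)) / (P*Q) := by
    have gen : ∀ A B c D : ℝ, D ≠ 0 → A * (B + c*(1-D))/D = A*(B+c)/D - A*c := by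
      intro A B c D hD; field_simp; ring
    have s1 : -((n:ℝ)^2*x^a/P + (n:ℝ)^2*(-x)^a/Q) = (n:ℝ)^2*x^a/Q - (n:ℝ)^2*x^a/P := by
      rw [ha.neg_pow]; ring
    have s2 : (n:ℝ)^2*x^a/Q - (n:ℝ)^2*x^a/P
        = ((n:ℝ)^2*x^a*P - Q*((n:ℝ)^2*x^a))/(Q*P) := div_sub_div _ _ hQ0 hP0
    have s3 : (n:ℝ)^2*x^a*P - Q*((n:ℝ)^2*x^a) = (n:ℝ)^2*x^(a+1)*(gt x + gt (-x)) := by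
      rw [hPdef, hQdef]; ring
    calc (-((n:ℝ)^2 * x^a / P + (n:ℝ)^2 * (-x)^a / Q)) - (n:ℝ)^2 * α * x^(a+2*j+1)
        = ((n:ℝ)^2*x^a/Q - (n:ℝ)^2*x^a/P) - (n:ℝ)^2 * α * x^(a+2*j+1) := by rw [s1]
      _ = ((n:ℝ)^2*x^a*P - Q*((n:ℝ)^2*x^a))/(Q*P) - (n:ℝ)^2 * α * x^(a+2*j+1) := by rw [s2]
      _ = (n:ℝ)^2*x^(a+1)*((gt x + gt (-x) - α * x^(2*j)) + α * x^(2*j))/(P*Q)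
            - (n:ℝ)^2*x^(a+1)*(α * x^(2*j)) := by
          rw [s3, mul_comm Q P]; ring
      _ = (n:ℝ)^2 * x^(a+1) * ((gt x + gt (-x) - α * x^(2*j)) + α * x^(2*j) * (1 - P*Q)) / (P*Q) :=
          (gen ((n:ℝ)^2*x^(a+1)) (gt x + gt (-x) - α * x^(2*j)) (α * x^(2*j)) (P*Q)
            (mul_ne_zero hP0 hQ0)).symm
  rw [hid, abs_div, abs_mul, abs_mul]
  have hxa : |x ^ (a+1)| = x ^ (a+1) := abs_of_nonneg (pow_nonneg hx0 _)
  have hn2 : |(n:ℝ)^2| = (n:ℝ)^2 := abs_of_nonneg (by positivity)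
  rw [hxa, hn2]
  have hN : |(gt x + gt (-x) - α * x^(2*j)) + α * x^(2*j) * (1 - P*Q)|
      ≤ (C + |α| * (2*M+M^2)) * x^(2*j+1) := by
    have h2 := abs_add_le (gt x + gt (-x) - α * x^(2*j)) (α * x^(2*j) * (1 - P*Q))
    have e1 : |α * x^(2*j) * (1 - P*Q)| ≤ |α| * x^(2*j) * ((2*M+M^2)*x) := by
      rw [abs_mul, abs_mul, abs_of_nonneg (pow_nonneg hx0 (2*j))]
      have : |1 - P*Q| = |P*Q - 1| := abs_sub_comm _ _
      rw [this]
      exact mul_le_mul_of_nonneg_left h1PQ (by positivity)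
    have e2 : C * x^(2*j+2) ≤ C * x^(2*j+1) := by
      apply mul_le_mul_of_nonneg_left _ hC
      calc x^(2*j+2) = x^(2*j+1) * x := by ring
        _ ≤ x^(2*j+1) * 1 := mul_le_mul_of_nonneg_left hx1 (pow_nonneg hx0 _)
        _ = x^(2*j+1) := mul_one _
    have e3 : |α| * x^(2*j) * ((2*M+M^2)*x) = |α| * (2*M+M^2) * x^(2*j+1) := by ring
    nlinarith [he]
  have hdiv : (n:ℝ)^2 * x^(a+1) * |(gt x + gt (-x) - α * x^(2*j)) + α * x^(2*j) * (1 - P*Q)| / |P*Q|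
      ≤ (n:ℝ)^2 * x^(a+1) * ((C + |α| * (2*M+M^2)) * x^(2*j+1)) / (1/4) := by
    apply div_le_div₀ (by positivity) _ (by norm_num) hPQ
    exact mul_le_mul_of_nonneg_left hN (by positivity)
  calc (n:ℝ)^2 * x^(a+1) * |(gt x + gt (-x) - α * x^(2*j)) + α * x^(2*j) * (1 - P*Q)| / |P*Q|
      ≤ (n:ℝ)^2 * x^(a+1) * ((C + |α| * (2*M+M^2)) * x^(2*j+1)) / (1/4) := hdiv
    _ = 4*(n:ℝ)^2*(C + |α| * (2*M+M^2)) * x^(a+2*j+2) := by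
        rw [div_eq_mul_inv]
        ring
set_option maxHeartbeats 1000000

open MeasureTheory Set Filter Topology

/-- If the contact point has finite fractal codimension `j+1`, then
`I(y) = (n²α/(2n−m+2j)) y^{(2n−m+2j)/n} (1+o(1))` as `y → 0⁺`. -/
theorem sdi_asymptotics_finite_codim
    (n m j : ℕ) (gm : ℝ) (gt : ℝ → ℝ)
    (hn2 : 2 ≤ n) (hne : Even n) (hm1 : 1 ≤ m) (hmo : Odd m)
    (hmn : m ≤ 2 * (n - 1))
    (hgm : gm = 1 ∨ gm = -1)
    (hgt : ∃ r > (0:ℝ), ContDiffOn ℝ (⊤ : ℕ∞) gt (Set.Ioo (-r) r))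
    (α C δ : ℝ) (hα : α ≠ 0) (hC : 0 < C) (hδ : 0 < δ)
    (hcodim : ∀ x : ℝ, |x| < δ →
      |gt x + gt (-x) - α * x ^ (2*j)| ≤ C * x ^ (2*j+2)) :
    Filter.Tendsto
      (fun y : ℝ =>
        SDI n m gm gt y y / y ^ ((2*(n:ℝ) - (m:ℝ) + 2*(j:ℝ)) / (n:ℝ)))
      (nhdsWithin 0 (Set.Ioi 0))
      (nhds ((n:ℝ)^2 * α / (2*(n:ℝ) - (m:ℝ) + 2*(j:ℝ)))) := by
  obtain ⟨r, hr, hgtC⟩ := hgt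
  have hn0 : (0:ℝ) < n := by exact_mod_cast (by omega : 0 < n)
  have hgmabs : |gm| = 1 := by rcases hgm with h|h <;> simp [h]
  set a : ℕ := 2*n - 2 - m with haDef
  have hma : (n-1)*2 = m + a := by omega
  have haodd : Odd a := by
    obtain ⟨c, hc⟩ := hmo
    exact ⟨n - c - 2, by omega⟩
  set K : ℕ := a + 2*j + 2 with hKDef
  have hKR : (0:ℝ) < K := by exact_mod_cast (by omega : 0 < K)
  have hcast : 2*(n:ℝ) - (m:ℝ) + 2*(j:ℝ) = (K:ℝ) := by
    have h1 : m + a + 2 = 2*n := by omega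
    have h1' : (m:ℝ) + (a:ℝ) + 2 = 2*(n:ℝ) := by exact_mod_cast h1
    have h2 : (K:ℝ) = (a:ℝ) + 2*(j:ℝ) + 2 := by rw [hKDef]; push_cast; ring
    linarith
  rw [hcast]
  set G₀ : ℝ → ℝ := fun x => (n:ℝ)^2 * x^a / (gm + x * gt x) with hG₀def
  -- the integrand equals G₀ almost everywhere
  have hSDIeq : ∀ y : ℝ, SDI n m gm gt y y
      = -∫ x in (-(y ^ ((1:ℝ)/(n:ℝ))))..(y ^ ((1:ℝ)/(n:ℝ))), G₀ x := by
    intro y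
    have h0 : {x : ℝ | x ≠ 0} ∈ ae (volume : Measure ℝ) := by
      rw [mem_ae_iff]
      have he : {x : ℝ | x ≠ 0}ᶜ = {(0:ℝ)} := by ext x; simp
      rw [he]; exact measure_singleton 0
    unfold SDI
    congr 1
    apply intervalIntegral.integral_congr_ae
    filter_upwards [h0] with x hx _
    have e1 : ((n:ℝ)*x^(n-1))^2 = x^m * ((n:ℝ)^2 * x^a) := by
      rw [mul_pow, ← pow_mul, hma, pow_add]; ring
    have e2 : gm*x^m + x^(m+1)*gt x = x^m * (gm + x * gt x) := by ring
    rw [e1, e2, mul_div_mul_left _ _ (pow_ne_zero m hx)]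
  -- bound on g̃ near 0
  have hrc : Icc (-(r/2)) (r/2) ⊆ Ioo (-r) r := fun x hx =>
    ⟨by linarith [hx.1], by linarith [hx.2]⟩
  have hgtc : ContinuousOn gt (Icc (-(r/2)) (r/2)) := (hgtC.continuousOn).mono hrc
  obtain ⟨M, hM⟩ := isCompact_Icc.exists_bound_of_continuousOn hgtc
  have hM' : ∀ x ∈ Icc (-(r/2)) (r/2), |gt x| ≤ M := by
    intro x hx; rw [← Real.norm_eq_abs]; exact hM x hx
  have hM0 : 0 ≤ M := le_trans (abs_nonneg _) (hM' 0 ⟨by linarith, by linarith⟩)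
  -- the small radius δ₀
  set δ₀ : ℝ := min (r/2) (min (δ/2) (1/(2*(M+1)))) with hδ₀def
  have hδ₀pos : 0 < δ₀ :=
    lt_min (by linarith) (lt_min (by linarith) (by positivity))
  have hδ₀r : δ₀ ≤ r/2 := min_le_left _ _
  have hδ₀δ : δ₀ < δ :=
    lt_of_le_of_lt ((min_le_right _ _).trans (min_le_left _ _)) (by linarith)
  have hδ₀M' : δ₀ ≤ 1/(2*(M+1)) := (min_le_right _ _).trans (min_le_right _ _)
  have hδ₀1 : δ₀ ≤ 1 := by
    refine hδ₀M'.trans ?_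
    rw [div_le_one (by positivity)]; linarith
  have hδ₀M : δ₀ * M ≤ 1/2 := by
    have h1 : δ₀ * M ≤ (1/(2*(M+1))) * M := mul_le_mul_of_nonneg_right hδ₀M' hM0
    have h2 : (1/(2*(M+1))) * M ≤ 1/2 := by
      rw [div_mul_eq_mul_div, div_le_div_iff₀ (by positivity) (by norm_num)]
      nlinarith
    linarith
  -- continuity of G₀ on [-δ₀, δ₀]
  have hIccsub : Icc (-δ₀) δ₀ ⊆ Icc (-(r/2)) (r/2) :=
    Icc_subset_Icc (by linarith) hδ₀r
  have hden : ∀ x ∈ Icc (-δ₀) δ₀, gm + x * gt x ≠ 0 := by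
    intro x hx
    have h1 : |x * gt x| ≤ 1/2 := by
      have hxM : |gt x| ≤ M := hM' x (hIccsub hx)
      have hxd : |x| ≤ δ₀ := abs_le.mpr ⟨hx.1, hx.2⟩
      calc |x * gt x| = |x| * |gt x| := abs_mul _ _
        _ ≤ δ₀ * M := mul_le_mul hxd hxM (abs_nonneg _) hδ₀pos.le
        _ ≤ 1/2 := hδ₀M
    intro h
    have h2 : |gm| ≤ |gm + x * gt x| + |x * gt x| := by
      calc |gm| = |(gm + x * gt x) - x * gt x| := by ring_nf
        _ ≤ |gm + x * gt x| + |x * gt x| := abs_sub _ _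
    rw [h, hgmabs] at h2; simp at h2; linarith [abs_mul x (gt x)]
  have hG₀cont : ContinuousOn G₀ (Icc (-δ₀) δ₀) := by
    rw [hG₀def]
    apply ContinuousOn.div
    · exact (continuous_const.mul (continuous_pow a)).continuousOn
    · exact continuous_const.continuousOn.add
        (continuousOn_id.mul (hgtc.mono hIccsub))
    · exact hden
  -- the symmetrized integrand
  set ψ : ℝ → ℝ := fun x => -(G₀ x + G₀ (-x)) with hψdef
  have hmaps : MapsTo (fun x : ℝ => -x) (Icc (-δ₀) δ₀) (Icc (-δ₀) δ₀) := by
    intro x hx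
    have hx1 := hx.1; have hx2 := hx.2
    show -x ∈ Icc (-δ₀) δ₀
    exact ⟨by linarith, by linarith⟩
  have hψcont : ContinuousOn ψ (Icc (-δ₀) δ₀) := by
    rw [hψdef]
    exact (hG₀cont.add (hG₀cont.comp continuous_neg.continuousOn hmaps)).neg
  set C₂ : ℝ := 4*(n:ℝ)^2*(C + |α| * (2*M+M^2)) with hC₂def
  have hC₂0 : 0 ≤ C₂ := by rw [hC₂def]; positivity
  -- pointwise estimate
  have hψest : ∀ x : ℝ, 0 ≤ x → x ≤ δ₀ →
      |ψ x - (n:ℝ)^2*α*x^(a+2*j+1)| ≤ C₂ * x^K := by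
    intro x hx0 hxδ
    have hb1 : |gt x| ≤ M := hM' x ⟨by linarith, by linarith⟩
    have hb2 : |gt (-x)| ≤ M := hM' (-x) ⟨by linarith, by linarith⟩
    have he : |gt x + gt (-x) - α * x ^ (2*j)| ≤ C * x ^ (2*j+2) :=
      hcodim x (by rw [abs_of_nonneg hx0]; linarith)
    have := psi_est n a j gm α C M x δ₀ gt hgm haodd hM0 hδ₀1 hC.le hx0 hxδ
      hb1 hb2 hδ₀M he
    rw [hψdef, hG₀def, hC₂def, hKDef]
    simpa using this
  set L : ℝ := (n:ℝ)^2 * α / (K:ℝ) with hLdef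
  set Φ : ℝ → ℝ := fun u => (-∫ x in (-u)..u, G₀ x)/u^K with hΦdef
  -- quantitative bound for Φ
  have hmain : ∀ u : ℝ, 0 < u → u < δ₀ → |Φ u - L| ≤ C₂ * u := by
    intro u hu huδ
    have hII1 : IntervalIntegrable G₀ volume (-u) 0 := by
      apply (hG₀cont.mono ?_).intervalIntegrable
      rw [uIcc_of_le (by linarith : -u ≤ (0:ℝ))]
      exact fun x hx => ⟨by linarith [hx.1], by linarith [hx.2]⟩
    have hII2 : IntervalIntegrable G₀ volume 0 u := by
      apply (hG₀cont.mono ?_).intervalIntegrable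
      rw [uIcc_of_le hu.le]
      exact fun x hx => ⟨by linarith [hx.1], by linarith [hx.2]⟩
    have hIIneg : IntervalIntegrable (fun x => G₀ (-x)) volume 0 u := by
      apply ContinuousOn.intervalIntegrable
      apply hG₀cont.comp continuous_neg.continuousOn
      intro x hx
      rw [uIcc_of_le hu.le] at hx
      have hx1 := hx.1; have hx2 := hx.2
      show -x ∈ Icc (-δ₀) δ₀
      exact ⟨by linarith, by linarith⟩
    have hIIψ : IntervalIntegrable ψ volume 0 u := by
      apply (hψcont.mono ?_).intervalIntegrable
      rw [uIcc_of_le hu.le]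
      exact fun x hx => ⟨by linarith [hx.1], by linarith [hx.2]⟩
    have hIIpow : IntervalIntegrable (fun x : ℝ => (n:ℝ)^2*α*x^(a+2*j+1)) volume 0 u :=
      (continuous_const.mul (continuous_pow _)).intervalIntegrable _ _
    have hsplit : -∫ x in (-u)..u, G₀ x = ∫ x in (0:ℝ)..u, ψ x := by
      have h1 : (∫ x in (-u)..(0:ℝ), G₀ x) + ∫ x in (0:ℝ)..u, G₀ x
          = ∫ x in (-u)..u, G₀ x :=
        intervalIntegral.integral_add_adjacent_intervals hII1 hII2
      have h2 : (∫ x in (0:ℝ)..u, G₀ (-x)) = ∫ x in (-u)..(0:ℝ), G₀ x := by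
        rw [intervalIntegral.integral_comp_neg fun x => G₀ x]
        norm_num
      have h3 : (∫ x in (0:ℝ)..u, ψ x)
          = -((∫ x in (0:ℝ)..u, G₀ x) + ∫ x in (0:ℝ)..u, G₀ (-x)) := by
        rw [hψdef, ← intervalIntegral.integral_add hII2 hIIneg,
          ← intervalIntegral.integral_neg]
      linarith
    have hpowint : (∫ x in (0:ℝ)..u, (n:ℝ)^2*α*x^(a+2*j+1)) = L * u^K := by
      rw [intervalIntegral.integral_const_mul, integral_pow]
      have hKK : a+2*j+1+1 = K := by omega
      rw [hKK, hLdef]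
      have : (0:ℝ)^K = 0 := zero_pow (by omega)
      rw [this]
      have hcc : ((a:ℝ)+2*(j:ℝ)+1+1) = (K:ℝ) := by
        rw [hKDef]; push_cast; ring
      rw [show (((a+2*j+1 : ℕ):ℝ)+1) = (K:ℝ) by push_cast [hKDef]; ring]
      field_simp
      ring
    have hdiff : |(∫ x in (0:ℝ)..u, ψ x) - L * u^K| ≤ C₂ * u^(K+1) := by
      rw [← hpowint, ← intervalIntegral.integral_sub hIIψ hIIpow]
      have hb : ∀ᵐ t ∂(volume.restrict (Set.uIoc (0:ℝ) u)),
          ‖ψ t - (n:ℝ)^2*α*t^(a+2*j+1)‖ ≤ C₂ * t^K := by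
        rw [uIoc_of_le hu.le]
        filter_upwards [ae_restrict_mem measurableSet_Ioc] with t ht
        rw [Real.norm_eq_abs]
        exact hψest t ht.1.le (ht.2.trans huδ.le)
      have hIIbound : IntervalIntegrable (fun t : ℝ => C₂ * t^K) volume 0 u :=
        (continuous_const.mul (continuous_pow _)).intervalIntegrable _ _
      have hnorm := intervalIntegral.norm_integral_le_abs_of_norm_le hb hIIbound
      have hval : (∫ t in (0:ℝ)..u, C₂ * t^K) = C₂ * (u^(K+1)/((K:ℝ)+1)) := by
        rw [intervalIntegral.integral_const_mul, integral_pow]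
        rw [zero_pow (by omega : K+1 ≠ 0)]
        push_cast; ring
      rw [Real.norm_eq_abs] at hnorm
      calc |(∫ x in (0:ℝ)..u, (ψ x - (n:ℝ)^2*α*x^(a+2*j+1)))|
          ≤ |∫ t in (0:ℝ)..u, C₂ * t^K| := hnorm
        _ = C₂ * (u^(K+1)/((K:ℝ)+1)) := by
            rw [hval, abs_of_nonneg (by positivity)]
        _ ≤ C₂ * u^(K+1) := by
            apply mul_le_mul_of_nonneg_left _ hC₂0
            apply div_le_self (by positivity)
            have : (1:ℝ) ≤ (K:ℝ) := by exact_mod_cast (by omega : 1 ≤ K)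
            linarith
    have hΦeq : Φ u - L = ((∫ x in (0:ℝ)..u, ψ x) - L * u^K)/u^K := by
      rw [hΦdef]
      simp only
      rw [hsplit, sub_div, mul_div_assoc,
        div_self (pow_ne_zero K hu.ne'), mul_one]
    rw [hΦeq, abs_div, abs_of_nonneg (pow_nonneg hu.le K),
      div_le_iff₀ (by positivity)]
    calc |(∫ x in (0:ℝ)..u, ψ x) - L * u^K| ≤ C₂ * u^(K+1) := hdiff
      _ = C₂ * u * u^K := by ring
  -- limit of Φ
  have htend0 : Tendsto (fun u : ℝ => C₂ * u) (𝓝[>] (0:ℝ)) (𝓝 0) := by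
    have h : Tendsto (fun u : ℝ => C₂ * u) (𝓝 (0:ℝ)) (𝓝 (C₂ * 0)) :=
      tendsto_id.const_mul C₂
    rw [mul_zero] at h
    exact h.mono_left nhdsWithin_le_nhds
  have hΦtend : Tendsto Φ (𝓝[>] (0:ℝ)) (𝓝 L) := by
    have h := squeeze_zero_norm' (f := fun u => Φ u - L)
      (a := fun u : ℝ => C₂ * u) ?_ htend0
    · have := h.add_const L
      simpa using this
    · filter_upwards [Ioo_mem_nhdsGT_of_mem ⟨le_refl (0:ℝ), hδ₀pos⟩] with u hu
      rw [Real.norm_eq_abs]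
      exact hmain u hu.1 hu.2
  -- composition with y ↦ y^{1/n}
  have h1n : ((1:ℝ)/(n:ℝ)) ≠ 0 := by positivity
  have hu1 : Tendsto (fun y : ℝ => y ^ ((1:ℝ)/(n:ℝ))) (𝓝[>] (0:ℝ)) (𝓝[>] (0:ℝ)) := by
    rw [tendsto_nhdsWithin_iff]
    constructor
    · have hcont : ContinuousAt (fun y : ℝ => y ^ ((1:ℝ)/(n:ℝ))) 0 :=
        Real.continuousAt_rpow_const 0 _ (Or.inr (by positivity))
      have h := hcont.tendsto.mono_left (nhdsWithin_le_nhds (s := Ioi (0:ℝ)))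
      rwa [Real.zero_rpow h1n] at h
    · filter_upwards [self_mem_nhdsWithin] with y hy
      exact Real.rpow_pos_of_pos hy _
  have hcomp := hΦtend.comp hu1
  apply hcomp.congr'
  filter_upwards [self_mem_nhdsWithin] with y hy
  have hy0 : (0:ℝ) < y := hy
  have hyK : y ^ ((K:ℝ)/(n:ℝ)) = (y ^ ((1:ℝ)/(n:ℝ)))^K := by
    rw [← Real.rpow_natCast (y ^ ((1:ℝ)/(n:ℝ))) K, ← Real.rpow_mul hy0.le]
    congr 1
    field_simp
  simp only [Function.comp, hΦdef]
  rw [hSDIeq y, hyK]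
end

section
/- Assume the system has finite fractal codimension j+1, i.e. there exist α ≠ 0 and C, δ > 0 with |g̃(x) + g̃(−x) − α x^{2j}| ≤ C x^{2j+2} for all |x| < δ. Then there exists y* > 0 such that α · I(y) > 0 for all y ∈ (0, y*); that is, for all sufficiently small y > 0 the divergence integral I(y) is nonzero and has the same sign as α. -/
open MeasureTheory Set Filter Topology

set_option maxHeartbeats 1600000 in
/-- If the contact point has finite fractal codimension `j+1` with leading
coefficient `α ≠ 0`, then for all sufficiently small `y > 0` the divergence
integral `I(y)` is nonzero and has the same sign as `α`. -/
theorem sdi_sign_finite_codim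
    (n m j : ℕ) (gm : ℝ) (gt : ℝ → ℝ)
    (hn2 : 2 ≤ n) (hne : Even n) (hm1 : 1 ≤ m) (hmo : Odd m)
    (hmn : m ≤ 2 * (n - 1))
    (hgm : gm = 1 ∨ gm = -1)
    (hgt : ∃ r > (0:ℝ), ContDiffOn ℝ (⊤ : ℕ∞) gt (Set.Ioo (-r) r))
    (α C δ : ℝ) (hα : α ≠ 0) (hC : 0 < C) (hδ : 0 < δ)
    (hcodim : ∀ x : ℝ, |x| < δ →
      |gt x + gt (-x) - α * x ^ (2*j)| ≤ C * x ^ (2*j+2)) :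
    ∃ ystar > (0:ℝ), ∀ y : ℝ, 0 < y → y < ystar →
      α * SDI n m gm gt y y > 0 := by
  obtain ⟨r, hr, hgtc⟩ := hgt
  have hgm2 : gm * gm = 1 := by rcases hgm with h | h <;> rw [h] <;> norm_num
  have hgmabs : |gm| = 1 := by rcases hgm with h | h <;> rw [h] <;> norm_num
  obtain ⟨c, hc⟩ := hmo
  have hmlt : m < 2 * n - 2 := by omega
  set k : ℕ := 2 * n - 2 - m with hkdef
  have hkodd : Odd k := ⟨n - 2 - c, by omega⟩
  have hk1 : 1 ≤ k := hkodd.pos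
  -- bound on gt near 0
  set ρ : ℝ := min r δ / 2 with hρdef
  have hρ : 0 < ρ := by
    have : 0 < min r δ := lt_min hr hδ
    simp only [hρdef]; linarith
  have hρr : ρ < r := by
    have h1 : min r δ ≤ r := min_le_left _ _
    simp only [hρdef]; linarith
  have hρδ : ρ < δ := by
    have h1 : min r δ ≤ δ := min_le_right _ _
    simp only [hρdef]; linarith
  have hsub : Icc (-ρ) ρ ⊆ Ioo (-r) r := fun x hx =>
    ⟨by have := hx.1; linarith, by have := hx.2; linarith⟩
  have hgtc' : ContinuousOn gt (Icc (-ρ) ρ) := (hgtc.continuousOn).mono hsub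
  obtain ⟨M, hM⟩ := isCompact_Icc.exists_bound_of_continuousOn hgtc'
  have hM0 : 0 ≤ M := le_trans (norm_nonneg (gt 0)) (hM 0 ⟨by linarith, by linarith⟩)
  set δ0 : ℝ := min ρ (min (1 / (2 * (M + 1))) (Real.sqrt (|α| / (2 * C)))) with hδ0def
  have hαabs : 0 < |α| := abs_pos.mpr hα
  have hδ0 : 0 < δ0 := by
    apply lt_min hρ (lt_min (by positivity) (Real.sqrt_pos.mpr (by positivity)))
  have hδ0ρ : δ0 ≤ ρ := min_le_left _ _
  -- denominator sign control
  have hDpos : ∀ x : ℝ, |x| ≤ δ0 → 1/2 ≤ gm * (gm + x * gt x) := by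
    intro x hx
    have hxρ : x ∈ Icc (-ρ) ρ := by
      have := abs_le.mp (hx.trans hδ0ρ); exact ⟨this.1, this.2⟩
    have h1 : |gt x| ≤ M := by
      have := hM x hxρ; rwa [Real.norm_eq_abs] at this
    have h2 : |x| ≤ 1 / (2*(M+1)) :=
      hx.trans ((min_le_right _ _).trans (min_le_left _ _))
    have hxgt : |x * gt x| ≤ 1/2 := by
      calc |x * gt x| = |x| * |gt x| := abs_mul _ _
        _ ≤ (1/(2*(M+1))) * M :=
            mul_le_mul h2 h1 (abs_nonneg _) (by positivity)
        _ ≤ 1/2 := by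
            rw [div_mul_eq_mul_div, div_le_div_iff₀ (by positivity) (by norm_num : (0:ℝ) < 2)]
            nlinarith
    have he : gm * (gm + x * gt x) = 1 + gm * (x * gt x) := by rw [mul_add, hgm2]
    have h3 : |gm * (x * gt x)| ≤ 1/2 := by
      rw [abs_mul, hgmabs, one_mul]; exact hxgt
    have h4 := neg_abs_le (gm * (x * gt x))
    rw [he]; linarith
  have hDne : ∀ x : ℝ, |x| ≤ δ0 → gm + x * gt x ≠ 0 := by
    intro x hx h
    have := hDpos x hx
    rw [h, mul_zero] at this; linarith
  have hDenpos : ∀ x : ℝ, |x| ≤ δ0 →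
      0 < (gm + x * gt x) * (gm + (-x) * gt (-x)) := by
    intro x hx
    have h1 := hDpos x hx
    have h2 := hDpos (-x) (by rwa [abs_neg])
    have h3 : 0 < (gm * (gm + x * gt x)) * (gm * (gm + (-x) * gt (-x))) :=
      mul_pos (lt_of_lt_of_le (by norm_num) h1) (lt_of_lt_of_le (by norm_num) h2)
    have h4 : (gm + x * gt x) * (gm + (-x) * gt (-x))
        = (gm * (gm + x * gt x)) * (gm * (gm + (-x) * gt (-x))) := by
      have : (gm * (gm + x * gt x)) * (gm * (gm + (-x) * gt (-x)))
          = (gm * gm) * ((gm + x * gt x) * (gm + (-x) * gt (-x))) := by ring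
      rw [this, hgm2, one_mul]
    rw [h4]; exact h3
  -- sign of the symmetrized gt
  have hαsum : ∀ x : ℝ, 0 < x → x ≤ δ0 → 0 < α * (gt x + gt (-x)) := by
    intro x hx0 hxδ0
    have hxδ : |x| < δ := by rw [abs_of_pos hx0]; linarith [hδ0ρ, hρδ]
    have hb := hcodim x hxδ
    rw [pow_add] at hb
    have hx2 : C * x^2 ≤ |α| / 2 := by
      have hs : x ≤ Real.sqrt (|α| / (2*C)) :=
        hxδ0.trans ((min_le_right _ _).trans (min_le_right _ _))
      have hsq : x^2 ≤ |α| / (2*C) := by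
        rw [← Real.sq_sqrt (le_of_lt (div_pos hαabs (by linarith)))]
        exact pow_le_pow_left₀ (le_of_lt hx0) hs 2
      calc C * x^2 ≤ C * (|α|/(2*C)) := by nlinarith
        _ = |α|/2 := by field_simp
    have hxpow : 0 < x ^ (2*j) := pow_pos hx0 _
    have hsq : |α| * |α| = α * α := by rw [← abs_mul, abs_mul_self]
    have key : α*α*x^(2*j) - |α| * (C * (x^(2*j)*x^2)) ≤ α * (gt x + gt (-x)) := by
      have habs : |α * (gt x + gt (-x) - α * x^(2*j))| ≤ |α| * (C*(x^(2*j)*x^2)) := by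
        rw [abs_mul]; exact mul_le_mul_of_nonneg_left hb (abs_nonneg α)
      have h5 := neg_abs_le (α * (gt x + gt (-x) - α * x^(2*j)))
      nlinarith [h5, habs]
    have key2 : |α| * (C * (x^(2*j)*x^2)) ≤ |α| * (|α|/2) * x^(2*j) := by
      have hmm : |α| * (C * x^2) ≤ |α| * (|α|/2) :=
        mul_le_mul_of_nonneg_left hx2 (abs_nonneg α)
      calc |α| * (C*(x^(2*j)*x^2)) = (|α| * (C*x^2)) * x^(2*j) := by ring
        _ ≤ (|α| * (|α|/2)) * x^(2*j) := mul_le_mul_of_nonneg_right hmm (le_of_lt hxpow)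
    have key3 : |α| * (|α|/2) * x^(2*j) = α*α/2 * x^(2*j) := by
      have he3 : |α| * (|α|/2) = α*α/2 := by rw [← hsq]; ring
      rw [he3]
    have key4 : 0 < α*α/2*x^(2*j) := by
      have h6 : 0 < α * α := mul_self_pos.mpr hα
      have h7 : 0 < α*α/2 := by linarith
      exact mul_pos h7 hxpow
    linarith [key, key2, key3, key4]
  -- the regularized integrand
  set D : ℝ → ℝ := fun x => gm + x * gt x with hDdef
  set h : ℝ → ℝ := fun x => (n:ℝ)^2 * x^k / D x with hhdef
  have hn0 : (0:ℝ) < (n:ℝ) := by exact_mod_cast (by omega : 0 < n)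
  have hDcont : ContinuousOn D (Icc (-δ0) δ0) := by
    apply continuousOn_const.add
    apply continuousOn_id.mul
    exact hgtc'.mono (Icc_subset_Icc (by linarith) hδ0ρ)
  have hhcont : ContinuousOn h (Icc (-δ0) δ0) := by
    apply ContinuousOn.div
    · exact (continuous_const.mul (continuous_pow k)).continuousOn
    · exact hDcont
    · intro x hx
      exact hDne x (abs_le.mpr ⟨hx.1, hx.2⟩)
  refine ⟨δ0 ^ n, pow_pos hδ0 n, ?_⟩
  intro y hy0 hyy
  set u : ℝ := y ^ ((1:ℝ)/(n:ℝ)) with hudef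
  have hu0 : 0 < u := Real.rpow_pos_of_pos hy0 _
  have huδ0 : u ≤ δ0 := by
    have hinv : 0 < (1:ℝ)/(n:ℝ) := by positivity
    have h1 : u < (δ0 ^ n) ^ ((1:ℝ)/(n:ℝ)) :=
      Real.rpow_lt_rpow (le_of_lt hy0) hyy hinv
    have h2 : ((δ0 ^ n : ℝ)) ^ ((1:ℝ)/(n:ℝ)) = δ0 := by
      rw [← Real.rpow_natCast δ0 n, ← Real.rpow_mul (le_of_lt hδ0),
        mul_one_div, div_self (by positivity : (n:ℝ) ≠ 0), Real.rpow_one]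
    rw [h2] at h1; exact le_of_lt h1
  have hIccsub : Icc (-u) u ⊆ Icc (-δ0) δ0 := Icc_subset_Icc (by linarith) huδ0
  -- integrability
  have hint2 : IntervalIntegrable h volume 0 u := by
    apply ContinuousOn.intervalIntegrable
    apply hhcont.mono
    rw [uIcc_of_le (le_of_lt hu0)]
    exact fun x hx => ⟨by linarith [hx.1], by linarith [hx.2]⟩
  have hint1 : IntervalIntegrable h volume (-u) 0 := by
    apply ContinuousOn.intervalIntegrable
    apply hhcont.mono
    rw [uIcc_of_le (by linarith : -u ≤ 0)]
    exact fun x hx => ⟨by linarith [hx.1], by linarith [hx.2]⟩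
  have hint3 : IntervalIntegrable (fun x => h (-x)) volume 0 u := by
    apply ContinuousOn.intervalIntegrable
    apply ContinuousOn.comp hhcont continuous_neg.continuousOn
    rw [uIcc_of_le (le_of_lt hu0)]
    exact fun x hx => ⟨by simp; linarith [hx.1, hx.2], by simp; linarith [hx.1, hx.2]⟩
  -- rewrite SDI with the regularized integrand
  have hSDI : SDI n m gm gt y y = -∫ x in (-u)..u, h x := by
    unfold SDI
    rw [← hudef]
    congr 1
    apply intervalIntegral.integral_congr
    intro x hx
    rw [uIcc_of_le (by linarith : -u ≤ u)] at hx
    have hxδ : |x| ≤ δ0 := abs_le.mpr ⟨by linarith [hx.1], by linarith [hx.2]⟩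
    show ((n:ℝ) * x ^ (n-1))^2 / (gm * x^m + x^(m+1) * gt x) = h x
    rcases eq_or_ne x 0 with rfl | hx0
    · have hn1 : n - 1 ≠ 0 := by omega
      have hk0 : k ≠ 0 := by omega
      simp [hhdef, hDdef, zero_pow hn1, zero_pow hk0]
    · have hD : D x ≠ 0 := hDne x hxδ
      have hxm : (x : ℝ) ^ m ≠ 0 := pow_ne_zero _ hx0
      have e1 : ((n:ℝ) * x ^ (n-1))^2 = x^m * ((n:ℝ)^2 * x^k) := by
        rw [mul_pow, ← pow_mul]
        have he : (n-1)*2 = m + k := by omega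
        rw [he, pow_add]; ring
      have e2 : gm * x^m + x^(m+1) * gt x = x^m * D x := by
        simp only [hDdef]; rw [pow_succ]; ring
      simp only [hhdef]
      rw [e1, e2, mul_div_mul_left _ _ hxm]
  -- symmetrize the integral
  have hdecomp : ∫ x in (-u)..u, h x = ∫ x in (0:ℝ)..u, (h (-x) + h x) := by
    rw [← intervalIntegral.integral_add_adjacent_intervals hint1 hint2,
      intervalIntegral.integral_add hint3 hint2]
    congr 1
    have hcn := intervalIntegral.integral_comp_neg (a := (0:ℝ)) (b := u) h
    rw [neg_zero] at hcn
    exact hcn.symm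
  -- positivity of the symmetrized integral
  have hpos : 0 < ∫ x in (0:ℝ)..u, (-α) * (h (-x) + h x) := by
    apply intervalIntegral.intervalIntegral_pos_of_pos_on
    · exact (hint3.add hint2).const_mul (-α)
    · intro x hx
      obtain ⟨hx0, hxu⟩ := hx
      have hxδ : |x| ≤ δ0 := by rw [abs_of_pos hx0]; linarith
      have hxδ' : |(-x)| ≤ δ0 := by rwa [abs_neg]
      have hD1 : D x ≠ 0 := hDne x hxδ
      have hD2 : D (-x) ≠ 0 := hDne (-x) hxδ'
      have hneg : (-x)^k = -x^k := hkodd.neg_pow x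
      have hD1' : gm + x * gt x ≠ 0 := by simpa [hDdef] using hD1
      have hD2' : gm + -x * gt (-x) ≠ 0 := by simpa [hDdef] using hD2
      have hmx : h (-x) = -((n:ℝ)^2 * x^k) / (gm + -x * gt (-x)) := by
        simp [hhdef, hDdef, hneg, mul_neg, neg_div]
      have hpx : h x = (n:ℝ)^2 * x^k / (gm + x * gt x) := by simp [hhdef, hDdef]
      have heq : (-α) * (h (-x) + h x)
          = ((-α) * (-((n:ℝ)^2 * x^k) * (gm + x * gt x)
              + (gm + -x * gt (-x)) * ((n:ℝ)^2 * x^k)))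
            / ((gm + -x * gt (-x)) * (gm + x * gt x)) := by
        rw [hmx, hpx, div_add_div _ _ hD2' hD1', mul_div_assoc]
      rw [heq]
      apply div_pos
      · have hnum : (-α) * (-((n:ℝ)^2 * x^k) * (gm + x * gt x)
              + (gm + -x * gt (-x)) * ((n:ℝ)^2 * x^k))
            = (n:ℝ)^2 * (x^k * x) * (α * (gt x + gt (-x))) := by ring
        rw [hnum]
        have hxδ0' : x ≤ δ0 := le_trans (le_abs_self x) hxδ
        exact mul_pos (mul_pos (pow_pos hn0 2) (mul_pos (pow_pos hx0 k) hx0))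
          (hαsum x hx0 hxδ0')
      · exact (mul_comm (gm + x * gt x) (gm + -x * gt (-x))) ▸ hDenpos x hxδ
    · exact hu0
  have hfinal : α * SDI n m gm gt y y = ∫ x in (0:ℝ)..u, (-α) * (h (-x) + h x) := by
    rw [hSDI, hdecomp, intervalIntegral.integral_const_mul]
    ring
  rw [gt_iff_lt, hfinal]
  exact hpos
end

section
/- (Entry–exit relation is well defined.) There exist δ', δ with 0 < δ ≤ δ' such that for every y ∈ (0, δ) there is a unique ỹ ∈ (0, δ') satisfying I(y, ỹ) = 0. -/
open MeasureTheory Set Filter Topology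

lemma SDI_main (n m : ℕ) (gt : ℝ → ℝ)
    (hn2 : 2 ≤ n) (hm1 : 1 ≤ m) (hmo : Odd m)
    (hmn : m ≤ 2 * (n - 1))
    (hgt : ∃ r > (0:ℝ), ContDiffOn ℝ (⊤ : ℕ∞) gt (Set.Ioo (-r) r)) :
    ∃ δ' δ : ℝ, 0 < δ ∧ δ ≤ δ' ∧ ∀ y : ℝ, 0 < y → y < δ →
      ∃! yt : ℝ, (0 < yt ∧ yt < δ') ∧ SDI n m 1 gt y yt = 0 := by
  obtain ⟨r, hr, hg⟩ := hgt
  have hn0 : n ≠ 0 := by omega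
  have hnR : (0:ℝ) < n := by exact_mod_cast Nat.pos_of_ne_zero hn0
  set k := 2 * (n - 1) - m with hk
  have hkm : k + m = 2 * (n - 1) := Nat.sub_add_cancel hmn
  have hk_odd : Odd k := by
    rcases hmo with ⟨j, hj⟩
    refine ⟨(n - 1) - j - 1, by omega⟩
  have hk1 : 1 ≤ k := hk_odd.pos
  have hgc : ContinuousOn gt (Ioo (-r) r) := hg.continuousOn
  have h0mem : (0:ℝ) ∈ Ioo (-r) r := ⟨by linarith, hr⟩
  -- continuity of x * gt x at 0
  have hmul : ContinuousAt (fun x : ℝ => x * gt x) 0 :=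
    continuousAt_id.mul (hgc.continuousAt (isOpen_Ioo.mem_nhds h0mem))
  obtain ⟨ρ₀, hρ₀, hH⟩ := Metric.continuousAt_iff.mp hmul (1/2) (by norm_num)
  set ρ : ℝ := min (ρ₀ / 2) (r / 2) with hρdef
  have hρ : 0 < ρ := lt_min (by linarith) (by linarith)
  have hρr : ρ < r := lt_of_le_of_lt (min_le_right _ _) (by linarith)
  have hsub : Icc (-ρ) ρ ⊆ Ioo (-r) r := fun x hx =>
    ⟨by cases hx; linarith, by cases hx; linarith⟩
  have hsmall : ∀ x ∈ Icc (-ρ) ρ, |x * gt x| < 1/2 := by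
    intro x hx
    have h1 : dist x 0 < ρ₀ := by
      rw [Real.dist_eq, sub_zero]
      have := abs_le.mpr ⟨hx.1, hx.2⟩
      have : |x| ≤ ρ₀ / 2 := le_trans this (min_le_left _ _)
      linarith
    have h2 := hH h1
    rw [Real.dist_eq, zero_mul, sub_zero] at h2
    exact h2
  have hcpos : ∀ x ∈ Icc (-ρ) ρ, (0:ℝ) < 1 + x * gt x := by
    intro x hx
    have := abs_lt.mp (hsmall x hx)
    linarith [this.1]
  set ψ : ℝ → ℝ := fun x => (n:ℝ)^2 * x^k / (1 + x * gt x) with hψdef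
  have hψcont : ContinuousOn ψ (Icc (-ρ) ρ) := by
    apply ContinuousOn.div
    · exact (continuousOn_const.mul (continuousOn_pow k))
    · exact continuousOn_const.add (continuousOn_id.mul (hgc.mono hsub))
    · intro x hx; exact ne_of_gt (hcpos x hx)
  -- the integrand equals ψ on Icc (-ρ) ρ
  have hφψ : ∀ x ∈ Icc (-ρ) ρ,
      ((n:ℝ) * x ^ (n-1)) ^ 2 / (1 * x ^ m + x ^ (m+1) * gt x) = ψ x := by
    intro x hx
    rcases eq_or_ne x 0 with rfl | hx0
    · have h1 : (0:ℝ) ^ (n-1) = 0 := zero_pow (by omega)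
      have h2 : (0:ℝ) ^ k = 0 := zero_pow (by omega)
      simp [hψdef, h1, h2]
    · have hc : (1 + x * gt x) ≠ 0 := ne_of_gt (hcpos x hx)
      have hd : 1 * x ^ m + x ^ (m+1) * gt x = x ^ m * (1 + x * gt x) := by ring
      have hnum : ((n:ℝ) * x ^ (n-1)) ^ 2 = (n:ℝ)^2 * (x ^ k * x ^ m) := by
        rw [mul_pow, ← pow_mul, ← pow_add, hkm]; ring_nf
      rw [hd, hnum, hψdef]
      field_simp
  -- integrability
  have hInt : ∀ s ∈ Icc (-ρ) ρ, ∀ t ∈ Icc (-ρ) ρ, IntervalIntegrable ψ volume s t := by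
    intro s hs t ht
    exact (hψcont.mono (uIcc_subset_Icc hs ht)).intervalIntegrable
  have h0ρ : (0:ℝ) ∈ Icc (-ρ) ρ := ⟨by linarith, by linarith⟩
  set F : ℝ → ℝ := fun t => ∫ x in (0:ℝ)..t, ψ x with hFdef
  have hF0 : F 0 = 0 := intervalIntegral.integral_same
  have hFadd : ∀ s ∈ Icc (-ρ) ρ, ∀ t ∈ Icc (-ρ) ρ,
      (∫ x in s..t, ψ x) = F t - F s := by
    intro s hs t ht
    have h1 := intervalIntegral.integral_add_adjacent_intervals
      ((hInt 0 h0ρ s hs).symm) (hInt 0 h0ρ t ht)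
    have h2 : (∫ x in s..(0:ℝ), ψ x) = -F s := intervalIntegral.integral_symm 0 s
    rw [h2] at h1
    linarith [h1]
  have hψpos : ∀ x : ℝ, 0 < x → x ≤ ρ → 0 < ψ x := by
    intro x hx1 hx2
    apply div_pos
    · positivity
    · exact hcpos x ⟨by linarith, hx2⟩
  have hψneg : ∀ x : ℝ, -ρ ≤ x → x < 0 → ψ x < 0 := by
    intro x hx1 hx2
    apply div_neg_of_neg_of_pos
    · have hxk : x ^ k < 0 := hk_odd.pow_neg hx2
      have : (0:ℝ) < (n:ℝ)^2 := by positivity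
      nlinarith
    · exact hcpos x ⟨hx1, by linarith⟩
  have hFmono : StrictMonoOn F (Icc 0 ρ) := by
    intro s hs t ht hst
    have hsI : s ∈ Icc (-ρ) ρ := ⟨by linarith [hs.1], hs.2⟩
    have htI : t ∈ Icc (-ρ) ρ := ⟨by linarith [ht.1], ht.2⟩
    have hpos : 0 < ∫ x in s..t, ψ x := by
      apply intervalIntegral.intervalIntegral_pos_of_pos_on (hInt s hsI t htI)
      · intro x hx; exact hψpos x (lt_of_le_of_lt hs.1 hx.1) (le_of_lt (lt_of_lt_of_le hx.2 ht.2))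
      · exact hst
    have := hFadd s hsI t htI
    linarith
  have hFneg : ∀ a : ℝ, 0 < a → a ≤ ρ → 0 < F (-a) := by
    intro a ha1 ha2
    have haI : (-a) ∈ Icc (-ρ) ρ := ⟨by linarith, by linarith⟩
    have hneg : (∫ x in (-a)..(0:ℝ), ψ x) < 0 := by
      have hpos : 0 < ∫ x in (-a)..(0:ℝ), (fun x => -ψ x) x := by
        apply intervalIntegral.intervalIntegral_pos_of_pos_on
          ((hInt (-a) haI 0 h0ρ).neg)
        · intro x hx
          exact neg_pos.mpr (hψneg x (by linarith [hx.1]) hx.2)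
        · linarith
      rw [intervalIntegral.integral_neg] at hpos
      linarith
    have := hFadd (-a) haI 0 h0ρ
    rw [hF0] at this
    linarith
  have hmρ : (-ρ) ∈ Icc (-ρ) ρ := ⟨le_refl _, by linarith⟩
  have hpρ : ρ ∈ Icc (-ρ) ρ := ⟨by linarith, le_refl _⟩
  have hFcont : ContinuousOn F (Icc (-ρ) ρ) := by
    have huIcc : uIcc (-ρ) ρ = Icc (-ρ) ρ := uIcc_of_le (by linarith)
    have h := intervalIntegral.continuousOn_primitive_interval'
      (hInt (-ρ) hmρ ρ hpρ) (by rw [huIcc]; exact h0ρ)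
    rwa [huIcc] at h
  -- uniform bound
  obtain ⟨M, hM⟩ := (isCompact_Icc :
    IsCompact (Icc (-ρ) ρ)).exists_bound_of_continuousOn hψcont
  set C : ℝ := M + 1 with hCdef
  have hC0 : 0 < C := by
    have h1 := hM 0 h0ρ
    have h2 : (0:ℝ) ≤ M := le_trans (norm_nonneg _) h1
    simp only [hCdef]; linarith
  have hM' : ∀ x ∈ Icc (-ρ) ρ, ‖ψ x‖ ≤ C := by
    intro x hx; exact le_trans (hM x hx) (by simp [hCdef])
  have hFbound : ∀ a : ℝ, 0 ≤ a → a ≤ ρ → |F (-a)| ≤ C * a := by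
    intro a ha1 ha2
    have hb : ∀ x ∈ uIoc (0:ℝ) (-a), ‖ψ x‖ ≤ C := by
      intro x hx
      rw [uIoc_comm, uIoc_of_le (by linarith : -a ≤ 0)] at hx
      exact hM' x ⟨by linarith [hx.1.le], by linarith [hx.2]⟩
    have h := intervalIntegral.norm_integral_le_of_norm_le_const hb
    rw [sub_zero, abs_neg, abs_of_nonneg ha1] at h
    simpa [Real.norm_eq_abs] using h
  set b₀ : ℝ := ρ / 2 with hb₀def
  have hb₀pos : 0 < b₀ := by simp only [hb₀def]; linarith
  have hb₀ρ : b₀ ≤ ρ := by simp only [hb₀def]; linarith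
  set ε : ℝ := F b₀ with hεdef
  have hε : 0 < ε := by
    have h := hFmono (⟨le_refl _, by linarith⟩ : (0:ℝ) ∈ Icc 0 ρ)
      (⟨hb₀pos.le, hb₀ρ⟩ : b₀ ∈ Icc 0 ρ) hb₀pos
    rw [hF0] at h; exact h
  set τ : ℝ := min (ε / (2 * C)) b₀ with hτdef
  have hτ0 : 0 < τ := lt_min (by positivity) hb₀pos
  have hτb₀ : τ ≤ b₀ := min_le_right _ _
  have hτC : C * τ < ε := by
    have h1 : τ ≤ ε / (2 * C) := min_le_left _ _
    calc C * τ ≤ C * (ε / (2 * C)) := mul_le_mul_of_nonneg_left h1 hC0.le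
      _ = ε / 2 := by field_simp
      _ < ε := half_lt_self hε
  refine ⟨b₀ ^ n, τ ^ n, pow_pos hτ0 n, pow_le_pow_left₀ hτ0.le hτb₀ n, ?_⟩
  intro y hy hyδ
  set a : ℝ := y ^ ((1:ℝ)/(n:ℝ)) with hadef
  have ha_pos : 0 < a := Real.rpow_pos_of_pos hy _
  have ha_lt : a < τ := by
    have h : y ^ ((1:ℝ)/(n:ℝ)) < (τ ^ n) ^ ((1:ℝ)/(n:ℝ)) :=
      Real.rpow_lt_rpow hy.le hyδ (by positivity)
    have h2 : ((τ ^ n : ℝ)) ^ ((1:ℝ)/(n:ℝ)) = τ := by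
      rw [one_div]; exact Real.pow_rpow_inv_natCast hτ0.le hn0
    rwa [h2] at h
  have haρ : a ≤ ρ := by linarith [hτb₀, hb₀ρ]
  have hFa_pos : 0 < F (-a) := hFneg a ha_pos haρ
  have hFa_lt : F (-a) < ε := by
    have h1 : F (-a) ≤ |F (-a)| := le_abs_self _
    have h2 := hFbound a ha_pos.le haρ
    have h3 : C * a < C * τ := mul_lt_mul_of_pos_left ha_lt hC0
    linarith
  have hsub2 : Icc (0:ℝ) b₀ ⊆ Icc (-ρ) ρ := fun x hx =>
    ⟨by linarith [hx.1], by linarith [hx.2]⟩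
  have hIVT := intermediate_value_Ioo hb₀pos.le (hFcont.mono hsub2)
  obtain ⟨b, hbI, hFb⟩ := hIVT (by rw [hF0]; exact ⟨hFa_pos, hFa_lt⟩ :
    F (-a) ∈ Ioo (F 0) (F b₀))
  -- key formula for SDI
  have hSDI : ∀ b' : ℝ, 0 < b' → b' ≤ ρ →
      SDI n m 1 gt y (b' ^ n) = F (-a) - F b' := by
    intro b' hb'0 hb'ρ
    have hbrw : ((b' ^ n : ℝ)) ^ ((1:ℝ)/(n:ℝ)) = b' := by
      rw [one_div]; exact Real.pow_rpow_inv_natCast hb'0.le hn0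
    have hmemA : -a ∈ Icc (-ρ) ρ := ⟨by linarith, by linarith⟩
    have hmemB : b' ∈ Icc (-ρ) ρ := ⟨by linarith, hb'ρ⟩
    have hcong : (∫ x in (-a)..b',
        ((n:ℝ) * x ^ (n-1)) ^ 2 / (1 * x ^ m + x ^ (m+1) * gt x))
        = ∫ x in (-a)..b', ψ x := by
      apply intervalIntegral.integral_congr
      intro x hx
      exact hφψ x (uIcc_subset_Icc hmemA hmemB hx)
    unfold SDI
    rw [← hadef, hbrw, hcong, hFadd (-a) hmemA b' hmemB]
    ring
  have hbρ : b ≤ ρ := by linarith [hbI.2]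
  refine ⟨b ^ n, ⟨⟨pow_pos hbI.1 n, ?_⟩, ?_⟩, ?_⟩
  · exact pow_lt_pow_left₀ hbI.2 hbI.1.le hn0
  · rw [hSDI b hbI.1 hbρ, hFb]; ring
  · rintro yt' ⟨⟨hyt'0, hyt'δ⟩, hyt'SDI⟩
    set b' : ℝ := yt' ^ ((1:ℝ)/(n:ℝ)) with hb'def
    have hb'0 : 0 < b' := Real.rpow_pos_of_pos hyt'0 _
    have hb'lt : b' < b₀ := by
      have h : yt' ^ ((1:ℝ)/(n:ℝ)) < (b₀ ^ n) ^ ((1:ℝ)/(n:ℝ)) :=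
        Real.rpow_lt_rpow hyt'0.le hyt'δ (by positivity)
      have h2 : ((b₀ ^ n : ℝ)) ^ ((1:ℝ)/(n:ℝ)) = b₀ := by
        rw [one_div]; exact Real.pow_rpow_inv_natCast hb₀pos.le hn0
      rwa [h2] at h
    have hyt'eq : b' ^ n = yt' := by
      rw [hb'def]
      rw [one_div]
      exact Real.rpow_inv_natCast_pow hyt'0.le hn0
    rw [← hyt'eq, hSDI b' hb'0 (by linarith)] at hyt'SDI
    have hFb' : F b' = F b := by rw [hFb]; linarith
    have hbb : b' = b := hFmono.injOn ⟨hb'0.le, by linarith⟩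
      ⟨hbI.1.le, hbρ⟩ hFb'
    rw [← hyt'eq, hbb]

/-- The entry–exit relation is well defined: there are `0 < δ ≤ δ'` such that
for every `y ∈ (0, δ)` there is a unique `ỹ ∈ (0, δ')` with `I(y, ỹ) = 0`. -/
theorem entry_exit_well_defined
    (n m : ℕ) (gm : ℝ) (gt : ℝ → ℝ)
    (hn2 : 2 ≤ n) (hne : Even n) (hm1 : 1 ≤ m) (hmo : Odd m)
    (hmn : m ≤ 2 * (n - 1))
    (hgm : gm = 1 ∨ gm = -1)
    (hgt : ∃ r > (0:ℝ), ContDiffOn ℝ (⊤ : ℕ∞) gt (Set.Ioo (-r) r)) :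
    ∃ δ' δ : ℝ, 0 < δ ∧ δ ≤ δ' ∧ ∀ y : ℝ, 0 < y → y < δ →
      ∃! yt : ℝ, (0 < yt ∧ yt < δ') ∧ SDI n m gm gt y yt = 0 := by
  rcases hgm with rfl | rfl
  · exact SDI_main n m gt hn2 hm1 hmo hmn hgt
  · obtain ⟨r, hr, hg⟩ := hgt
    obtain ⟨δ', δ, h1, h2, h3⟩ := SDI_main n m (fun x => -gt x) hn2 hm1 hmo hmn
      ⟨r, hr, hg.neg⟩
    refine ⟨δ', δ, h1, h2, ?_⟩
    intro y hy1 hy2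
    have hEq : ∀ yt : ℝ,
        SDI n m (-1) gt y yt = - SDI n m 1 (fun x => -gt x) y yt := by
      intro yt
      unfold SDI
      rw [neg_neg]
      have hfun : (fun x : ℝ =>
            ((n:ℝ) * x ^ (n-1)) ^ 2 / ((-1) * x ^ m + x ^ (m+1) * gt x))
          = fun x : ℝ =>
            -(((n:ℝ) * x ^ (n-1)) ^ 2 / (1 * x ^ m + x ^ (m+1) * (-gt x))) := by
        funext x
        rw [← div_neg]
        congr 1
        ring
      rw [hfun, intervalIntegral.integral_neg, neg_neg]
    simp only [hEq, neg_eq_zero]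
    exact h3 y hy1 hy2
end

section
/- Assume there exists y* > 0 with I(y) ≠ 0 for all y ∈ (0, y*), and assume that either (I(y) > 0 for all y ∈ (0, y*) and g_m = −1) or (I(y) < 0 for all y ∈ (0, y*) and g_m = +1). Then there exists y** ∈ (0, y*] such that for every y₀ ∈ (0, y**) there is a unique sequence (y_k)_{k≥0} with y_{k+1} ∈ (0, y_k) and I(y_k, y_{k+1}) = 0 for every k ≥ 0; moreover this sequence is strictly decreasing and converges to 0. -/
open MeasureTheory Set Filter Topology

set_option maxHeartbeats 1000000 in
/-- Under Assumption C with (`I > 0` and `g_m = −1`) or (`I < 0` and `g_m = +1`),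
every sufficiently small starting point `y₀` generates a unique sequence with
`I(y_k, y_{k+1}) = 0`, and this sequence is strictly decreasing and tends to `0`. -/
theorem fractal_sequence_exists_unique
    (n m : ℕ) (gm : ℝ) (gt : ℝ → ℝ)
    (hn2 : 2 ≤ n) (hne : Even n) (hm1 : 1 ≤ m) (hmo : Odd m)
    (hmn : m ≤ 2 * (n - 1))
    (hgm : gm = 1 ∨ gm = -1)
    (hgt : ∃ r > (0:ℝ), ContDiffOn ℝ (⊤ : ℕ∞) gt (Set.Ioo (-r) r))
    (ystar : ℝ) (hystar : 0 < ystar)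
    (hInz : ∀ y : ℝ, 0 < y → y < ystar → SDI n m gm gt y y ≠ 0)
    (hcase :
      ((∀ y : ℝ, 0 < y → y < ystar → 0 < SDI n m gm gt y y) ∧ gm = -1) ∨
      ((∀ y : ℝ, 0 < y → y < ystar → SDI n m gm gt y y < 0) ∧ gm = 1)) :
    ∃ ystst : ℝ, 0 < ystst ∧ ystst ≤ ystar ∧
      ∀ y₀ : ℝ, 0 < y₀ → y₀ < ystst →
        (∃! ys : ℕ → ℝ, ys 0 = y₀ ∧
          ∀ k : ℕ, (0 < ys (k+1) ∧ ys (k+1) < ys k) ∧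
            SDI n m gm gt (ys k) (ys (k+1)) = 0) ∧
        (∀ ys : ℕ → ℝ, (ys 0 = y₀ ∧
            ∀ k : ℕ, (0 < ys (k+1) ∧ ys (k+1) < ys k) ∧
              SDI n m gm gt (ys k) (ys (k+1)) = 0) →
          StrictAnti ys ∧ Filter.Tendsto ys Filter.atTop (nhds 0)) := by
  classical
  obtain ⟨r, hr, hgtC⟩ := hgt
  have hgtc : ContinuousOn gt (Set.Ioo (-r) r) := hgtC.continuousOn
  have hrmem : Set.Ioo (-r) r ∈ 𝓝 (0:ℝ) := Ioo_mem_nhds (by linarith) hr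
  have hcont0 : ContinuousAt (fun x : ℝ => x * gt x) 0 :=
    continuousAt_id.mul (hgtc.continuousAt hrmem)
  have hev : ∀ᶠ x in 𝓝 (0:ℝ), |x * gt x| ≤ 1/2 ∧ x ∈ Set.Ioo (-r) r := by
    have h1 : Tendsto (fun x : ℝ => x * gt x) (𝓝 0) (𝓝 0) := by
      simpa using hcont0.tendsto
    have h2 : ∀ᶠ x in 𝓝 (0:ℝ), |x * gt x| ≤ 1/2 := by
      have h3 := h1 (Metric.closedBall_mem_nhds (0:ℝ) (by norm_num : (0:ℝ) < 1/2))
      filter_upwards [h3] with x hx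
      rw [Set.mem_preimage, Metric.mem_closedBall, Real.dist_eq, sub_zero] at hx
      exact hx
    exact h2.and (eventually_of_mem hrmem fun x hx => hx)
  obtain ⟨ε, hε, hball⟩ := Metric.eventually_nhds_iff.mp hev
  set δ : ℝ := ε/2 with hδdef
  have hδ : 0 < δ := by positivity
  have hδprop : ∀ x : ℝ, |x| ≤ δ → |x * gt x| ≤ 1/2 ∧ x ∈ Set.Ioo (-r) r := by
    intro x hx
    apply hball
    rw [Real.dist_eq, sub_zero]
    linarith
  have habsgm : |gm| = 1 := by rcases hgm with h|h <;> simp [h]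
  have hgm1 : gm * gm = 1 := by rcases hgm with h|h <;> simp [h]
  have hgm0 : gm ≠ 0 := by rcases hgm with h|h <;> norm_num [h]
  set s : ℝ := -gm with hs
  have hsne : s ≠ 0 := by simpa [hs] using hgm0
  have hden : ∀ x : ℝ, |x| ≤ δ → 1/2 ≤ gm * (gm + x * gt x) := by
    intro x hx
    have h1 := (hδprop x hx).1
    have h2 : |gm * (x * gt x)| ≤ 1/2 := by
      rw [abs_mul, habsgm, one_mul]; exact h1
    nlinarith [(abs_le.mp h2).1, hgm1]
  have hdne : ∀ x : ℝ, |x| ≤ δ → gm + x * gt x ≠ 0 := by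
    intro x hx h
    have h1 := hden x hx
    rw [h, mul_zero] at h1
    linarith
  set e : ℕ := 2*(n-1) - m with he
  have hmn' : m ≤ 2*(n-1) := hmn
  have heodd : Odd e := Nat.Even.sub_odd hmn' (even_two_mul _) hmo
  have he1 : 1 ≤ e := heodd.pos
  set H : ℝ → ℝ := fun x => (n:ℝ)^2 * x^e / (gm + x * gt x) with hH
  have hfH : ∀ x : ℝ, |x| ≤ δ →
      ((n:ℝ) * x ^ (n-1)) ^ 2 / (gm * x ^ m + x ^ (m+1) * gt x) = H x := by
    intro x hx
    rcases eq_or_ne x 0 with h0 | h0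
    · subst h0
      simp [hH, zero_pow (by omega : n - 1 ≠ 0), zero_pow (by omega : e ≠ 0),
        zero_pow (by omega : m ≠ 0)]
    · have hd := hdne x hx
      have hxm : x ^ m ≠ 0 := pow_ne_zero _ h0
      have hnum : ((n:ℝ) * x ^ (n-1)) ^ 2 = (n:ℝ)^2 * (x ^ e * x ^ m) := by
        rw [mul_pow, ← pow_mul, ← pow_add, he, Nat.sub_add_cancel hmn,
          Nat.mul_comm 2 (n-1)]
      have hden2 : gm * x ^ m + x ^ (m+1) * gt x = x ^ m * (gm + x * gt x) := by
        rw [pow_succ]; ring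
      rw [hnum, hden2, hH]
      field_simp
  have hIccsub : Set.Icc (-δ) δ ⊆ Set.Ioo (-r) r := fun x hx =>
    (hδprop x (abs_le.mpr ⟨hx.1, hx.2⟩)).2
  have hHcont : ContinuousOn H (Set.Icc (-δ) δ) := by
    apply ContinuousOn.div
    · exact (continuous_const.mul (continuous_pow e)).continuousOn
    · exact continuousOn_const.add (continuousOn_id.mul (hgtc.mono hIccsub))
    · intro x hx
      exact hdne x (abs_le.mpr ⟨hx.1, hx.2⟩)
  have hHint : ∀ a b : ℝ, a ∈ Set.Icc (-δ) δ → b ∈ Set.Icc (-δ) δ →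
      IntervalIntegrable H volume a b := by
    intro a b ha hb
    exact (hHcont.mono (Set.uIcc_subset_Icc ha hb)).intervalIntegrable
  have hzero_mem : (0:ℝ) ∈ Set.Icc (-δ) δ := ⟨by linarith, by linarith⟩
  set F : ℝ → ℝ := fun t => ∫ x in (0:ℝ)..t, H x with hF
  have hFsub : ∀ a b : ℝ, a ∈ Set.Icc (-δ) δ → b ∈ Set.Icc (-δ) δ →
      ∫ x in a..b, H x = F b - F a := by
    intro a b ha hb
    have h1 := intervalIntegral.integral_add_adjacent_intervals
      (hHint a 0 ha hzero_mem) (hHint 0 b hzero_mem hb)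
    have h2 : ∫ x in a..(0:ℝ), H x = -F a := intervalIntegral.integral_symm 0 a
    simp only [hF] at *
    linarith
  have hnR : (0:ℝ) < (n:ℝ) := by
    have : 0 < n := by omega
    exact_mod_cast this
  have hpow1 : ∀ z : ℝ, 0 ≤ z → (z ^ ((1:ℝ)/(n:ℝ))) ^ n = z := by
    intro z hz
    rw [← Real.rpow_natCast (z ^ ((1:ℝ)/(n:ℝ))) n, ← Real.rpow_mul hz,
      one_div_mul_cancel (ne_of_gt hnR), Real.rpow_one]
  have hpow2 : ∀ t : ℝ, 0 ≤ t → ((t ^ n : ℝ)) ^ ((1:ℝ)/(n:ℝ)) = t := by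
    intro t ht
    rw [← Real.rpow_natCast t n, ← Real.rpow_mul ht, mul_one_div,
      div_self (ne_of_gt hnR), Real.rpow_one]
  have hmemIoc : ∀ z : ℝ, 0 < z → z ≤ δ^n → z ^ ((1:ℝ)/(n:ℝ)) ∈ Set.Ioc 0 δ := by
    intro z hz hzd
    constructor
    · exact Real.rpow_pos_of_pos hz _
    · have h1 : z ^ ((1:ℝ)/(n:ℝ)) ≤ (δ^n) ^ ((1:ℝ)/(n:ℝ)) :=
        Real.rpow_le_rpow (le_of_lt hz) hzd (by positivity)
      rwa [hpow2 δ (le_of_lt hδ)] at h1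
  have hSDI : ∀ y yt : ℝ, 0 < y → y ≤ δ^n → 0 < yt → yt ≤ δ^n →
      SDI n m gm gt y yt = F (-(y ^ ((1:ℝ)/(n:ℝ)))) - F (yt ^ ((1:ℝ)/(n:ℝ))) := by
    intro y yt hy hyd hyt hytd
    obtain ⟨ha0, haδ⟩ := hmemIoc y hy hyd
    obtain ⟨hb0, hbδ⟩ := hmemIoc yt hyt hytd
    have hma : -(y ^ ((1:ℝ)/(n:ℝ))) ∈ Set.Icc (-δ) δ := ⟨by linarith, by linarith⟩
    have hmb : yt ^ ((1:ℝ)/(n:ℝ)) ∈ Set.Icc (-δ) δ := ⟨by linarith, by linarith⟩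
    have hsub : Set.uIcc (-(y ^ ((1:ℝ)/(n:ℝ)))) (yt ^ ((1:ℝ)/(n:ℝ))) ⊆ Set.Icc (-δ) δ :=
      Set.uIcc_subset_Icc hma hmb
    have hcongr : ∫ x in (-(y ^ ((1:ℝ)/(n:ℝ))))..(yt ^ ((1:ℝ)/(n:ℝ))),
        ((n:ℝ) * x ^ (n-1)) ^ 2 / (gm * x ^ m + x ^ (m+1) * gt x)
        = ∫ x in (-(y ^ ((1:ℝ)/(n:ℝ))))..(yt ^ ((1:ℝ)/(n:ℝ))), H x := by
      apply intervalIntegral.integral_congr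
      intro x hx
      exact hfH x (abs_le.mpr ⟨(hsub hx).1, (hsub hx).2⟩)
    rw [SDI, hcongr, hFsub _ _ hma hmb]
    ring
  have hsI : ∀ y : ℝ, 0 < y → y < ystar → 0 < s * SDI n m gm gt y y := by
    rcases hcase with ⟨h, hg⟩ | ⟨h, hg⟩
    · intro y h1 h2
      have h3 := h y h1 h2
      rw [hg] at h3
      rw [hs, hg]
      linarith
    · intro y h1 h2
      have h3 := h y h1 h2
      rw [hg] at h3
      rw [hs, hg]
      linarith
  set G : ℝ → ℝ := fun t => s * F t with hG
  have hG0 : G 0 = 0 := by simp [hG, hF]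
  have hdivpos : ∀ x : ℝ, |x| ≤ δ → 0 < gm / (gm + x * gt x) := by
    intro x hx
    have hgmD : 0 < gm * (gm + x * gt x) := lt_of_lt_of_le (by norm_num) (hden x hx)
    rcases mul_pos_iff.mp hgmD with ⟨h1, h2⟩ | ⟨h1, h2⟩
    · exact div_pos h1 h2
    · exact div_pos_of_neg_of_neg h1 h2
  have hsHeq : ∀ x : ℝ, |x| ≤ δ →
      s * H x = -((n:ℝ)^2 * x^e * (gm / (gm + x * gt x))) := by
    intro x hx
    have hd := hdne x hx
    simp only [hH, hs, div_eq_mul_inv]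
    ring
  have hsHneg : ∀ x ∈ Set.Ioo (0:ℝ) δ, s * H x < 0 := by
    intro x hx
    have hxd : |x| ≤ δ := abs_le.mpr ⟨by linarith [hx.1], le_of_lt hx.2⟩
    rw [hsHeq x hxd]
    have hxe : 0 < x^e := pow_pos hx.1 e
    have := hdivpos x hxd
    have hn2' : (0:ℝ) < (n:ℝ)^2 := by positivity
    have hp := mul_pos (mul_pos hn2' hxe) this
    linarith
  have hsHpos : ∀ x ∈ Set.Ioo (-δ) (0:ℝ), 0 < s * H x := by
    intro x hx
    have hxd : |x| ≤ δ := abs_le.mpr ⟨le_of_lt hx.1, by linarith [hx.2]⟩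
    rw [hsHeq x hxd]
    have hxe : x^e < 0 := Odd.pow_neg heodd hx.2
    have := hdivpos x hxd
    have hn2' : (0:ℝ) < (n:ℝ)^2 := by positivity
    have hp : (n:ℝ)^2 * x^e * (gm/(gm + x * gt x)) < 0 :=
      mul_neg_of_neg_of_pos (mul_neg_of_pos_of_neg hn2' hxe) this
    linarith
  have hGanti : ∀ a b : ℝ, 0 ≤ a → a < b → b ≤ δ → G b < G a := by
    intro a b ha hab hb
    have hai : a ∈ Set.Icc (-δ) δ := ⟨by linarith, by linarith⟩
    have hbi : b ∈ Set.Icc (-δ) δ := ⟨by linarith, by linarith⟩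
    have hint : IntervalIntegrable (fun x => -(s * H x)) volume a b :=
      ((hHint a b hai hbi).const_mul s).neg
    have hpos : 0 < ∫ x in a..b, -(s * H x) := by
      apply intervalIntegral.intervalIntegral_pos_of_pos_on hint _ hab
      intro x hx
      have := hsHneg x ⟨lt_of_le_of_lt ha hx.1, lt_of_lt_of_le hx.2 hb⟩
      linarith
    have heq : ∫ x in a..b, -(s * H x) = -(s * (F b - F a)) := by
      rw [intervalIntegral.integral_neg, intervalIntegral.integral_const_mul,
        hFsub a b hai hbi]
    rw [heq] at hpos
    simp only [hG]
    linarith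
  have hGmono : ∀ a b : ℝ, -δ ≤ a → a < b → b ≤ 0 → G a < G b := by
    intro a b ha hab hb
    have hai : a ∈ Set.Icc (-δ) δ := ⟨by linarith, by linarith⟩
    have hbi : b ∈ Set.Icc (-δ) δ := ⟨by linarith, by linarith⟩
    have hint : IntervalIntegrable (fun x => s * H x) volume a b :=
      (hHint a b hai hbi).const_mul s
    have hpos : 0 < ∫ x in a..b, s * H x := by
      apply intervalIntegral.intervalIntegral_pos_of_pos_on hint _ hab
      intro x hx
      exact hsHpos x ⟨lt_of_le_of_lt ha hx.1, lt_of_lt_of_le hx.2 hb⟩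
    have heq : ∫ x in a..b, s * H x = s * (F b - F a) := by
      rw [intervalIntegral.integral_const_mul, hFsub a b hai hbi]
    rw [heq] at hpos
    simp only [hG]
    linarith
  obtain ⟨M, hM⟩ := (isCompact_Icc : IsCompact (Set.Icc (-δ) δ)).exists_bound_of_continuousOn hHcont
  have hM0 : 0 ≤ M := le_trans (norm_nonneg _) (hM 0 hzero_mem)
  have hGlip : ∀ a b : ℝ, a ∈ Set.Icc (-δ) δ → b ∈ Set.Icc (-δ) δ →
      |G b - G a| ≤ M * |b - a| := by
    intro a b ha hb
    have h1 : ‖∫ x in a..b, H x‖ ≤ M * |b - a| := by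
      apply intervalIntegral.norm_integral_le_of_norm_le_const
      intro x hx
      apply hM
      have h2 : Set.uIoc a b ⊆ Set.Icc (-δ) δ :=
        Set.Subset.trans Set.Ioc_subset_Icc_self (Set.uIcc_subset_Icc ha hb)
      exact h2 hx
    have h3 : |G b - G a| = |F b - F a| := by
      simp only [hG]
      rw [← mul_sub, abs_mul, hs, abs_neg, habsgm, one_mul]
    rw [h3, ← hFsub a b ha hb]
    exact h1
  have hGcont : ContinuousOn G (Set.Icc (-δ) δ) := by
    have hlip : LipschitzOnWith (Real.toNNReal M) G (Set.Icc (-δ) δ) := by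
      apply LipschitzOnWith.of_dist_le_mul
      intro x hx y hy
      rw [Real.dist_eq, Real.dist_eq]
      calc |G x - G y| ≤ M * |x - y| := hGlip y x hy hx
        _ ≤ (Real.toNNReal M) * |x - y| := by
            apply mul_le_mul_of_nonneg_right _ (abs_nonneg _)
            exact le_of_eq (Real.coe_toNNReal M hM0).symm
    exact hlip.continuousOn
  set ystst : ℝ := min ystar (δ^n) with hystst
  have hyststpos : 0 < ystst := lt_min hystar (pow_pos hδ n)
  have hkey : ∀ y : ℝ, 0 < y → y < ystst →
      ∃! z : ℝ, (0 < z ∧ z < y) ∧ SDI n m gm gt y z = 0 := by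
    intro y hy hyst
    have hyy : y ≤ δ^n := le_of_lt (lt_of_lt_of_le hyst (min_le_right _ _))
    have hyys : y < ystar := lt_of_lt_of_le hyst (min_le_left _ _)
    obtain ⟨hα0, hαδ⟩ := hmemIoc y hy hyy
    set α : ℝ := y ^ ((1:ℝ)/(n:ℝ)) with hα
    have hGma : G (-α) < 0 := by
      have h := hGmono (-α) 0 (by linarith) (by linarith) le_rfl
      rwa [hG0] at h
    have hGaa : G α < G (-α) := by
      have h := hsI y hy hyys
      rw [hSDI y y hy hyy hy hyy] at h
      rw [← hα] at h
      have heq : s * (F (-α) - F α) = G (-α) - G α := by simp only [hG]; ring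
      linarith [heq]
    have hGc : ContinuousOn G (Set.Icc 0 α) :=
      hGcont.mono (Set.Icc_subset_Icc (by linarith) hαδ)
    have hmem : G (-α) ∈ Set.Ioo (G α) (G 0) := ⟨hGaa, by rw [hG0]; exact hGma⟩
    obtain ⟨t, ht, hGt⟩ := intermediate_value_Ioo' (le_of_lt hα0) hGc hmem
    have htδ : t < δ := lt_of_lt_of_le ht.2 hαδ
    have hαn : α ^ n = y := hpow1 y (le_of_lt hy)
    have htny : t ^ n < y := by
      calc t ^ n < α ^ n := pow_lt_pow_left₀ ht.2 (le_of_lt ht.1) (by omega)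
        _ = y := hαn
    have htn0 : (0:ℝ) < t ^ n := pow_pos ht.1 n
    have htnδ : t ^ n ≤ δ ^ n := pow_le_pow_left₀ (le_of_lt ht.1) (le_of_lt htδ) n
    have htn : ((t ^ n : ℝ)) ^ ((1:ℝ)/(n:ℝ)) = t := hpow2 t (le_of_lt ht.1)
    have hFt : F t = F (-α) := mul_left_cancel₀ hsne hGt
    refine ⟨t ^ n, ⟨⟨htn0, htny⟩, ?_⟩, ?_⟩
    · rw [hSDI y (t^n) hy hyy htn0 htnδ, htn, hFt]
      ring
    · rintro z' ⟨⟨hz'0, hz'y⟩, hz'SDI⟩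
      set t' : ℝ := z' ^ ((1:ℝ)/(n:ℝ)) with ht'
      have ht'0 : 0 < t' := Real.rpow_pos_of_pos hz'0 _
      have ht'α : t' < α := Real.rpow_lt_rpow (le_of_lt hz'0) hz'y (by positivity)
      have hz'δ : z' ≤ δ^n := le_trans (le_of_lt hz'y) hyy
      rw [hSDI y z' hy hyy hz'0 hz'δ] at hz'SDI
      have hGt' : G t' = G (-α) := by
        simp only [hG]
        have hFt' : F t' = F (-α) := by linarith
        rw [hFt']
      have htt : t' = t := by
        by_contra hne
        rcases lt_or_gt_of_ne hne with h | h
        · have := hGanti t' t (le_of_lt ht'0) h (le_of_lt htδ)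
          rw [hGt, hGt'] at this
          exact lt_irrefl _ this
        · have := hGanti t t' (le_of_lt ht.1) h (by linarith)
          rw [hGt, hGt'] at this
          exact lt_irrefl _ this
      have : z' = t' ^ n := (hpow1 z' (le_of_lt hz'0)).symm
      rw [this, htt]
  -- next-point function
  set nxt : ℝ → ℝ := fun y =>
    if h : 0 < y ∧ y < ystst then (hkey y h.1 h.2).exists.choose else 0 with hnxt
  have hnxtspec : ∀ y : ℝ, 0 < y → y < ystst →
      (0 < nxt y ∧ nxt y < y) ∧ SDI n m gm gt y (nxt y) = 0 := by
    intro y h1 h2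
    have hcond : 0 < y ∧ y < ystst := ⟨h1, h2⟩
    simp only [hnxt, dif_pos hcond]
    exact (hkey y h1 h2).exists.choose_spec
  have hnxtuniq : ∀ y z : ℝ, 0 < y → y < ystst → (0 < z ∧ z < y) →
      SDI n m gm gt y z = 0 → z = nxt y := by
    intro y z h1 h2 h3 h4
    obtain ⟨w, hw, huw⟩ := hkey y h1 h2
    have e1 := huw z ⟨h3, h4⟩
    have e2 := huw (nxt y) ⟨(hnxtspec y h1 h2).1, (hnxtspec y h1 h2).2⟩
    rw [e1, e2]
  refine ⟨ystst, hyststpos, min_le_left _ _, ?_⟩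
  intro y₀ hy₀ hy₀st
  set ys0 : ℕ → ℝ := fun k => Nat.rec y₀ (fun _ p => nxt p) k with hys0
  have hys0succ : ∀ k, ys0 (k+1) = nxt (ys0 k) := fun k => rfl
  have hinv : ∀ k, 0 < ys0 k ∧ ys0 k < ystst := by
    intro k
    induction k with
    | zero => exact ⟨hy₀, hy₀st⟩
    | succ k ih =>
      have h := hnxtspec (ys0 k) ih.1 ih.2
      rw [hys0succ]
      exact ⟨h.1.1, lt_trans h.1.2 ih.2⟩
  have hys0prop : ys0 0 = y₀ ∧ ∀ k, (0 < ys0 (k+1) ∧ ys0 (k+1) < ys0 k) ∧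
      SDI n m gm gt (ys0 k) (ys0 (k+1)) = 0 := by
    refine ⟨rfl, fun k => ?_⟩
    have h := hnxtspec (ys0 k) (hinv k).1 (hinv k).2
    rw [hys0succ]
    exact ⟨⟨h.1.1, h.1.2⟩, h.2⟩
  have hfinal : ∀ ys : ℕ → ℝ, (ys 0 = y₀ ∧
      ∀ k : ℕ, (0 < ys (k+1) ∧ ys (k+1) < ys k) ∧
        SDI n m gm gt (ys k) (ys (k+1)) = 0) →
      StrictAnti ys ∧ Filter.Tendsto ys Filter.atTop (nhds 0) := by
    rintro ys ⟨h0, hstep⟩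
    have hanti : StrictAnti ys := strictAnti_nat_of_succ_lt (fun k => (hstep k).1.2)
    refine ⟨hanti, ?_⟩
    have hpos : ∀ k, 0 < ys k := by
      intro k
      cases k with
      | zero => rw [h0]; exact hy₀
      | succ k => exact (hstep k).1.1
    have hbdd : BddBelow (Set.range ys) := ⟨0, by
      rintro x ⟨k, rfl⟩
      exact le_of_lt (hpos k)⟩
    have htend : Tendsto ys atTop (𝓝 (⨅ k, ys k)) := tendsto_atTop_ciInf hanti.antitone hbdd
    set L : ℝ := ⨅ k, ys k with hLdef
    have hL0 : 0 ≤ L := le_ciInf (fun k => le_of_lt (hpos k))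
    rcases eq_or_lt_of_le hL0 with h | hLpos
    · rwa [← h] at htend
    · exfalso
      have hLlt : L < ystst := lt_of_le_of_lt (ciInf_le hbdd 0) (by rw [h0]; exact hy₀st)
      have hLystar : L < ystar := lt_of_lt_of_le hLlt (min_le_left _ _)
      have hLδ : L ≤ δ^n := le_of_lt (lt_of_lt_of_le hLlt (min_le_right _ _))
      have hysk : ∀ k, ys k < ystst := fun k =>
        lt_of_le_of_lt (hanti.antitone (Nat.zero_le k)) (by rw [h0]; exact hy₀st)
      have hyskδ : ∀ k, ys k ≤ δ^n := fun k =>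
        le_of_lt (lt_of_lt_of_le (hysk k) (min_le_right _ _))
      set β : ℝ := L ^ ((1:ℝ)/(n:ℝ)) with hβ
      obtain ⟨hβ0, hβδ⟩ := hmemIoc L hLpos hLδ
      have hrc : ContinuousAt (fun x : ℝ => x ^ ((1:ℝ)/(n:ℝ))) L :=
        Real.continuousAt_rpow_const _ _ (Or.inl (ne_of_gt hLpos))
      have htβ : Tendsto (fun k => (ys k) ^ ((1:ℝ)/(n:ℝ))) atTop (𝓝 β) :=
        hrc.tendsto.comp htend
      have hmem1 : ∀ k, (ys k) ^ ((1:ℝ)/(n:ℝ)) ∈ Set.Icc (-δ) δ := by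
        intro k
        obtain ⟨h1, h2⟩ := hmemIoc (ys k) (hpos k) (hyskδ k)
        exact ⟨by linarith, h2⟩
      have hGtend1 : Tendsto (fun k => G (-((ys k) ^ ((1:ℝ)/(n:ℝ))))) atTop (𝓝 (G (-β))) := by
        have hmβ : -β ∈ Set.Icc (-δ) δ := ⟨by linarith, by linarith⟩
        have hcw := (hGcont (-β) hmβ).tendsto
        apply hcw.comp
        apply tendsto_nhdsWithin_of_tendsto_nhds_of_eventually_within _ htβ.neg
        apply Filter.Eventually.of_forall
        intro k
        obtain ⟨h1, h2⟩ := hmem1 k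
        exact ⟨by linarith, by linarith⟩
      have htend2 : Tendsto (fun k => ys (k+1)) atTop (𝓝 L) :=
        htend.comp (tendsto_add_atTop_nat 1)
      have htβ2 : Tendsto (fun k => (ys (k+1)) ^ ((1:ℝ)/(n:ℝ))) atTop (𝓝 β) :=
        hrc.tendsto.comp htend2
      have hGtend2 : Tendsto (fun k => G ((ys (k+1)) ^ ((1:ℝ)/(n:ℝ)))) atTop (𝓝 (G β)) := by
        have hmβ : β ∈ Set.Icc (-δ) δ := ⟨by linarith, hβδ⟩
        have hcw := (hGcont β hmβ).tendsto
        apply hcw.comp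
        apply tendsto_nhdsWithin_of_tendsto_nhds_of_eventually_within _ htβ2
        apply Filter.Eventually.of_forall
        intro k
        exact hmem1 (k+1)
      have hzero : Tendsto (fun k => G (-((ys k) ^ ((1:ℝ)/(n:ℝ)))) -
          G ((ys (k+1)) ^ ((1:ℝ)/(n:ℝ)))) atTop (𝓝 (G (-β) - G β)) :=
        hGtend1.sub hGtend2
      have hconst : ∀ k, G (-((ys k) ^ ((1:ℝ)/(n:ℝ)))) -
          G ((ys (k+1)) ^ ((1:ℝ)/(n:ℝ))) = 0 := by
        intro k
        have h := (hstep k).2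
        rw [hSDI (ys k) (ys (k+1)) (hpos k) (hyskδ k) (hpos (k+1)) (hyskδ (k+1))] at h
        simp only [hG]
        have : F (-((ys k) ^ ((1:ℝ)/(n:ℝ)))) = F ((ys (k+1)) ^ ((1:ℝ)/(n:ℝ))) := by linarith
        rw [this]
        ring
      have h00 : G (-β) - G β = 0 := by
        have h1 : Tendsto (fun _ : ℕ => (0:ℝ)) atTop (𝓝 (G (-β) - G β)) :=
          (tendsto_congr hconst).mp hzero
        exact tendsto_nhds_unique h1 tendsto_const_nhds
      have hSDILL : SDI n m gm gt L L = 0 := by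
        rw [hSDI L L hLpos hLδ hLpos hLδ]
        have hs' : s * (F (-β) - F β) = 0 := by
          simp only [hG] at h00
          linarith [h00]
        rcases mul_eq_zero.mp hs' with h | h
        · exact absurd h hsne
        · exact h
      exact hInz L hLpos hLystar hSDILL
  constructor
  · refine ⟨ys0, hys0prop, ?_⟩
    rintro ys ⟨h0, hstep⟩
    funext k
    induction k with
    | zero => exact h0
    | succ k ih =>
      have hk := hinv k
      have h1 : 0 < ys k := by rw [ih]; exact hk.1
      have h2 : ys k < ystst := by rw [ih]; exact hk.2
      have h3 := hnxtuniq (ys k) (ys (k+1)) h1 h2 (hstep k).1 (hstep k).2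
      rw [h3, ih, ← hys0succ]
  · exact hfinal
end

section
/- Assume the system has finite fractal codimension j+1, i.e. there exist α ≠ 0 and C, δ > 0 with |g̃(x) + g̃(−x) − α x^{2j}| ≤ C x^{2j+2} for all |x| < δ, and let (y_k)_{k≥0} be a fractal sequence. Then lim_{k→∞} y_k / y_{k+1} = 1. -/
open MeasureTheory Set Filter Topology

/-- A fractal sequence: a strictly decreasing sequence of positive reals tending
to `0` generated by one of the two entry–exit recursions. -/
def IsFractalSeq (n m : ℕ) (gm : ℝ) (gt : ℝ → ℝ) (ys : ℕ → ℝ) : Prop :=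
  StrictAnti ys ∧ (∀ k, 0 < ys k) ∧ Filter.Tendsto ys Filter.atTop (nhds 0) ∧
    ((∀ k, SDI n m gm gt (ys k) (ys (k+1)) = 0) ∨
     (∀ k, SDI n m gm gt (ys (k+1)) (ys k) = 0))

set_option maxHeartbeats 1000000 in
/-- In the finite-codimension case, `y_k / y_{k+1} → 1`. -/
theorem fractal_sequence_ratio_tendsto_one
    (n m j : ℕ) (gm : ℝ) (gt : ℝ → ℝ)
    (hn2 : 2 ≤ n) (hne : Even n) (hm1 : 1 ≤ m) (hmo : Odd m)
    (hmn : m ≤ 2 * (n - 1))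
    (hgm : gm = 1 ∨ gm = -1)
    (hgt : ∃ r > (0:ℝ), ContDiffOn ℝ (⊤ : ℕ∞) gt (Set.Ioo (-r) r))
    (α C δ : ℝ) (hα : α ≠ 0) (hC : 0 < C) (hδ : 0 < δ)
    (hcodim : ∀ x : ℝ, |x| < δ →
      |gt x + gt (-x) - α * x ^ (2*j)| ≤ C * x ^ (2*j+2)) :
    ∃ ε > (0:ℝ), ∀ ys : ℕ → ℝ, IsFractalSeq n m gm gt ys → ys 0 < ε →
      Filter.Tendsto (fun k : ℕ => ys k / ys (k+1)) Filter.atTop (nhds 1) := by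
  classical
  obtain ⟨r0, hr0, hgtC⟩ := hgt
  have hnn : n ≠ 0 := by omega
  have hn0 : ((n:ℝ)) ≠ 0 := Nat.cast_ne_zero.mpr hnn
  have hnR : (0:ℝ) < n := by positivity
  have hgm0 : gm ≠ 0 := by rcases hgm with h|h <;> rw [h] <;> norm_num
  have hgmabs : |gm| = 1 := by rcases hgm with h|h <;> rw [h] <;> norm_num
  have hmlt : m < 2*(n-1) := by
    rcases lt_or_eq_of_le hmn with h|h
    · exact h
    · exfalso
      rw [h] at hmo
      exact (Nat.not_odd_iff_even.mpr (even_two_mul _)) hmo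
  set q : ℕ := 2*(n-1) - m with hqdef
  have hq1 : 1 ≤ q := by omega
  have hqm : q + m = 2*(n-1) := by omega
  have hqodd : Odd q := Nat.Even.sub_odd hmn (even_two_mul _) hmo
  set p : ℕ := q + 1 with hpdef
  have hppos : p ≠ 0 := by omega
  have hpeven : Even p := hqodd.add_one
  have hp0 : (0:ℝ) < (p:ℝ) := by positivity
  -- continuity and bound for gt
  have hgtcont : ContinuousOn gt (Set.Ioo (-r0) r0) := hgtC.continuousOn
  obtain ⟨M0, hM0⟩ := (isCompact_Icc (a := -(r0/2)) (b := r0/2)).exists_bound_of_continuousOn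
    (hgtcont.mono (by
      intro x hx
      simp only [Set.mem_Icc] at hx
      exact ⟨by nlinarith [hx.1, hx.2], by nlinarith [hx.1, hx.2]⟩))
  set M : ℝ := max M0 1 with hMdef
  have hM1 : (1:ℝ) ≤ M := le_max_right _ _
  have hMpos : (0:ℝ) < M := by linarith
  -- constants
  set c : ℝ := (n:ℝ)^2 / (gm * p) with hcdef
  set K : ℝ := 2 * M * (n:ℝ)^2 with hKdef
  have hK0 : 0 < K := by positivity
  have hcabs : |c| = (n:ℝ)^2 / p := by
    rw [hcdef, abs_div, abs_mul, hgmabs, one_mul,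
      abs_of_nonneg (by positivity : (0:ℝ) ≤ (n:ℝ)^2), abs_of_nonneg hp0.le]
  have hcabs0 : (0:ℝ) < |c| := by rw [hcabs]; positivity
  -- choose r
  set r : ℝ := min (r0/2) (min (1/(2*M)) (|c|/(2*K))) with hrdef
  have hr : 0 < r := by
    apply lt_min (by linarith)
    exact lt_min (by positivity) (by positivity)
  have hrr0 : r ≤ r0/2 := min_le_left _ _
  have hrM : r * M ≤ 1/2 := by
    have h1 : r ≤ 1/(2*M) := le_trans (min_le_right _ _) (min_le_left _ _)
    calc r * M ≤ (1/(2*M)) * M := by nlinarith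
      _ = 1/2 := by field_simp
  have hrK : K * r ≤ |c|/2 := by
    have h1 : r ≤ |c|/(2*K) := le_trans (min_le_right _ _) (min_le_right _ _)
    calc K * r ≤ K * (|c|/(2*K)) := by nlinarith
      _ = |c|/2 := by field_simp
  -- bound for gt on Icc(-r,r)
  have hMb : ∀ x ∈ Set.Icc (-r) r, |gt x| ≤ M := by
    intro x hx
    have hx' : x ∈ Set.Icc (-(r0/2)) (r0/2) := by
      simp only [Set.mem_Icc] at hx ⊢
      exact ⟨by linarith [hx.1], by linarith [hx.2]⟩
    exact le_trans (hM0 x hx') (le_max_left _ _)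
  -- denominator bound
  have hDb : ∀ x ∈ Set.Icc (-r) r, 1/2 ≤ |gm + x * gt x| := by
    intro x hx
    have hxr : |x| ≤ r := abs_le.mpr ⟨hx.1, hx.2⟩
    have h1 : |x * gt x| ≤ 1/2 := by
      rw [abs_mul]
      calc |x| * |gt x| ≤ r * M :=
            mul_le_mul hxr (hMb x hx) (abs_nonneg _) hr.le
        _ ≤ 1/2 := hrM
    have h2 := abs_sub_abs_le_abs_sub gm (-(x * gt x))
    rw [abs_neg, sub_neg_eq_add, hgmabs] at h2
    linarith
  have hDne : ∀ x ∈ Set.Icc (-r) r, gm + x * gt x ≠ 0 := by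
    intro x hx h
    have := hDb x hx
    rw [h, abs_zero] at this
    linarith
  set h : ℝ → ℝ := fun x => (n:ℝ)^2 * x^q / (gm + x * gt x) with hhdef
  have hIccsub : Set.Icc (-r) r ⊆ Set.Ioo (-r0) r0 := by
    intro x hx
    simp only [Set.mem_Icc] at hx
    exact ⟨by linarith [hx.1], by linarith [hx.2]⟩
  have hcont : ContinuousOn h (Set.Icc (-r) r) := by
    apply ContinuousOn.div
    · exact (continuous_const.mul (continuous_pow q)).continuousOn
    · exact continuousOn_const.add (continuousOn_id.mul (hgtcont.mono hIccsub))
    · exact hDne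
  set Φ : ℝ → ℝ := fun t => ∫ x in (0:ℝ)..t, h x with hΦdef
  have hInt : ∀ A B : ℝ, A ∈ Set.Icc (-r) r → B ∈ Set.Icc (-r) r →
      IntervalIntegrable h volume A B := by
    intro A B hA hB
    exact (hcont.mono (Set.uIcc_subset_Icc hA hB)).intervalIntegrable
  -- the SDI integrand coincides with h on Icc (-r) r
  have hfh : Set.EqOn (fun x => ((n:ℝ) * x ^ (n-1)) ^ 2 / (gm * x ^ m + x ^ (m+1) * gt x)) h
      (Set.Icc (-r) r) := by
    intro x hx
    rcases eq_or_ne x 0 with rfl|hx0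
    · have e1 : (0:ℝ)^(n-1) = 0 := zero_pow (by omega)
      have e2 : (0:ℝ)^q = 0 := zero_pow (by omega)
      simp only [hhdef, e1, e2, mul_zero, zero_mul, zero_div]
      norm_num
    · have hD := hDne x hx
      have hnum : ((n:ℝ) * x^(n-1))^2 = (n:ℝ)^2 * x^q * x^m := by
        rw [mul_pow, ← pow_mul, mul_assoc, ← pow_add]
        congr 2
        omega
      have hden : gm * x^m + x^(m+1) * gt x = ((gm + x * gt x)) * x^m := by ring
      simp only [hhdef]
      rw [hnum, hden, mul_div_mul_right _ _ (pow_ne_zero m hx0)]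
  -- error bound for Φ
  have hPhi : ∀ t : ℝ, |t| ≤ r → |Φ t - c * t^p| ≤ K * |t|^p * |t| := by
    intro t ht
    obtain ⟨ht1, ht2⟩ := abs_le.mp ht
    have htIcc : Set.uIcc (0:ℝ) t ⊆ Set.Icc (-r) r := by
      intro x hx
      rcases Set.mem_uIcc.mp hx with ⟨h1,h2⟩|⟨h1,h2⟩ <;>
        exact ⟨by linarith, by linarith⟩
    have hI1 : IntervalIntegrable h volume 0 t := (hcont.mono htIcc).intervalIntegrable
    have hI2 : IntervalIntegrable (fun x => (n:ℝ)^2/gm * x^q) volume 0 t :=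
      (continuous_const.mul (continuous_pow q)).intervalIntegrable _ _
    have hval : ∫ x in (0:ℝ)..t, (n:ℝ)^2/gm * x^q = c * t^p := by
        rw [intervalIntegral.integral_const_mul, integral_pow,
          zero_pow (by omega : q+1 ≠ 0)]
        have hcast : ((q:ℝ)+1) = (p:ℝ) := by push_cast [hpdef]; ring
        rw [hcast, hcdef, hpdef]
        field_simp
        simp
    have hsub : Φ t - c * t^p = ∫ x in (0:ℝ)..t, (h x - (n:ℝ)^2/gm * x^q) := by
      rw [show (∫ x in (0:ℝ)..t, (h x - (n:ℝ)^2/gm * x^q))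
          = (∫ x in (0:ℝ)..t, h x) - ∫ x in (0:ℝ)..t, (n:ℝ)^2/gm * x^q
          from intervalIntegral.integral_sub hI1 hI2, hval]
    rw [hsub]
    have hb := intervalIntegral.norm_integral_le_of_norm_le_const
      (C := K * |t|^p) (f := fun x => h x - (n:ℝ)^2/gm * x^q) (a := (0:ℝ)) (b := t) ?_
    · rw [Real.norm_eq_abs, sub_zero] at hb
      exact hb
    · intro x hx
      show ‖h x - (n:ℝ)^2/gm * x^q‖ ≤ K * |t|^p
      have hxmem : x ∈ Set.Icc (-r) r := htIcc (Set.uIoc_subset_uIcc hx)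
      have hxt : |x| ≤ |t| := by
        rcases Set.mem_uIoc.mp hx with ⟨h1,h2⟩|⟨h1,h2⟩
        · rw [abs_of_pos h1]; exact h2.trans (le_abs_self t)
        · rw [abs_of_nonpos h2]; linarith [neg_le_abs t]
      have hD := hDb x hxmem
      have hDne' : gm + x * gt x ≠ 0 := hDne x hxmem
      have hgtx := hMb x hxmem
      have heq : h x - (n:ℝ)^2/gm * x^q
          = -((n:ℝ)^2 * x^q * (x * gt x)) / ((gm + x * gt x) * gm) := by
        simp only [hhdef]
        field_simp
        ring
      rw [Real.norm_eq_abs, heq, abs_div]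
      have hden : 1/2 ≤ |(gm + x * gt x) * gm| := by
        rw [abs_mul, hgmabs, mul_one]; exact hD
      have hnum : |(-((n:ℝ)^2 * x^q * (x * gt x)))| ≤ (n:ℝ)^2 * |t|^q * (|t| * M) := by
        simp only [abs_neg, abs_mul, abs_pow, Nat.abs_cast]
        have h1 : |x|^q ≤ |t|^q := pow_le_pow_left₀ (abs_nonneg _) hxt q
        have h2 : |x| * |gt x| ≤ |t| * M :=
          mul_le_mul (hxt) hgtx (abs_nonneg _) (abs_nonneg _)
        have h3 : |x|^q * (|x| * |gt x|) ≤ |t|^q * (|t| * M) :=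
          mul_le_mul h1 h2 (mul_nonneg (abs_nonneg x) (abs_nonneg _))
            (pow_nonneg (abs_nonneg t) q)
        have h4 := mul_le_mul_of_nonneg_left h3 (by positivity : (0:ℝ) ≤ (n:ℝ)^2)
        calc (n:ℝ)^2 * |x|^q * (|x| * |gt x|)
            = (n:ℝ)^2 * (|x|^q * (|x| * |gt x|)) := by ring
          _ ≤ (n:ℝ)^2 * (|t|^q * (|t| * M)) := h4
          _ = (n:ℝ)^2 * |t|^q * (|t| * M) := by ring
      calc |(-((n:ℝ)^2 * x^q * (x * gt x)))| / |(gm + x * gt x) * gm|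
          ≤ ((n:ℝ)^2 * |t|^q * (|t| * M)) / (1/2) :=
            div_le_div₀ (by positivity) hnum (by norm_num) hden
        _ = K * |t|^p := by
            rw [hKdef, hpdef, pow_succ]
            ring
  -- from SDI = 0 to the Φ equation
  have hrn : (0:ℝ) < r^(n:ℕ) := by positivity
  have hrpow : (r^(n:ℕ)) ^ ((1:ℝ)/(n:ℝ)) = r := by
    rw [← Real.rpow_natCast r n, ← Real.rpow_mul hr.le, mul_one_div,
      div_self hn0, Real.rpow_one]
  have hroot : ∀ y : ℝ, 0 < y → y < r^(n:ℕ) →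
      0 < y ^ ((1:ℝ)/(n:ℝ)) ∧ y ^ ((1:ℝ)/(n:ℝ)) ≤ r := by
    intro y hy hyr
    refine ⟨Real.rpow_pos_of_pos hy _, ?_⟩
    have := Real.rpow_lt_rpow hy.le hyr (by positivity : (0:ℝ) < 1/(n:ℝ))
    rw [hrpow] at this
    exact this.le
  have hSDI : ∀ y yt : ℝ, 0 < y → y < r^(n:ℕ) → 0 < yt → yt < r^(n:ℕ) →
      SDI n m gm gt y yt = 0 →
      Φ (yt ^ ((1:ℝ)/(n:ℝ))) = Φ (-(y ^ ((1:ℝ)/(n:ℝ)))) := by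
    intro y yt hy hyr hyt hytr hS
    set A := y ^ ((1:ℝ)/(n:ℝ)) with hAdef
    set B := yt ^ ((1:ℝ)/(n:ℝ)) with hBdef
    obtain ⟨hA0, hAr⟩ := hroot y hy hyr
    obtain ⟨hB0, hBr⟩ := hroot yt hyt hytr
    have hAmem : -A ∈ Set.Icc (-r) r := ⟨by linarith, by linarith⟩
    have hBmem : B ∈ Set.Icc (-r) r := ⟨by linarith, by linarith⟩
    have h0mem : (0:ℝ) ∈ Set.Icc (-r) r := ⟨by linarith, by linarith⟩
    unfold SDI at hS
    rw [neg_eq_zero] at hS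
    have hcongr : ∫ x in (-A)..B, ((n:ℝ) * x ^ (n-1)) ^ 2 / (gm * x ^ m + x ^ (m+1) * gt x)
        = ∫ x in (-A)..B, h x :=
      intervalIntegral.integral_congr (hfh.mono (Set.uIcc_subset_Icc hAmem hBmem))
    have hadd := intervalIntegral.integral_add_adjacent_intervals
      (hInt (-A) 0 hAmem h0mem) (hInt 0 B h0mem hBmem)
    have hsym : ∫ x in (-A)..(0:ℝ), h x = - Φ (-A) :=
      intervalIntegral.integral_symm 0 (-A)
    rw [hcongr] at hS
    rw [← hadd, hsym] at hS
    have : Φ B = ∫ x in (0:ℝ)..B, h x := rfl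
    rw [this]
    linarith [hS]
  -- ratio bound
  have hratio : ∀ a b : ℝ, 0 < a → a ≤ r → 0 < b → b ≤ r → Φ b = Φ (-a) →
      |(b/a)^p - 1| ≤ (K/|c|) * (a + 3*b) := by
    intro a b ha har hb hbr heq
    have hEb := hPhi b (by rw [abs_of_pos hb]; exact hbr)
    have hEa := hPhi (-a) (by rw [abs_neg, abs_of_pos ha]; exact har)
    rw [hpeven.neg_pow, abs_neg, abs_of_pos ha] at hEa
    rw [abs_of_pos hb] at hEb
    have h1 : |c * b^p - c * a^p| ≤ K * a^p * a + K * b^p * b := by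
      have hc1 : c * b^p - c * a^p = (Φ (-a) - c * a^p) - (Φ b - c * b^p) := by
        rw [heq]; ring
      rw [hc1]
      calc |(Φ (-a) - c * a^p) - (Φ b - c * b^p)|
          ≤ |Φ (-a) - c * a^p| + |Φ b - c * b^p| := abs_sub _ _
        _ ≤ K * a^p * a + K * b^p * b := add_le_add hEa hEb
    have h2 : |b^p - a^p| ≤ (K/|c|) * (a^p * a + b^p * b) := by
      have hm1 : |c| * |b^p - a^p| ≤ K * (a^p * a + b^p * b) := by
        rw [← abs_mul]
        calc |c * (b^p - a^p)| = |c * b^p - c * a^p| := by ring_nf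
          _ ≤ K * a^p * a + K * b^p * b := h1
          _ = K * (a^p * a + b^p * b) := by ring
      rw [div_mul_eq_mul_div, le_div_iff₀ hcabs0, mul_comm (|b^p - a^p|)]
      exact hm1
    have hap : (0:ℝ) < a^p := pow_pos ha p
    have hbp : (0:ℝ) < b^p := pow_pos hb p
    -- b^p ≤ 3 a^p
    have h3 : b^p ≤ 3 * a^p := by
      have hb1 : b^p - a^p ≤ (K/|c|) * (a^p * a + b^p * b) :=
        le_trans (le_abs_self _) h2
      have hb2 : (K/|c|) * (a^p * a + b^p * b) ≤ (1/2) * (a^p + b^p) := by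
        have hKc : 0 ≤ K/|c| := by positivity
        have e1 : a^p * a ≤ a^p * r := by nlinarith
        have e2 : b^p * b ≤ b^p * r := by nlinarith
        have e3 : (K/|c|) * (a^p * a + b^p * b) ≤ (K/|c|) * r * (a^p + b^p) := by
          nlinarith
        have e4 : (K/|c|) * r ≤ 1/2 := by
          rw [div_mul_eq_mul_div, div_le_iff₀ hcabs0]
          linarith [hrK]
        nlinarith [add_pos hap hbp]
      nlinarith
    have hfrac : (b/a)^p - 1 = (b^p - a^p)/a^p := by
      rw [div_pow]
      field_simp
    rw [hfrac, abs_div, abs_of_pos hap, div_le_iff₀ hap]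
    have hKc : 0 ≤ K/|c| := by positivity
    calc |b^p - a^p| ≤ (K/|c|) * (a^p * a + b^p * b) := h2
      _ ≤ (K/|c|) * (a + 3*b) * a^p := by nlinarith [mul_le_mul_of_nonneg_right h3 hb.le]
  -- main convergence lemma
  have hmain : ∀ a b : ℕ → ℝ, (∀ k, 0 < a k) → (∀ k, a k ≤ r) →
      (∀ k, 0 < b k) → (∀ k, b k ≤ r) →
      Tendsto a atTop (𝓝 0) → Tendsto b atTop (𝓝 0) →
      (∀ k, Φ (b k) = Φ (-(a k))) →
      Tendsto (fun k => b k / a k) atTop (𝓝 1) := by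
    intro a b ha har hb hbr hta htb heq
    have hKc : ∀ k, |(b k / a k)^p - 1| ≤ (K/|c|) * (a k + 3 * b k) :=
      fun k => hratio _ _ (ha k) (har k) (hb k) (hbr k) (heq k)
    have h1 : Tendsto (fun k => (b k / a k)^p) atTop (𝓝 1) := by
      rw [tendsto_iff_norm_sub_tendsto_zero]
      apply squeeze_zero (fun k => norm_nonneg _) (fun k => hKc k)
      have hlim : Tendsto (fun k => (K/|c|) * (a k + 3 * b k)) atTop
          (𝓝 ((K/|c|) * (0 + 3 * 0))) :=
        tendsto_const_nhds.mul (hta.add (tendsto_const_nhds.mul htb))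
      simpa using hlim
    have hkey : ∀ k, ((b k / a k)^p) ^ ((1:ℝ)/(p:ℝ)) = b k / a k := by
      intro k
      rw [← Real.rpow_natCast (b k / a k) p, ← Real.rpow_mul (div_pos (hb k) (ha k)).le,
        mul_one_div, div_self (by exact_mod_cast hppos : (p:ℝ) ≠ 0), Real.rpow_one]
    have h2 : Tendsto (fun k => ((b k / a k)^p) ^ ((1:ℝ)/(p:ℝ))) atTop (𝓝 1) := by
      have hc1 : ContinuousAt (fun x : ℝ => x ^ ((1:ℝ)/(p:ℝ))) 1 :=
        Real.continuousAt_rpow_const 1 _ (Or.inl one_ne_zero)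
      have := hc1.tendsto.comp h1
      simpa [Function.comp_def, Real.one_rpow] using this
    simpa only [hkey] using h2
  -- conclude
  refine ⟨r^(n:ℕ), hrn, ?_⟩
  rintro ys ⟨hanti, hpos, htend, hcase⟩ h0
  have hlt : ∀ k, ys k < r^(n:ℕ) :=
    fun k => lt_of_le_of_lt (hanti.antitone (Nat.zero_le k)) h0
  set a : ℕ → ℝ := fun k => (ys k) ^ ((1:ℝ)/(n:ℝ)) with hadef
  have hapos : ∀ k, 0 < a k := fun k => (hroot _ (hpos k) (hlt k)).1
  have har : ∀ k, a k ≤ r := fun k => (hroot _ (hpos k) (hlt k)).2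
  have hatend : Tendsto a atTop (𝓝 0) := by
    have hcont0 : ContinuousAt (fun x:ℝ => x ^ ((1:ℝ)/(n:ℝ))) 0 :=
      Real.continuousAt_rpow_const 0 _ (Or.inr (by positivity))
    have h2 := hcont0.tendsto.comp htend
    simp only [Function.comp_def] at h2
    rw [Real.zero_rpow (by positivity : (1:ℝ)/(n:ℝ) ≠ 0)] at h2
    exact h2
  have hatend' : Tendsto (fun k => a (k+1)) atTop (𝓝 0) :=
    hatend.comp (Filter.tendsto_add_atTop_nat 1)
  have hapow : ∀ k, (a k)^(n:ℕ) = ys k := by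
    intro k
    rw [hadef]
    rw [← Real.rpow_natCast ((ys k) ^ ((1:ℝ)/(n:ℝ))) n, ← Real.rpow_mul (hpos k).le,
      one_div, inv_mul_cancel₀ hn0, Real.rpow_one]
  rcases hcase with hc|hc
  · have heqk : ∀ k, Φ (a (k+1)) = Φ (-(a k)) :=
      fun k => hSDI (ys k) (ys (k+1)) (hpos k) (hlt k) (hpos _) (hlt _) (hc k)
    have hba : Tendsto (fun k => a (k+1) / a k) atTop (𝓝 1) :=
      hmain a (fun k => a (k+1)) hapos har (fun k => hapos _) (fun k => har _)
        hatend hatend' heqk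
    have hinv : Tendsto (fun k => (a (k+1) / a k)⁻¹) atTop (𝓝 1) := by
      simpa using hba.inv₀ one_ne_zero
    have hfin := hinv.pow (n:ℕ)
    rw [one_pow] at hfin
    have hrw : ∀ k, (a (k+1) / a k)⁻¹ ^ (n:ℕ) = ys k / ys (k+1) := by
      intro k
      rw [inv_div, div_pow, hapow k, hapow (k+1)]
    simpa only [hrw] using hfin
  · have heqk : ∀ k, Φ (a k) = Φ (-(a (k+1))) :=
      fun k => hSDI (ys (k+1)) (ys k) (hpos _) (hlt _) (hpos k) (hlt k) (hc k)
    have hba : Tendsto (fun k => a k / a (k+1)) atTop (𝓝 1) :=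
      hmain (fun k => a (k+1)) a (fun k => hapos _) (fun k => har _) hapos har
        hatend' hatend heqk
    have hfin := hba.pow (n:ℕ)
    rw [one_pow] at hfin
    have hrw : ∀ k, (a k / a (k+1)) ^ (n:ℕ) = ys k / ys (k+1) := by
      intro k
      rw [div_pow, hapow k, hapow (k+1)]
    simpa only [hrw] using hfin
end

section
/- Assume the system has infinite fractal codimension, i.e. for every N ∈ ℕ there exist constants C, δ > 0 such that |g̃(x) + g̃(−x)| ≤ C |x|^N for all |x| < δ. Then for every N ∈ ℕ there exist constants C', δ' > 0 such that |I(y)| ≤ C' y^N for all y ∈ (0, δ'). -/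
open MeasureTheory Set Filter Topology

/-- In the infinite-codimension case, `I(y) = O(y^N)` as `y → 0⁺` for every `N`. -/
theorem sdi_flat_infinite_codim
    (n m : ℕ) (gm : ℝ) (gt : ℝ → ℝ)
    (hn2 : 2 ≤ n) (hne : Even n) (hm1 : 1 ≤ m) (hmo : Odd m)
    (hmn : m ≤ 2 * (n - 1))
    (hgm : gm = 1 ∨ gm = -1)
    (hgt : ∃ r > (0:ℝ), ContDiffOn ℝ (⊤ : ℕ∞) gt (Set.Ioo (-r) r))
    (hinf : ∀ N : ℕ, ∃ C > (0:ℝ), ∃ δ > (0:ℝ), ∀ x : ℝ, |x| < δ →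
      |gt x + gt (-x)| ≤ C * |x| ^ N) :
    ∀ N : ℕ, ∃ C' > (0:ℝ), ∃ δ' > (0:ℝ), ∀ y : ℝ, 0 < y → y < δ' →
      |SDI n m gm gt y y| ≤ C' * y ^ N := by
  obtain ⟨r, hr, hgtc⟩ := hgt
  have hgt_cont : ContinuousOn gt (Set.Ioo (-r) r) := hgtc.continuousOn
  have hsub : Set.Icc (-(r/2)) (r/2) ⊆ Set.Ioo (-r) r := by
    intro x hx
    exact ⟨by linarith [hx.1], by linarith [hx.2]⟩
  obtain ⟨M, hM⟩ := (isCompact_Icc (a := -(r/2)) (b := r/2)).exists_bound_of_continuousOn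
    (hgt_cont.mono hsub)
  set δ : ℝ := min (r/2) (1/(2*(|M|+1))) with hδdef
  have hMpos : (0:ℝ) < |M| + 1 := by positivity
  have hδpos : 0 < δ := lt_min (by linarith) (by positivity)
  have habsgm : |gm| = 1 := by rcases hgm with h | h <;> simp [h]
  -- denominator lower bound
  have hden : ∀ x : ℝ, |x| ≤ δ → 1/2 ≤ |gm + x * gt x| := by
    intro x hx
    have hx2 : |x| ≤ r/2 := le_trans hx (min_le_left _ _)
    have hxI : x ∈ Set.Icc (-(r/2)) (r/2) := abs_le.mp hx2
    have hgtx : |gt x| ≤ |M| := le_trans (hM x hxI) (le_abs_self M)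
    have hδ2 : δ ≤ 1/(2*(|M|+1)) := min_le_right _ _
    have hxg : |x * gt x| ≤ 1/2 := by
      rw [abs_mul]
      calc |x| * |gt x| ≤ (1/(2*(|M|+1))) * (|M|+1) := by
            apply mul_le_mul (le_trans hx hδ2) (by linarith) (abs_nonneg _) (by positivity)
        _ = 1/2 := by field_simp
    have := abs_add_le (gm + x * gt x) (-(x * gt x))
    simp only [add_neg_cancel_right] at this
    rw [abs_neg] at this
    linarith [habsgm ▸ this]
  intro N
  obtain ⟨C, hC, δ₂, hδ₂, hflat⟩ := hinf (n*N)
  set δ₃ : ℝ := min δ δ₂ with hδ₃def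
  have hδ₃pos : 0 < δ₃ := lt_min hδpos hδ₂
  have hnR : (0:ℝ) < (n:ℝ) := by exact_mod_cast (by omega : 0 < n)
  refine ⟨4*(n:ℝ)^2*C, by positivity, min 1 (δ₃^n), by positivity, ?_⟩
  intro y hy hylt
  have hy1 : y ≤ 1 := le_of_lt (lt_of_lt_of_le hylt (min_le_left _ _))
  have hyδ : y < δ₃^n := lt_of_lt_of_le hylt (min_le_right _ _)
  set a : ℝ := y ^ ((1:ℝ)/(n:ℝ)) with hadef
  have hapos : 0 < a := Real.rpow_pos_of_pos hy _
  have haδ : a < δ₃ := by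
    have h1 : a < (δ₃^n : ℝ) ^ ((1:ℝ)/(n:ℝ)) :=
      Real.rpow_lt_rpow hy.le hyδ (by positivity)
    have h2 : ((δ₃^n : ℝ)) ^ ((1:ℝ)/(n:ℝ)) = δ₃ := by
      rw [← Real.rpow_natCast δ₃ n, ← Real.rpow_mul hδ₃pos.le, mul_one_div,
        div_self (ne_of_gt hnR), Real.rpow_one]
    rwa [h2] at h1
  -- exponents
  obtain ⟨j, hj⟩ := hmo
  set k : ℕ := 2*n - 2 - m with hkdef
  have hmk : m + k = 2*n - 2 := by omega
  have hk_odd : Odd k := ⟨n - 2 - j, by omega⟩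
  have hk1 : 1 ≤ k := by omega
  -- the integrand and its nice form
  set hfun : ℝ → ℝ := fun x => ((n:ℝ) * x ^ (n-1)) ^ 2 / (gm * x ^ m + x ^ (m+1) * gt x)
    with hfundef
  set φ : ℝ → ℝ := fun x => (n:ℝ)^2 * x^k / (gm + x * gt x) with hφdef
  have heq : ∀ x : ℝ, |x| ≤ δ₃ → hfun x = φ x := by
    intro x hx
    rcases eq_or_ne x 0 with rfl | hx0
    · simp [hfundef, hφdef, zero_pow (by omega : n - 1 ≠ 0), zero_pow (by omega : k ≠ 0)]
    · have hxm : (x:ℝ)^m ≠ 0 := pow_ne_zero _ hx0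
      have h1 : gm * x^m + x^(m+1) * gt x = x^m * (gm + x * gt x) := by ring
      have h2 : ((n:ℝ) * x^(n-1))^2 = x^m * ((n:ℝ)^2 * x^k) := by
        rw [mul_pow, ← pow_mul]
        rw [show (n-1)*2 = m + k by omega, pow_add]
        ring
      simp only [hfundef, hφdef]
      rw [h1, h2, mul_div_mul_left _ _ hxm]
  -- continuity
  have hIccsub : Set.Icc (-δ₃) δ₃ ⊆ Set.Ioo (-r) r := by
    intro x hx
    have h1 : δ₃ ≤ r/2 := le_trans (min_le_left _ _) (min_le_left _ _)
    exact ⟨by linarith [hx.1], by linarith [hx.2]⟩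
  have hu_cont : ContinuousOn (fun x : ℝ => gm + x * gt x) (Set.Icc (-δ₃) δ₃) :=
    continuousOn_const.add (continuousOn_id.mul (hgt_cont.mono hIccsub))
  have hu_ne : ∀ x ∈ Set.Icc (-δ₃) δ₃, gm + x * gt x ≠ 0 := by
    intro x hx
    have : 1/2 ≤ |gm + x * gt x| :=
      hden x (le_trans (abs_le.mpr hx) (min_le_left _ _))
    intro h
    rw [h, abs_zero] at this; linarith
  have hφ_cont : ContinuousOn φ (Set.Icc (-δ₃) δ₃) :=
    ((continuous_const.mul (continuous_pow k)).continuousOn).div hu_cont hu_ne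
  have hcont : ContinuousOn hfun (Set.Icc (-δ₃) δ₃) :=
    hφ_cont.congr (fun x hx => heq x (abs_le.mpr hx))
  have hsubab : Set.uIcc (-a) a ⊆ Set.Icc (-δ₃) δ₃ := by
    rw [Set.uIcc_of_le (by linarith : -a ≤ a)]
    exact Set.Icc_subset_Icc (by linarith) (by linarith)
  have hint : IntervalIntegrable hfun volume (-a) a :=
    (hcont.mono hsubab).intervalIntegrable
  have hint1 : IntervalIntegrable hfun volume (-a) 0 :=
    hint.mono_set (by
      rw [Set.uIcc_of_le (by linarith : -a ≤ (0:ℝ)), Set.uIcc_of_le (by linarith : -a ≤ a)]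
      exact Set.Icc_subset_Icc le_rfl hapos.le)
  have hint2 : IntervalIntegrable hfun volume 0 a :=
    hint.mono_set (by
      rw [Set.uIcc_of_le hapos.le, Set.uIcc_of_le (by linarith : -a ≤ a)]
      exact Set.Icc_subset_Icc (by linarith) le_rfl)
  have hintneg : IntervalIntegrable (fun x => hfun (-x)) volume 0 a := by
    apply ContinuousOn.intervalIntegrable
    rw [Set.uIcc_of_le hapos.le]
    apply hcont.comp continuous_neg.continuousOn
    intro x hx
    simp only [Set.mem_Icc] at hx ⊢
    constructor <;> nlinarith
  -- split the integral
  have hsplit : (∫ x in (-a)..a, hfun x) = ∫ x in (0:ℝ)..a, (hfun (-x) + hfun x) := by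
    rw [intervalIntegral.integral_add hintneg hint2]
    rw [intervalIntegral.integral_comp_neg hfun, neg_zero]
    exact (intervalIntegral.integral_add_adjacent_intervals hint1 hint2).symm
  -- pointwise bound on (0, a]
  have hbound : ∀ x ∈ Set.uIoc (0:ℝ) a, ‖hfun (-x) + hfun x‖ ≤ 4*(n:ℝ)^2*C*a^(k+1+n*N) := by
    rw [Set.uIoc_of_le hapos.le]
    intro x hx
    obtain ⟨hx0, hxa⟩ := hx
    have hxδ₃ : |x| ≤ δ₃ := by rw [abs_of_pos hx0]; linarith
    have hxδ₃' : |(-x)| ≤ δ₃ := by rwa [abs_neg]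
    rw [heq _ hxδ₃, heq _ hxδ₃']
    have hux : gm + x * gt x ≠ 0 := hu_ne x (abs_le.mp hxδ₃)
    have hunx : gm + (-x) * gt (-x) ≠ 0 := hu_ne (-x) (abs_le.mp hxδ₃')
    have hid : φ (-x) + φ x =
        (n:ℝ)^2 * x^k * (-(x * (gt x + gt (-x)))) /
          ((gm + x * gt x) * (gm + (-x) * gt (-x))) := by
      simp only [hφdef]
      rw [Odd.neg_pow hk_odd, show (n:ℝ)^2 * (-(x^k)) = -((n:ℝ)^2 * x^k) by ring,
        div_add_div _ _ hunx hux,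
        div_eq_div_iff (mul_ne_zero hunx hux) (mul_ne_zero hux hunx)]
      ring
    rw [hid, Real.norm_eq_abs, abs_div]
    have hdenb : 1/4 ≤ |(gm + x * gt x) * (gm + (-x) * gt (-x))| := by
      rw [abs_mul]
      have h1 := hden x (le_trans hxδ₃ (min_le_left _ _))
      have h2 := hden (-x) (le_trans hxδ₃' (min_le_left _ _))
      nlinarith
    have hnum : |(n:ℝ)^2 * x^k * (-(x * (gt x + gt (-x))))| ≤ (n:ℝ)^2 * C * x^(k+1+n*N) := by
      have hxabs : |x| = x := abs_of_pos hx0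
      have hxδ₂ : |x| < δ₂ := by
        rw [hxabs]
        exact lt_of_le_of_lt hxa (lt_of_lt_of_le haδ (min_le_right _ _))
      have hflatx : |gt x + gt (-x)| ≤ C * x^(n*N) := by
        have h := hflat x hxδ₂; rwa [hxabs] at h
      rw [abs_mul, abs_neg, abs_mul, abs_mul, abs_pow, abs_pow, Nat.abs_cast, hxabs]
      calc (n:ℝ)^2 * x^k * (x * |gt x + gt (-x)|)
          ≤ (n:ℝ)^2 * x^k * (x * (C * x^(n*N))) := by
            apply mul_le_mul_of_nonneg_left _ (by positivity)
            exact mul_le_mul_of_nonneg_left hflatx hx0.le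
        _ = (n:ℝ)^2 * C * x^(k+1+n*N) := by rw [pow_add, pow_add]; ring
    calc |(n:ℝ)^2 * x^k * (-(x * (gt x + gt (-x))))| /
          |(gm + x * gt x) * (gm + (-x) * gt (-x))|
        ≤ ((n:ℝ)^2 * C * x^(k+1+n*N)) / (1/4) := by
          apply div_le_div₀ (by positivity) hnum (by norm_num) hdenb
      _ = 4*(n:ℝ)^2*C*x^(k+1+n*N) := by ring
      _ ≤ 4*(n:ℝ)^2*C*a^(k+1+n*N) := by
          apply mul_le_mul_of_nonneg_left _ (by positivity)
          exact pow_le_pow_left₀ hx0.le hxa _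
  -- put it together
  have hSDI : |SDI n m gm gt y y| = ‖∫ x in (0:ℝ)..a, (hfun (-x) + hfun x)‖ := by
    rw [SDI, abs_neg, ← hsplit, Real.norm_eq_abs]
  rw [hSDI]
  calc ‖∫ x in (0:ℝ)..a, (hfun (-x) + hfun x)‖
      ≤ (4*(n:ℝ)^2*C*a^(k+1+n*N)) * |a - 0| :=
        intervalIntegral.norm_integral_le_of_norm_le_const hbound
    _ = 4*(n:ℝ)^2*C * a^(k+2+n*N) := by
        rw [sub_zero, abs_of_pos hapos, show k+2+n*N = (k+1+n*N)+1 by omega, pow_succ]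
        ring
    _ ≤ 4*(n:ℝ)^2*C * y^N := by
        apply mul_le_mul_of_nonneg_left _ (by positivity)
        have h1 : a^(k+2+n*N) = y ^ ((1/(n:ℝ)) * ((k+2+n*N : ℕ):ℝ)) := by
          rw [hadef, ← Real.rpow_natCast (y ^ ((1:ℝ)/(n:ℝ))) (k+2+n*N),
            ← Real.rpow_mul hy.le]
        have h2 : ((N:ℕ):ℝ) ≤ (1/(n:ℝ)) * ((k+2+n*N : ℕ):ℝ) := by
          rw [one_div, inv_mul_eq_div, le_div_iff₀ hnR]
          have : ((n*N : ℕ):ℝ) ≤ ((k+2+n*N : ℕ):ℝ) := by exact_mod_cast (by omega : n*N ≤ k+2+n*N)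
          push_cast at this ⊢
          linarith
        rw [h1, ← Real.rpow_natCast y N]
        exact Real.rpow_le_rpow_of_exponent_ge hy hy1 h2
end

section
/- Assume the system has infinite fractal codimension, i.e. for every N ∈ ℕ there exist constants C, δ > 0 such that |g̃(x) + g̃(−x)| ≤ C |x|^N for all |x| < δ, and let (y_k)_{k≥0} be a fractal sequence. Then for every real η > 1 there exist C' > 0 and K ∈ ℕ such that y_k − y_{k+1} ≤ C' · y_k^η for all k ≥ K. -/
open MeasureTheory Set Filter Topology

private noncomputable def Af (n p : ℕ) (gm : ℝ) (gt : ℝ → ℝ) (t : ℝ) : ℝ :=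
  (n:ℝ)^2 * t^p / (1 + gm * (t * gt t))

private noncomputable def Bf (n p : ℕ) (gm : ℝ) (gt : ℝ → ℝ) (t : ℝ) : ℝ :=
  (n:ℝ)^2 * t^p / (1 - gm * (t * gt (-t)))

private noncomputable def FA (n p : ℕ) (gm : ℝ) (gt : ℝ → ℝ) (u : ℝ) : ℝ :=
  ∫ t in (0:ℝ)..u, Af n p gm gt t

private noncomputable def FB (n p : ℕ) (gm : ℝ) (gt : ℝ → ℝ) (u : ℝ) : ℝ :=
  ∫ t in (0:ℝ)..u, Bf n p gm gt t

private lemma pow_sub_pow_le_aux (a b : ℝ) (hb : 0 ≤ b) (hba : b ≤ a) :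
    ∀ k : ℕ, a ^ k - b ^ k ≤ (k : ℝ) * a ^ (k - 1) * (a - b) := by
  intro k
  induction k with
  | zero => simp
  | succ k ih =>
    have ha : 0 ≤ a := hb.trans hba
    have hbk : b ^ k ≤ a ^ k := pow_le_pow_left₀ hb hba k
    rcases Nat.eq_zero_or_pos k with hk | hk
    · subst hk; simp
    · have h3 : a * a ^ (k - 1) = a ^ k := by
        rw [← pow_succ']; congr 1; omega
      have h2 : a * (a ^ k - b ^ k) ≤ a * ((k:ℝ) * a ^ (k-1) * (a - b)) :=
        mul_le_mul_of_nonneg_left ih ha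
      have h2' : a * (a ^ k - b ^ k) ≤ (k:ℝ) * a ^ k * (a - b) := by
        calc a * (a ^ k - b ^ k) ≤ a * ((k:ℝ) * a ^ (k-1) * (a - b)) := h2
          _ = (k:ℝ) * (a * a ^ (k-1)) * (a - b) := by ring
          _ = (k:ℝ) * a ^ k * (a - b) := by rw [h3]
      have h4 : b ^ k * (a - b) ≤ a ^ k * (a - b) :=
        mul_le_mul_of_nonneg_right hbk (by linarith)
      have hid : a^(k+1) - b^(k+1) = a*(a^k - b^k) + b^k*(a-b) := by ring
      have h5 : (k + 1 : ℕ) - 1 = k := by omega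
      rw [h5]
      push_cast
      linarith [h2', h4, hid]

private lemma ae_ne_zero : ∀ᵐ x : ℝ, x ≠ (0:ℝ) := by
  rw [ae_iff]
  have : {x : ℝ | ¬ x ≠ 0} = {0} := by ext x; simp
  rw [this]
  exact Real.volume_singleton

private lemma Af_neg (n p : ℕ) (hpo : Odd p) (gm : ℝ) (gt : ℝ → ℝ) (t : ℝ) :
    Af n p gm gt (-t) = - Bf n p gm gt t := by
  unfold Af Bf
  have hneg : (-t)^p = -(t^p) := hpo.neg_pow t
  have hd : 1 + gm * ((-t) * gt (-t)) = 1 - gm * (t * gt (-t)) := by ring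
  rw [hneg, hd]
  ring

private lemma SDI_eq (n m p : ℕ) (hmp : m + p = 2*(n-1))
    (gm : ℝ) (hgm2 : gm * gm = 1) (hpo : Odd p)
    (gt : ℝ → ℝ) (δ : ℝ)
    (hcont : ContinuousOn (Af n p gm gt) (Icc (-δ) δ))
    (y yt a b : ℝ) (ha0 : 0 ≤ a) (hb0 : 0 ≤ b) (haδ : a ≤ δ) (hbδ : b ≤ δ)
    (hy : y ^ ((1:ℝ)/(n:ℝ)) = a) (hyt : yt ^ ((1:ℝ)/(n:ℝ)) = b) :
    SDI n m gm gt y yt = gm * (FB n p gm gt a - FA n p gm gt b) := by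
  unfold FA FB
  have hgmne : gm ≠ 0 := by
    intro h; rw [h] at hgm2; norm_num at hgm2
  have hδ0 : (0:ℝ) ≤ δ := le_trans ha0 haδ
  have hsub : uIcc (-a) b ⊆ Icc (-δ) δ := by
    rw [uIcc_of_le (by linarith)]
    exact Icc_subset_Icc (by linarith) hbδ
  have hIa0 : IntervalIntegrable (Af n p gm gt) volume (-a) 0 :=
    (hcont.mono (fun x hx => hsub (by
      rw [uIcc_of_le (by linarith : (-a:ℝ) ≤ 0)] at hx
      rw [uIcc_of_le (by linarith : (-a:ℝ) ≤ b)]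
      exact Icc_subset_Icc le_rfl hb0 hx))).intervalIntegrable
  have hI0b : IntervalIntegrable (Af n p gm gt) volume 0 b :=
    (hcont.mono (fun x hx => hsub (by
      rw [uIcc_of_le hb0] at hx
      rw [uIcc_of_le (by linarith : (-a:ℝ) ≤ b)]
      exact Icc_subset_Icc (by linarith) le_rfl hx))).intervalIntegrable
  have key1 : ∀ x : ℝ, x ≠ 0 →
      ((n:ℝ) * x ^ (n-1)) ^ 2 / (gm * x ^ m + x ^ (m+1) * gt x) = gm * Af n p gm gt x := by
    intro x hx
    have hxm : x ^ m ≠ 0 := pow_ne_zero _ hx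
    have h1 : ((n:ℝ) * x ^ (n-1)) ^ 2 = x^m * ((n:ℝ)^2 * x^p) := by
      rw [mul_pow, ← pow_mul]
      have h : (n-1)*2 = m + p := by omega
      rw [h, pow_add]; ring
    have h2 : gm * x ^ m + x ^ (m+1) * gt x = x^m * (gm + x * gt x) := by ring
    rw [h1, h2, mul_div_mul_left _ _ hxm]
    unfold Af
    have h3 : 1 + gm * (x * gt x) = gm * (gm + x * gt x) := by
      rw [mul_add, hgm2]
    rw [h3, ← mul_div_assoc, mul_div_mul_left _ _ hgmne]
  have step1 : SDI n m gm gt y yt = -∫ x in (-a)..b, gm * Af n p gm gt x := by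
    rw [SDI, hy, hyt]
    congr 1
    apply intervalIntegral.integral_congr_ae
    filter_upwards [ae_ne_zero] with x hx _
    exact key1 x hx
  have step4 : ∫ x in (-a)..(0:ℝ), Af n p gm gt x = -∫ t in (0:ℝ)..a, Bf n p gm gt t := by
    have hcn := intervalIntegral.integral_comp_neg (a := (0:ℝ)) (b := a) (Af n p gm gt)
    rw [neg_zero] at hcn
    rw [← hcn, ← intervalIntegral.integral_neg]
    apply intervalIntegral.integral_congr
    intro t _
    exact Af_neg n p hpo gm gt t
  rw [step1, intervalIntegral.integral_const_mul,
    ← intervalIntegral.integral_add_adjacent_intervals hIa0 hI0b, step4]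
  ring

private lemma Af_bounds (n p : ℕ) (gm : ℝ) (gt : ℝ → ℝ) (t : ℝ)
    (hd1 : 1/2 ≤ 1 + gm * (t * gt t)) (hd2 : 1 + gm * (t * gt t) ≤ 3/2) (ht : 0 ≤ t) :
    (2/3)*(n:ℝ)^2*t^p ≤ Af n p gm gt t ∧ Af n p gm gt t ≤ 2*(n:ℝ)^2*t^p := by
  have hc : (0:ℝ) ≤ (n:ℝ)^2 * t^p := by positivity
  have hdpos : (0:ℝ) < 1 + gm * (t * gt t) := by linarith
  constructor
  · have h := div_le_div_of_nonneg_left hc hdpos hd2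
    calc (2/3)*(n:ℝ)^2*t^p = ((n:ℝ)^2*t^p)/(3/2) := by ring
      _ ≤ _ := h
  · have h := div_le_div_of_nonneg_left hc (by norm_num : (0:ℝ) < 1/2) hd1
    calc Af n p gm gt t ≤ ((n:ℝ)^2*t^p)/(1/2) := h
      _ = 2*(n:ℝ)^2*t^p := by ring

private lemma FA_intble (n p : ℕ) (gm : ℝ) (gt : ℝ → ℝ) (δ₀ : ℝ)
    (hcont : ContinuousOn (Af n p gm gt) (Icc (-δ₀) δ₀))
    (w v : ℝ) (hw : -δ₀ ≤ w) (hwv : w ≤ v) (hv : v ≤ δ₀) :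
    IntervalIntegrable (Af n p gm gt) volume w v := by
  apply ContinuousOn.intervalIntegrable
  apply hcont.mono
  rw [uIcc_of_le hwv]
  exact Icc_subset_Icc hw hv

private lemma FA_lower (n p : ℕ) (gm : ℝ) (gt : ℝ → ℝ) (δ₀ : ℝ) (hδ₀ : 0 < δ₀)
    (hcont : ContinuousOn (Af n p gm gt) (Icc (-δ₀) δ₀))
    (hd : ∀ t : ℝ, |t| ≤ δ₀ → 1/2 ≤ 1 + gm * (t * gt t) ∧ 1 + gm * (t * gt t) ≤ 3/2)
    (u : ℝ) (hu0 : 0 ≤ u) (huδ : u ≤ δ₀) :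
    (2/3)*(n:ℝ)^2/((p:ℝ)+1) * u^(p+1) ≤ FA n p gm gt u := by
  have hmono : ∫ t in (0:ℝ)..u, (2/3)*(n:ℝ)^2 * t^p ≤ FA n p gm gt u := by
    apply intervalIntegral.integral_mono_on hu0
    · exact (Continuous.continuousOn (by continuity)).intervalIntegrable
    · exact FA_intble n p gm gt δ₀ hcont 0 u (by linarith) hu0 huδ
    · intro t ht
      have habs : |t| ≤ δ₀ := abs_le.mpr ⟨by linarith [ht.1], by linarith [ht.2]⟩
      exact (Af_bounds n p gm gt t (hd t habs).1 (hd t habs).2 ht.1).1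
  have hcomp : ∫ t in (0:ℝ)..u, (2/3)*(n:ℝ)^2 * t^p
      = (2/3)*(n:ℝ)^2/((p:ℝ)+1) * u^(p+1) := by
    rw [intervalIntegral.integral_const_mul, integral_pow]
    have h0 : ((0:ℝ))^(p+1) = 0 := by simp
    rw [h0]
    ring
  linarith [hmono, hcomp.ge]

private lemma FA_upper (n p : ℕ) (gm : ℝ) (gt : ℝ → ℝ) (δ₀ : ℝ) (hδ₀ : 0 < δ₀)
    (hcont : ContinuousOn (Af n p gm gt) (Icc (-δ₀) δ₀))
    (hd : ∀ t : ℝ, |t| ≤ δ₀ → 1/2 ≤ 1 + gm * (t * gt t) ∧ 1 + gm * (t * gt t) ≤ 3/2)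
    (u : ℝ) (hu0 : 0 ≤ u) (huδ : u ≤ δ₀) :
    FA n p gm gt u ≤ 2*(n:ℝ)^2 * u^(p+1) := by
  have hmono : FA n p gm gt u ≤ ∫ _t in (0:ℝ)..u, 2*(n:ℝ)^2 * u^p := by
    apply intervalIntegral.integral_mono_on hu0
    · exact FA_intble n p gm gt δ₀ hcont 0 u (by linarith) hu0 huδ
    · exact intervalIntegrable_const
    · intro t ht
      have habs : |t| ≤ δ₀ := abs_le.mpr ⟨by linarith [ht.1], by linarith [ht.2]⟩
      have h1 := (Af_bounds n p gm gt t (hd t habs).1 (hd t habs).2 ht.1).2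
      have h2 : t^p ≤ u^p := pow_le_pow_left₀ ht.1 ht.2 p
      nlinarith [h1, h2]
  rw [intervalIntegral.integral_const] at hmono
  calc FA n p gm gt u ≤ (u - 0) • (2*(n:ℝ)^2 * u^p) := hmono
    _ = 2*(n:ℝ)^2 * u^(p+1) := by rw [smul_eq_mul]; ring

private lemma FA_diff_lower (n p : ℕ) (gm : ℝ) (gt : ℝ → ℝ) (δ₀ : ℝ) (hδ₀ : 0 < δ₀)
    (hcont : ContinuousOn (Af n p gm gt) (Icc (-δ₀) δ₀))
    (hd : ∀ t : ℝ, |t| ≤ δ₀ → 1/2 ≤ 1 + gm * (t * gt t) ∧ 1 + gm * (t * gt t) ≤ 3/2)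
    (w v : ℝ) (hw0 : 0 ≤ w) (hwv : w ≤ v) (hvδ : v ≤ δ₀) :
    (2/3)*(n:ℝ)^2 * w^p * (v - w) ≤ FA n p gm gt v - FA n p gm gt w := by
  have hsub : FA n p gm gt v - FA n p gm gt w = ∫ t in w..v, Af n p gm gt t := by
    apply intervalIntegral.integral_interval_sub_left
    · exact FA_intble n p gm gt δ₀ hcont 0 v (by linarith) (by linarith) hvδ
    · exact FA_intble n p gm gt δ₀ hcont 0 w (by linarith) hw0 (by linarith)
  rw [hsub]
  have hmono : ∫ _t in w..v, (2/3)*(n:ℝ)^2 * w^p ≤ ∫ t in w..v, Af n p gm gt t := by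
    apply intervalIntegral.integral_mono_on hwv
    · exact intervalIntegrable_const
    · exact FA_intble n p gm gt δ₀ hcont w v (by linarith) hwv hvδ
    · intro t ht
      have ht0 : 0 ≤ t := le_trans hw0 ht.1
      have habs : |t| ≤ δ₀ := abs_le.mpr ⟨by linarith, by linarith [ht.2]⟩
      have h1 := (Af_bounds n p gm gt t (hd t habs).1 (hd t habs).2 ht0).1
      have h2 : w^p ≤ t^p := pow_le_pow_left₀ hw0 ht.1 p
      nlinarith [h1, h2]
  rw [intervalIntegral.integral_const, smul_eq_mul] at hmono
  calc (2/3)*(n:ℝ)^2 * w^p * (v - w) = (v - w) * ((2/3)*(n:ℝ)^2 * w^p) := by ring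
    _ ≤ _ := hmono

private lemma FB_intble (n p : ℕ) (gm : ℝ) (gt : ℝ → ℝ) (δ₀ : ℝ)
    (hcont : ContinuousOn (Bf n p gm gt) (Icc (-δ₀) δ₀))
    (w v : ℝ) (hw : -δ₀ ≤ w) (hwv : w ≤ v) (hv : v ≤ δ₀) :
    IntervalIntegrable (Bf n p gm gt) volume w v := by
  apply ContinuousOn.intervalIntegrable
  apply hcont.mono
  rw [uIcc_of_le hwv]
  exact Icc_subset_Icc hw hv

private lemma FA_FB_flat (n p N : ℕ) (gm : ℝ) (habsgm : |gm| = 1) (gt : ℝ → ℝ)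
    (δ₀ C δ : ℝ) (hδ₀ : 0 < δ₀) (hC : 0 ≤ C)
    (hcontA : ContinuousOn (Af n p gm gt) (Icc (-δ₀) δ₀))
    (hcontB : ContinuousOn (Bf n p gm gt) (Icc (-δ₀) δ₀))
    (hd : ∀ t : ℝ, |t| ≤ δ₀ → 1/2 ≤ 1 + gm * (t * gt t) ∧ 1 + gm * (t * gt t) ≤ 3/2)
    (hd' : ∀ t : ℝ, |t| ≤ δ₀ → 1/2 ≤ 1 - gm * (t * gt (-t)) ∧ 1 - gm * (t * gt (-t)) ≤ 3/2)
    (hflat : ∀ x : ℝ, |x| < δ → |gt x + gt (-x)| ≤ C * |x| ^ N)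
    (u : ℝ) (hu0 : 0 ≤ u) (huδ₀ : u ≤ δ₀) (hu1 : u ≤ 1) (huδ : u < δ) :
    |FA n p gm gt u - FB n p gm gt u| ≤ 4*(n:ℝ)^2*C * u^(N+1) := by
  have hIA := FA_intble n p gm gt δ₀ hcontA 0 u (by linarith) hu0 huδ₀
  have hIB := FB_intble n p gm gt δ₀ hcontB 0 u (by linarith) hu0 huδ₀
  have hsub : FA n p gm gt u - FB n p gm gt u
      = ∫ t in (0:ℝ)..u, (Af n p gm gt t - Bf n p gm gt t) := by
    rw [intervalIntegral.integral_sub hIA hIB]; rfl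
  have hbound : ∀ t ∈ uIoc (0:ℝ) u,
      ‖Af n p gm gt t - Bf n p gm gt t‖ ≤ 4*(n:ℝ)^2*C * u^(N+p+1) := by
    intro t ht
    rw [uIoc_of_le hu0] at ht
    have ht0 : 0 < t := ht.1
    have htu : t ≤ u := ht.2
    have habs : |t| ≤ δ₀ := by rw [abs_of_pos ht0]; linarith
    have hd1 := hd t habs
    have hd2 := hd' t habs
    set d₁ := 1 + gm * (t * gt t) with hd₁def
    set d₂ := 1 - gm * (t * gt (-t)) with hd₂def
    have hd1pos : 0 < d₁ := by linarith [hd1.1]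
    have hd2pos : 0 < d₂ := by linarith [hd2.1]
    have hc : (0:ℝ) ≤ (n:ℝ)^2 * t^p := by positivity
    have hnum : (n:ℝ)^2*t^p * d₂ - d₁ * ((n:ℝ)^2*t^p) = (n:ℝ)^2*t^p*(d₂-d₁) := by ring
    have heq : Af n p gm gt t - Bf n p gm gt t = ((n:ℝ)^2*t^p*(d₂-d₁)) / (d₁*d₂) := by
      unfold Af Bf
      rw [← hd₁def, ← hd₂def, div_sub_div _ _ (ne_of_gt hd1pos) (ne_of_gt hd2pos), hnum]
    have habs21 : |d₂ - d₁| ≤ t * (C * t^N) := by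
      have h1 : d₂ - d₁ = -(gm * (t * (gt t + gt (-t)))) := by
        rw [hd₁def, hd₂def]; ring
      rw [h1, abs_neg, abs_mul, habsgm, one_mul, abs_mul, abs_of_pos ht0]
      have h2 : |gt t + gt (-t)| ≤ C * |t|^N := hflat t (by rw [abs_of_pos ht0]; linarith)
      rw [abs_of_pos ht0] at h2
      exact mul_le_mul_of_nonneg_left h2 ht0.le
    have hden : (1:ℝ)/4 ≤ d₁ * d₂ := by nlinarith [hd1.1, hd2.1]
    rw [Real.norm_eq_abs, heq, abs_div, abs_mul, abs_of_nonneg hc,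
      abs_of_pos (mul_pos hd1pos hd2pos)]
    have step1 : (n:ℝ)^2*t^p * |d₂-d₁| / (d₁*d₂) ≤ (n:ℝ)^2*t^p * (t*(C*t^N)) / (d₁*d₂) := by
      gcongr
    have step2 : (n:ℝ)^2*t^p * (t*(C*t^N)) / (d₁*d₂) ≤ (n:ℝ)^2*t^p * (t*(C*t^N)) / (1/4) :=
      div_le_div_of_nonneg_left (by positivity) (by norm_num) hden
    have step3 : (n:ℝ)^2*t^p * (t*(C*t^N)) / (1/4) = 4*(n:ℝ)^2*C * t^(N+p+1) := by
      rw [pow_add, pow_add, pow_one]; ring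
    have step4 : 4*(n:ℝ)^2*C * t^(N+p+1) ≤ 4*(n:ℝ)^2*C * u^(N+p+1) := by
      apply mul_le_mul_of_nonneg_left (pow_le_pow_left₀ ht0.le htu _) (by positivity)
    linarith [step1, step2, step3.le, step3.ge, step4]
  have hnorm := intervalIntegral.norm_integral_le_of_norm_le_const hbound
  rw [← hsub, sub_zero, abs_of_nonneg hu0, Real.norm_eq_abs] at hnorm
  calc |FA n p gm gt u - FB n p gm gt u| ≤ 4*(n:ℝ)^2*C * u^(N+p+1) * u := hnorm
    _ = 4*(n:ℝ)^2*C * u^(N+p+2) := by rw [pow_succ]; ring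
    _ ≤ 4*(n:ℝ)^2*C * u^(N+1) := by
        apply mul_le_mul_of_nonneg_left (pow_le_pow_of_le_one hu0 hu1 (by omega)) (by positivity)

set_option maxHeartbeats 2000000 in
/-- In the infinite-codimension case, `y_k − y_{k+1} = O(y_k^η)` for every `η > 1`. -/
theorem fractal_sequence_gap_flat_infinite_codim
    (n m : ℕ) (gm : ℝ) (gt : ℝ → ℝ)
    (hn2 : 2 ≤ n) (hne : Even n) (hm1 : 1 ≤ m) (hmo : Odd m)
    (hmn : m ≤ 2 * (n - 1))
    (hgm : gm = 1 ∨ gm = -1)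
    (hgt : ∃ r > (0:ℝ), ContDiffOn ℝ (⊤ : ℕ∞) gt (Set.Ioo (-r) r))
    (hinf : ∀ N : ℕ, ∃ C > (0:ℝ), ∃ δ > (0:ℝ), ∀ x : ℝ, |x| < δ →
      |gt x + gt (-x)| ≤ C * |x| ^ N) :
    ∃ ε > (0:ℝ), ∀ ys : ℕ → ℝ, IsFractalSeq n m gm gt ys → ys 0 < ε →
      ∀ η : ℝ, 1 < η → ∃ C' > (0:ℝ), ∃ K : ℕ, ∀ k : ℕ, K ≤ k →
        ys k - ys (k+1) ≤ C' * ys k ^ η := by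
  obtain ⟨r, hr, hgtc⟩ := hgt
  have hnR : (2:ℝ) ≤ (n:ℝ) := by exact_mod_cast hn2
  have hnne : (n:ℝ) ≠ 0 := by linarith
  have hgm2 : gm * gm = 1 := by rcases hgm with h|h <;> rw [h] <;> norm_num
  have habsgm : |gm| = 1 := by rcases hgm with h|h <;> rw [h] <;> norm_num
  have hgmne : gm ≠ 0 := by intro h; rw [h] at hgm2; norm_num at hgm2
  obtain ⟨j, hj⟩ := hmo
  set p := 2*(n-1) - m with hpdef
  have hmp : m + p = 2*(n-1) := by omega
  have hpo : Odd p := ⟨n - 2 - j, by omega⟩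
  -- small-t bounds on the denominators
  have hgtc0 : ContinuousOn gt (Ioo (-r) r) := hgtc.continuousOn
  have hca : ContinuousAt gt 0 := hgtc0.continuousAt (Ioo_mem_nhds (by linarith) hr)
  have hnpos : (0:ℝ) < (n:ℝ) := by linarith
  have hnsq : (0:ℝ) < (n:ℝ)^2 := pow_pos hnpos 2
  have h0 : Tendsto (fun t : ℝ => t * gt t) (𝓝 0) (𝓝 0) := by
    have h : Tendsto (fun t : ℝ => t * gt t) (𝓝 0) (𝓝 (0 * gt 0)) := (continuousAt_id.mul hca).tendsto
    simpa using h
  have h2 : ∀ᶠ t in 𝓝 (0:ℝ), |t * gt t| < 1/2 := by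
    have h2' := Metric.tendsto_nhds.mp h0 (1/2) (by norm_num)
    filter_upwards [h2'] with t ht
    rwa [Real.dist_eq, sub_zero] at ht
  obtain ⟨δ₁, hδ₁pos, hδ₁⟩ := Metric.eventually_nhds_iff.mp h2
  set δ₀ := min (δ₁/2) (min (r/2) 1) with hδ₀def
  have hδ₀pos : 0 < δ₀ := lt_min (by linarith) (lt_min (by linarith) one_pos)
  have hδ₀r : δ₀ < r :=
    lt_of_le_of_lt (le_trans (min_le_right _ _) (min_le_left _ _)) (by linarith)
  have hδ₀1 : δ₀ ≤ 1 := le_trans (min_le_right _ _) (min_le_right _ _)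
  have hδ₀δ₁ : δ₀ < δ₁ := lt_of_le_of_lt (min_le_left _ _) (by linarith)
  have hsm : ∀ t : ℝ, |t| ≤ δ₀ → |t * gt t| ≤ 1/2 := by
    intro t ht
    have hdist : dist t 0 < δ₁ := by
      rw [Real.dist_eq, sub_zero]
      exact lt_of_le_of_lt ht hδ₀δ₁
    exact (hδ₁ hdist).le
  have hd : ∀ t : ℝ, |t| ≤ δ₀ → 1/2 ≤ 1 + gm * (t * gt t) ∧ 1 + gm * (t * gt t) ≤ 3/2 := by
    intro t ht
    have h := hsm t ht
    have habs : |gm * (t * gt t)| ≤ 1/2 := by rw [abs_mul, habsgm, one_mul]; exact h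
    have h1 := neg_abs_le (gm * (t * gt t))
    have h2 := le_abs_self (gm * (t * gt t))
    constructor <;> linarith
  have hd' : ∀ t : ℝ, |t| ≤ δ₀ →
      1/2 ≤ 1 - gm * (t * gt (-t)) ∧ 1 - gm * (t * gt (-t)) ≤ 3/2 := by
    intro t ht
    have hnt : |(-t)| ≤ δ₀ := by rw [abs_neg]; exact ht
    have h := hsm (-t) hnt
    have heq : |gm * (t * gt (-t))| = |(-t) * gt (-t)| := by
      rw [abs_mul, habsgm, one_mul, abs_mul, abs_mul, abs_neg]
    have h3 : |gm * (t * gt (-t))| ≤ 1/2 := by rw [heq]; exact h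
    have h1 := neg_abs_le (gm * (t * gt (-t)))
    have h2 := le_abs_self (gm * (t * gt (-t)))
    constructor <;> linarith
  have hgtIcc : ContinuousOn gt (Icc (-δ₀) δ₀) := hgtc0.mono (fun x hx =>
    ⟨lt_of_lt_of_le (by linarith) hx.1, lt_of_le_of_lt hx.2 hδ₀r⟩)
  have hcontA : ContinuousOn (Af n p gm gt) (Icc (-δ₀) δ₀) := by
    unfold Af
    apply ContinuousOn.div
    · exact (continuous_const.mul (continuous_pow p)).continuousOn
    · exact continuousOn_const.add (continuousOn_const.mul (continuousOn_id.mul hgtIcc))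
    · intro x hx
      have := (hd x (abs_le.mpr ⟨hx.1, hx.2⟩)).1
      linarith
  have hcontB : ContinuousOn (Bf n p gm gt) (Icc (-δ₀) δ₀) := by
    have hmap : MapsTo (fun t:ℝ => -t) (Icc (-δ₀) δ₀) (Icc (-δ₀) δ₀) := by
      intro x hx
      simp only [mem_Icc] at hx ⊢
      constructor <;> linarith [hx.1, hx.2]
    have h1 : ContinuousOn (fun t : ℝ => -(Af n p gm gt (-t))) (Icc (-δ₀) δ₀) :=
      (hcontA.comp continuous_neg.continuousOn hmap).neg
    exact h1.congr (fun t _ => by beta_reduce; rw [Af_neg n p hpo gm gt t, neg_neg])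
  refine ⟨1, one_pos, ?_⟩
  intro ys hys _ η hη
  obtain ⟨hanti, hpos, htend, hcase⟩ := hys
  set u : ℕ → ℝ := fun k => ys k ^ ((1:ℝ)/(n:ℝ)) with hu
  have hueq : ∀ k, u k = ys k ^ ((1:ℝ)/(n:ℝ)) := fun k => rfl
  have hupos : ∀ k, 0 < u k := fun k => Real.rpow_pos_of_pos (hpos k) _
  have hun : ∀ k, (u k)^n = ys k := by
    intro k
    rw [hueq k, ← Real.rpow_natCast (ys k ^ ((1:ℝ)/(n:ℝ))) n, ← Real.rpow_mul (hpos k).le,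
      one_div_mul_cancel hnne, Real.rpow_one]
  have hudec : ∀ k, u (k+1) < u k := fun k =>
    Real.rpow_lt_rpow (hpos (k+1)).le (hanti (Nat.lt_succ_self k))
      (one_div_pos.mpr hnpos)
  set N := p + 2 + n * ⌈η⌉₊ with hN
  obtain ⟨C, hC, δ, hδpos, hflat⟩ := hinf N
  set c₁ := (2/3)*(n:ℝ)^2/((p:ℝ)+1) with hc₁
  have hc₁pos : 0 < c₁ := by
    rw [hc₁]
    exact div_pos (by nlinarith [hnsq]) (by positivity)
  set D := 4*(n:ℝ)^2*C with hD
  have hDpos : 0 < D := by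
    rw [hD]
    exact mul_pos (by nlinarith [hnsq]) hC
  set θ' := min (min δ₀ (δ/2)) (c₁/(2*D)) with hθ'
  have hθ'pos : 0 < θ' := lt_min (lt_min hδ₀pos (by linarith))
    (div_pos hc₁pos (by linarith))
  have hθ'δ₀ : θ' ≤ δ₀ := le_trans (min_le_left _ _) (min_le_left _ _)
  have hθ'1 : θ' ≤ 1 := le_trans hθ'δ₀ hδ₀1
  have hθ'δ : θ' < δ :=
    lt_of_le_of_lt (le_trans (min_le_left _ _) (min_le_right _ _)) (by linarith)
  have hθ'c : θ' ≤ c₁/(2*D) := min_le_right _ _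
  have hev : ∀ᶠ k in atTop, ys k < θ'^n :=
    Filter.Tendsto.eventually_lt_const (pow_pos hθ'pos n) htend
  obtain ⟨K, hK⟩ := Filter.eventually_atTop.mp hev
  have huθ : ∀ k, K ≤ k → u k ≤ θ' := by
    intro k hk
    have h1 : ys k ≤ θ'^n := (hK k hk).le
    have h2 : u k ≤ (θ'^n : ℝ) ^ ((1:ℝ)/(n:ℝ)) := by
      rw [hueq k]
      exact Real.rpow_le_rpow (hpos k).le h1 (by positivity)
    have h3 : ((θ'^n : ℝ)) ^ ((1:ℝ)/(n:ℝ)) = θ' := by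
      rw [← Real.rpow_natCast θ' n, ← Real.rpow_mul hθ'pos.le, mul_one_div,
        div_self hnne, Real.rpow_one]
    rw [h3] at h2; exact h2
  have hflatk : ∀ k, K ≤ k →
      |FA n p gm gt (u k) - FA n p gm gt (u (k+1))| ≤ D * (u k)^(N+1) := by
    intro k hk
    have huk := huθ k hk
    have huk1 := huθ (k+1) (by omega)
    have hukpos := hupos k
    have huk1pos := hupos (k+1)
    have hflatA := FA_FB_flat n p N gm habsgm gt δ₀ C δ hδ₀pos hC.le hcontA hcontB hd hd'
      hflat (u k) hukpos.le (le_trans huk hθ'δ₀) (le_trans huk hθ'1)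
      (lt_of_le_of_lt huk hθ'δ)
    have hflatA1 := FA_FB_flat n p N gm habsgm gt δ₀ C δ hδ₀pos hC.le hcontA hcontB hd hd'
      hflat (u (k+1)) huk1pos.le (le_trans huk1 hθ'δ₀) (le_trans huk1 hθ'1)
      (lt_of_le_of_lt huk1 hθ'δ)
    rcases hcase with hc | hc
    · have hsdi := hc k
      have heq := SDI_eq n m p hmp gm hgm2 hpo gt δ₀ hcontA (ys k) (ys (k+1))
        (u k) (u (k+1)) hukpos.le huk1pos.le (le_trans huk hθ'δ₀) (le_trans huk1 hθ'δ₀)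
        rfl rfl
      rw [heq] at hsdi
      rcases mul_eq_zero.mp hsdi with h | h
      · exact absurd h hgmne
      · have hBA : FB n p gm gt (u k) = FA n p gm gt (u (k+1)) := sub_eq_zero.mp h
        rw [← hBA, hD]
        exact hflatA
    · have hsdi := hc k
      have heq := SDI_eq n m p hmp gm hgm2 hpo gt δ₀ hcontA (ys (k+1)) (ys k)
        (u (k+1)) (u k) huk1pos.le hukpos.le (le_trans huk1 hθ'δ₀) (le_trans huk hθ'δ₀)
        rfl rfl
      rw [heq] at hsdi
      rcases mul_eq_zero.mp hsdi with h | h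
      · exact absurd h hgmne
      · have hBA : FB n p gm gt (u (k+1)) = FA n p gm gt (u k) := sub_eq_zero.mp h
        rw [← hBA]
        calc |FB n p gm gt (u (k+1)) - FA n p gm gt (u (k+1))|
            = |FA n p gm gt (u (k+1)) - FB n p gm gt (u (k+1))| := abs_sub_comm _ _
          _ ≤ 4*(n:ℝ)^2*C * (u (k+1))^(N+1) := hflatA1
          _ ≤ D * (u k)^(N+1) := by
              rw [hD]
              exact mul_le_mul_of_nonneg_left
                (pow_le_pow_left₀ huk1pos.le (hudec k).le _) (by positivity)
  have hDsmall : ∀ k, K ≤ k → D * (u k)^(N+1) ≤ (c₁/2) * (u k)^(p+1) := by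
    intro k hk
    have huk := huθ k hk
    have hu1 : u k ≤ 1 := le_trans huk hθ'1
    have h1 : (u k)^(N+1) ≤ (u k)^(p+2) := pow_le_pow_of_le_one (hupos k).le hu1 (by omega)
    have h3 : u k ≤ c₁/(2*D) := le_trans huk hθ'c
    calc D * (u k)^(N+1) ≤ D * (u k)^(p+2) := mul_le_mul_of_nonneg_left h1 hDpos.le
      _ = D * u k * (u k)^(p+1) := by ring
      _ ≤ D * (c₁/(2*D)) * (u k)^(p+1) := by
          apply mul_le_mul_of_nonneg_right (mul_le_mul_of_nonneg_left h3 hDpos.le)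
            (pow_nonneg (hupos k).le _)
      _ = (c₁/2) * (u k)^(p+1) := by field_simp
  have hratio : ∀ k, K ≤ k → u k / (6*((p:ℝ)+1)) ≤ u (k+1) := by
    intro k hk
    have hfk := hflatk k hk
    have hlow1 := FA_lower n p gm gt δ₀ hδ₀pos hcontA hd (u k) (hupos k).le
      (le_trans (huθ k hk) hθ'δ₀)
    have hup1 := FA_upper n p gm gt δ₀ hδ₀pos hcontA hd (u (k+1)) (hupos (k+1)).le
      (le_trans (huθ (k+1) (by omega)) hθ'δ₀)
    have hds := hDsmall k hk
    have h4 : FA n p gm gt (u k) - FA n p gm gt (u (k+1)) ≤ D * (u k)^(N+1) :=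
      le_trans (le_abs_self _) hfk
    have h5 : (c₁/2) * (u k)^(p+1) ≤ FA n p gm gt (u (k+1)) := by
      linarith [hlow1, h4, hds]
    have h6 : (c₁/2) * (u k)^(p+1) ≤ 2*(n:ℝ)^2 * (u (k+1))^(p+1) := le_trans h5 hup1
    have h7 : (u k)^(p+1) / (6*((p:ℝ)+1)) ≤ (u (k+1))^(p+1) := by
      have hce : c₁/2 = 2*(n:ℝ)^2 / (6*((p:ℝ)+1)) := by
        rw [hc₁]
        have hp1ne : ((p:ℝ)+1) ≠ 0 := by positivity
        field_simp
        ring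
      rw [hce] at h6
      have h8 : 2*(n:ℝ)^2 * ((u k)^(p+1)/(6*((p:ℝ)+1))) ≤ 2*(n:ℝ)^2 * (u (k+1))^(p+1) := by
        calc 2*(n:ℝ)^2 * ((u k)^(p+1)/(6*((p:ℝ)+1)))
            = 2*(n:ℝ)^2 / (6*((p:ℝ)+1)) * (u k)^(p+1) := by ring
          _ ≤ _ := h6
      exact le_of_mul_le_mul_left h8 (by nlinarith [hnsq])
    by_contra hcon
    push_neg at hcon
    have hppos : (0:ℝ) ≤ (p:ℝ) := Nat.cast_nonneg p
    have h9 : (u (k+1))^(p+1) < (u k / (6*((p:ℝ)+1)))^(p+1) :=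
      pow_lt_pow_left₀ hcon (hupos (k+1)).le (by omega)
    rw [div_pow] at h9
    have h10 : (6*((p:ℝ)+1)) ≤ (6*((p:ℝ)+1))^(p+1) :=
      le_self_pow₀ (by linarith) (by omega)
    have h11 : (u k)^(p+1) / (6*((p:ℝ)+1))^(p+1) ≤ (u k)^(p+1) / (6*((p:ℝ)+1)) :=
      div_le_div_of_nonneg_left (pow_nonneg (hupos k).le _) (by linarith) h10
    linarith [h7, h9, h11]
  have hqpos : (0:ℝ) < 6*((p:ℝ)+1) := by positivity
  have hc2q : (0:ℝ) < (2/3)*(n:ℝ)^2/((6*((p:ℝ)+1))^p) :=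
    div_pos (by nlinarith [hnsq]) (pow_pos hqpos p)
  set c₃ := D / ((2/3)*(n:ℝ)^2/((6*((p:ℝ)+1))^p)) with hc₃
  have hc₃pos : 0 < c₃ := div_pos hDpos hc2q
  have hgap : ∀ k, K ≤ k → u k - u (k+1) ≤ c₃ * (u k)^(N+1-p) := by
    intro k hk
    have h3 := FA_diff_lower n p gm gt δ₀ hδ₀pos hcontA hd (u (k+1)) (u k)
      (hupos _).le (hudec k).le (le_trans (huθ k hk) hθ'δ₀)
    have hkey' : FA n p gm gt (u k) - FA n p gm gt (u (k+1)) ≤ D * (u k)^(N+1) :=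
      le_trans (le_abs_self _) (hflatk k hk)
    have hrq := hratio k hk
    have hle : (u k / (6*((p:ℝ)+1)))^p ≤ (u (k+1))^p :=
      pow_le_pow_left₀ (div_nonneg (hupos k).le hqpos.le) hrq p
    rw [div_pow] at hle
    have hgapnn : 0 ≤ u k - u (k+1) := by linarith [hudec k]
    have h4 : (2/3)*(n:ℝ)^2 * ((u k)^p/(6*((p:ℝ)+1))^p) * (u k - u (k+1))
        ≤ D * (u k)^(N+1) := by
      have hA : (2/3)*(n:ℝ)^2 * ((u k)^p/(6*((p:ℝ)+1))^p) * (u k - u (k+1))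
          ≤ (2/3)*(n:ℝ)^2 * (u (k+1))^p * (u k - u (k+1)) := by
        apply mul_le_mul_of_nonneg_right ?_ hgapnn
        exact mul_le_mul_of_nonneg_left hle (by positivity)
      linarith [h3, hkey', hA]
    have hsplit : (u k)^(N+1) = (u k)^(N+1-p) * (u k)^p := by
      rw [← pow_add]; congr 1; omega
    have h5 : ((2/3)*(n:ℝ)^2/(6*((p:ℝ)+1))^p) * (u k - u (k+1)) * (u k)^p
        ≤ (D * (u k)^(N+1-p)) * (u k)^p := by
      have e1 : (2/3)*(n:ℝ)^2 * ((u k)^p/(6*((p:ℝ)+1))^p) * (u k - u (k+1))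
          = ((2/3)*(n:ℝ)^2/(6*((p:ℝ)+1))^p) * (u k - u (k+1)) * (u k)^p := by ring
      have e2 : D * ((u k)^(N+1-p) * (u k)^p) = (D * (u k)^(N+1-p)) * (u k)^p := by ring
      rw [hsplit] at h4
      linarith [h4, e1.ge, e1.le, e2.ge, e2.le]
    have h6 : ((2/3)*(n:ℝ)^2/(6*((p:ℝ)+1))^p) * (u k - u (k+1)) ≤ D * (u k)^(N+1-p) :=
      le_of_mul_le_mul_right h5 (pow_pos (hupos k) p)
    have hcpos : (0:ℝ) < (2/3)*(n:ℝ)^2/(6*((p:ℝ)+1))^p := hc2q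
    rw [hc₃, div_mul_eq_mul_div, le_div_iff₀ hcpos]
    calc (u k - u (k+1)) * ((2/3)*(n:ℝ)^2/(6*((p:ℝ)+1))^p)
        = ((2/3)*(n:ℝ)^2/(6*((p:ℝ)+1))^p) * (u k - u (k+1)) := by ring
      _ ≤ D * (u k)^(N+1-p) := h6
  refine ⟨(n:ℝ) * c₃, mul_pos hnpos hc₃pos, K, ?_⟩
  intro k hk
  have huk := huθ k hk
  have hu1 : u k ≤ 1 := le_trans huk hθ'1
  have h8 : ys k - ys (k+1) ≤ (n:ℝ) * (u k)^(n-1) * (u k - u (k+1)) := by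
    rw [← hun k, ← hun (k+1)]
    exact pow_sub_pow_le_aux (u k) (u (k+1)) (hupos (k+1)).le (hudec k).le n
  have h9 := hgap k hk
  have h10 : (n:ℝ) * (u k)^(n-1) * (u k - u (k+1))
      ≤ (n:ℝ) * (u k)^(n-1) * (c₃ * (u k)^(N+1-p)) :=
    mul_le_mul_of_nonneg_left h9
      (mul_nonneg (by positivity) (pow_nonneg (hupos k).le _))
  set M := (n-1) + (N+1-p) with hM
  have h11 : (n:ℝ) * (u k)^(n-1) * (c₃ * (u k)^(N+1-p)) = ((n:ℝ)*c₃) * (u k)^M := by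
    rw [hM, pow_add]; ring
  have h12 : (u k)^M = ys k ^ ((M:ℝ)/(n:ℝ)) := by
    rw [hueq k, ← Real.rpow_natCast (ys k ^ ((1:ℝ)/(n:ℝ))) M, ← Real.rpow_mul (hpos k).le]
    congr 1
    ring
  have hyk1 : ys k ≤ 1 := by
    rw [← hun k]; exact pow_le_one₀ (hupos k).le hu1
  have hηM : η ≤ (M:ℝ)/(n:ℝ) := by
    rw [le_div_iff₀ (by linarith : (0:ℝ) < (n:ℝ))]
    have hceil : η ≤ (⌈η⌉₊ : ℝ) := Nat.le_ceil η
    have h1 : M = n + 2 + n * ⌈η⌉₊ := by rw [hM, hN]; omega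
    rw [h1]
    push_cast
    nlinarith [hceil, hnR]
  have h13 : ys k ^ ((M:ℝ)/(n:ℝ)) ≤ ys k ^ η :=
    Real.rpow_le_rpow_of_exponent_ge (hpos k) hyk1 hηM
  calc ys k - ys (k+1) ≤ (n:ℝ) * (u k)^(n-1) * (u k - u (k+1)) := h8
    _ ≤ (n:ℝ) * (u k)^(n-1) * (c₃ * (u k)^(N+1-p)) := h10
    _ = ((n:ℝ)*c₃) * (u k)^M := h11
    _ = ((n:ℝ)*c₃) * ys k ^ ((M:ℝ)/(n:ℝ)) := by rw [h12]
    _ ≤ ((n:ℝ)*c₃) * ys k ^ η :=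
        mul_le_mul_of_nonneg_left h13 (mul_pos hnpos hc₃pos).le
end

section
/- Let (y_k)_{k≥0} be a strictly decreasing sequence of positive real numbers converging to 0, let η > 1, and assume there exists ρ ≥ 1 with (1/ρ) · y_k^η ≤ y_k − y_{k+1} ≤ ρ · y_k^η for all k ≥ 0. Then for S = {y_k : k ≥ 0} ⊂ ℝ one has lim_{ε→0⁺} log|S_ε| / log ε = 1/η; i.e., the Minkowski dimension of S equals (η−1)/η. -/
/-!
Put `δ = ε ^ (1/η)`. By convexity of `t ↦ t ^ (1-η)`, the lower comparability makes `y_k ^ (1-η)`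
increase by at least `(η-1)/ρ` at every step, so `N ≤ ρ/(η-1) · y_N ^ (1-η)`. Since
`y_{k+1}/y_k → 1`, there is an index `N` with `y_N ≍ δ` and `ρ y_N ^ η < 2ε`. All gaps after `N`
are then shorter than `2ε`, so `S_ε ⊇ (0, y_N)`; and `S_ε` is covered by `(-ε, y_N + ε)` together
with the `N` intervals of length `2ε` around `y_0, …, y_{N-1}`, of total length
`≲ δ + ε · δ ^ (1-η) ≍ δ`. Hence `|S_ε| ≍ ε ^ (1/η)`, and taking logarithms gives the limit.
-/

open MeasureTheory Set Filter Topology Metric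

theorem one_add_mul_sub_one_le_rpow_of_nonpos {r p : ℝ} (hr : 0 < r) (hp : p ≤ 0) :
    1 + p * (r - 1) ≤ r ^ p := by
  rw [Real.rpow_def_of_pos hr]
  nlinarith [Real.add_one_le_exp (Real.log r * p), Real.log_le_sub_one_of_pos hr]

theorem mul_sub_div_rpow_le_sub_rpow_one_sub {a b η : ℝ} (ha : 0 < a) (hb : 0 < b)
    (hη : 1 ≤ η) : (η - 1) * (a - b) / a ^ η ≤ b ^ (1 - η) - a ^ (1 - η) := by
  have hbern := one_add_mul_sub_one_le_rpow_of_nonpos (div_pos hb ha) (by linarith : 1 - η ≤ 0)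
  have haη := Real.rpow_pos_of_pos ha η
  rw [Real.div_rpow hb.le ha.le, Real.rpow_sub ha, Real.rpow_one] at hbern
  rw [Real.rpow_sub ha, Real.rpow_one, le_sub_iff_add_le, ← sub_nonneg]
  have key : b ^ (1 - η) - ((η - 1) * (a - b) / a ^ η + a / a ^ η)
      = a / a ^ η * (b ^ (1 - η) / (a / a ^ η) - (1 + (1 - η) * (b / a - 1))) := by
    field_simp
    ring
  rw [key]
  exact mul_nonneg (by positivity) (sub_nonneg.2 hbern)

theorem rpow_mul_rpow_one_sub_le {y δ b η : ℝ} (hδ : 0 < δ) (hb : 0 < b) (hy : b * δ ≤ y)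
    (hη : 1 ≤ η) : δ ^ η * y ^ (1 - η) ≤ b ^ (1 - η) * δ :=
  calc δ ^ η * y ^ (1 - η) ≤ δ ^ η * (b * δ) ^ (1 - η) :=
        mul_le_mul_of_nonneg_left
          (Real.rpow_le_rpow_of_nonpos (by positivity) hy (by linarith)) (by positivity)
    _ = b ^ (1 - η) * δ := by
        rw [Real.mul_rpow hb.le hδ.le, mul_left_comm, ← Real.rpow_add hδ]
        norm_num

theorem exists_le_and_succ_lt_of_eventually_lt {ys : ℕ → ℝ} {x : ℝ} {N : ℕ}
    (hev : ∀ᶠ k in atTop, ys k < x) (hN : x ≤ ys N) :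
    ∃ m ≥ N, x ≤ ys m ∧ ys (m + 1) < x := by
  obtain ⟨K, hK⟩ := eventually_atTop.1 hev
  obtain ⟨m, hm, hm1⟩ := Nat.exists_not_and_succ_of_not_zero_of_exists
    (p := fun m => ys (N + m) < x) (by simpa using hN) ⟨K, hK _ (by omega)⟩
  exact ⟨N + m, by omega, not_lt.1 hm, hm1⟩

section ThickeningOfSequence

variable {ys : ℕ → ℝ} {η ρ ε : ℝ} {N : ℕ}

theorem rpow_one_sub_add_le_rpow_one_sub (hpos : ∀ k, 0 < ys k) (hη : 1 ≤ η)
    (hgap : ∀ k, 1 / ρ * ys k ^ η ≤ ys k - ys (k + 1)) (N : ℕ) :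
    ys 0 ^ (1 - η) + N * ((η - 1) / ρ) ≤ ys N ^ (1 - η) := by
  induction N with
  | zero => simp
  | succ n ih =>
    have hstep := mul_sub_div_rpow_le_sub_rpow_one_sub (hpos n) (hpos (n + 1)) hη
    have hincr : (η - 1) / ρ ≤ (η - 1) * (ys n - ys (n + 1)) / ys n ^ η := by
      rw [le_div_iff₀ (Real.rpow_pos_of_pos (hpos n) η)]
      calc (η - 1) / ρ * ys n ^ η = (η - 1) * (1 / ρ * ys n ^ η) := by ring
        _ ≤ (η - 1) * (ys n - ys (n + 1)) := mul_le_mul_of_nonneg_left (hgap n) (by linarith)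
    push_cast
    linarith

theorem eventually_half_le_succ (hpos : ∀ k, 0 < ys k) (hlim : Tendsto ys atTop (𝓝 0))
    (hη : 1 < η) (hgap : ∀ k, ys k - ys (k + 1) ≤ ρ * ys k ^ η) :
    ∀ᶠ k in atTop, ys k / 2 ≤ ys (k + 1) := by
  have hsmall : Tendsto (fun k => ρ * ys k ^ (η - 1)) atTop (𝓝 0) := by
    simpa [Real.zero_rpow (by linarith : η - 1 ≠ 0)] using
      (hlim.rpow_const (p := η - 1) (Or.inr (by linarith))).const_mul ρ
  filter_upwards [hsmall.eventually (ge_mem_nhds (by norm_num : (0 : ℝ) < 1 / 2))] with k hk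
  have hsplit : ρ * ys k ^ η = ρ * ys k ^ (η - 1) * ys k := by
    rw [Real.rpow_sub_one (hpos k).ne', mul_assoc, div_mul_cancel₀ _ (hpos k).ne']
  linarith [hgap k, mul_le_mul_of_nonneg_right hk (hpos k).le]

theorem Ioo_subset_thickening_range (hlim : Tendsto ys atTop (𝓝 0))
    (hgap : ∀ k ≥ N, ys k - ys (k + 1) < 2 * ε) : Ioo 0 (ys N) ⊆ thickening ε (range ys) := by
  rintro x ⟨hx0, hxN⟩
  obtain ⟨m, hmN, habove, hbelow⟩ :=
    exists_le_and_succ_lt_of_eventually_lt (hlim.eventually (gt_mem_nhds hx0)) hxN.le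
  have hgapm := hgap m hmN
  rw [mem_thickening_iff]
  by_cases h : x - ys (m + 1) < ε
  · exact ⟨_, mem_range_self _, by rwa [Real.dist_eq, abs_of_pos (by linarith)]⟩
  · exact ⟨_, mem_range_self m, by rw [Real.dist_eq, abs_of_nonpos (by linarith)]; linarith⟩

theorem volume_thickening_range_le (hanti : Antitone ys) (hnonneg : ∀ k, 0 ≤ ys k)
    (hε : 0 ≤ ε) (N : ℕ) :
    volume (thickening ε (range ys)) ≤ ENNReal.ofReal (ys N + 2 * ε * (N + 1)) := by
  have hcover : thickening ε (range ys) ⊆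
      Ioo (-ε) (ys N + ε) ∪ ⋃ k ∈ Finset.range N, ball (ys k) ε := by
    intro x hx
    obtain ⟨_, ⟨k, rfl⟩, hk⟩ := mem_thickening_iff.1 hx
    rcases lt_or_ge k N with hkN | hkN
    · exact Or.inr (mem_biUnion (Finset.mem_range.2 hkN) hk)
    · rw [Real.dist_eq, abs_lt] at hk
      exact Or.inl ⟨by linarith [hnonneg k], by linarith [hanti hkN]⟩
  calc volume (thickening ε (range ys))
      ≤ volume (Ioo (-ε) (ys N + ε)) + ∑ k ∈ Finset.range N, volume (ball (ys k) ε) :=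
        (measure_mono hcover).trans
          ((measure_union_le _ _).trans (add_le_add le_rfl (measure_biUnion_finset_le _ _)))
    _ = ENNReal.ofReal (ys N + 2 * ε) + ENNReal.ofReal (N * (2 * ε)) := by
        simp only [Real.volume_Ioo, Real.volume_ball, Finset.sum_const, Finset.card_range,
          nsmul_eq_mul, ENNReal.ofReal_mul (Nat.cast_nonneg N), ENNReal.ofReal_natCast]
        ring_nf
    _ = ENNReal.ofReal (ys N + 2 * ε * (N + 1)) := by
        rw [← ENNReal.ofReal_add (by linarith [hnonneg N]) (by positivity)]
        ring_nf

theorem toReal_volume_thickening_range_le (hpos : ∀ k, 0 < ys k) (hanti : Antitone ys)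
    (hη : 1 < η) (hρ : 0 < ρ) (hgap : ∀ k, 1 / ρ * ys k ^ η ≤ ys k - ys (k + 1)) (hε : 0 ≤ ε)
    (N : ℕ) :
    (volume (thickening ε (range ys))).toReal
      ≤ ys N + 2 * ε + 2 * ε * (ρ / (η - 1) * ys N ^ (1 - η)) := by
  have hN : (N : ℝ) ≤ ρ / (η - 1) * ys N ^ (1 - η) := by
    have htel := rpow_one_sub_add_le_rpow_one_sub hpos hη.le hgap N
    have hy0 := Real.rpow_pos_of_pos (hpos 0) (1 - η)
    have hη1 : η - 1 ≠ 0 := (sub_pos.2 hη).ne'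
    have hηρ : 0 < (η - 1) / ρ := div_pos (sub_pos.2 hη) hρ
    calc (N : ℝ) = N * ((η - 1) / ρ) / ((η - 1) / ρ) := by field_simp
      _ ≤ ys N ^ (1 - η) / ((η - 1) / ρ) := by gcongr; linarith
      _ = ρ / (η - 1) * ys N ^ (1 - η) := by field_simp
  have hvol := ENNReal.toReal_le_of_le_ofReal (add_nonneg (hpos N).le (by positivity))
    (volume_thickening_range_le hanti (fun k => (hpos k).le) hε N)
  linarith [mul_le_mul_of_nonneg_left hN (by positivity : (0 : ℝ) ≤ 2 * ε)]

theorem le_toReal_volume_thickening_range (hanti : Antitone ys) (hnonneg : ∀ k, 0 ≤ ys k)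
    (hlim : Tendsto ys atTop (𝓝 0)) (hgap : ∀ k ≥ N, ys k - ys (k + 1) < 2 * ε) :
    ys N ≤ (volume (thickening ε (range ys))).toReal := by
  have hε : 0 ≤ ε := by linarith [hgap N le_rfl, hanti N.le_succ]
  have hfin := ne_top_of_le_ne_top ENNReal.ofReal_ne_top
    (volume_thickening_range_le hanti hnonneg hε N)
  have hsub := measure_mono (μ := volume) (Ioo_subset_thickening_range hlim hgap)
  rw [Real.volume_Ioo, sub_zero] at hsub
  simpa [ENNReal.toReal_ofReal (hnonneg N)] using ENNReal.toReal_mono hfin hsub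

theorem eventually_volume_thickening_range_bounds (hpos : ∀ k, 0 < ys k) (hanti : Antitone ys)
    (hlim : Tendsto ys atTop (𝓝 0)) (hη : 1 < η) (hρ : 0 < ρ)
    (hcomp : ∀ k, 1 / ρ * ys k ^ η ≤ ys k - ys (k + 1) ∧ ys k - ys (k + 1) ≤ ρ * ys k ^ η) :
    ∃ c C : ℝ, 0 < c ∧ ∀ᶠ ε in 𝓝[>] 0,
      c * ε ^ (1 / η) ≤ (volume (thickening ε (range ys))).toReal ∧
      (volume (thickening ε (range ys))).toReal ≤ C * ε ^ (1 / η) := by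
  have hη0 : η ≠ 0 := by positivity
  -- `a` is chosen so that `y_N < a · ε ^ (1/η)` means exactly `ρ y_N ^ η < 2ε`.
  set a := (2 / ρ) ^ (1 / η)
  have ha : 0 < a := by positivity
  obtain ⟨k₀, hk₀⟩ := eventually_atTop.1 (eventually_half_le_succ hpos hlim hη fun k => (hcomp k).2)
  have hscale : Tendsto (fun ε : ℝ => a * ε ^ (1 / η)) (𝓝[>] 0) (𝓝 0) := by
    simpa [Real.zero_rpow (inv_ne_zero hη0)] using
      ((tendsto_id.mono_left nhdsWithin_le_nhds :
        Tendsto (fun ε : ℝ => ε) (𝓝[>] 0) (𝓝 0)).rpow_const (p := 1 / η)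
        (Or.inr (by positivity))).const_mul a
  refine ⟨a / 2, a + 2 + 2 * (ρ / (η - 1) * (a / 2) ^ (1 - η)), by positivity, ?_⟩
  filter_upwards [hscale.eventually (ge_mem_nhds (hpos k₀)), Ioo_mem_nhdsGT one_pos]
    with ε hεk₀ ⟨hε, hε1⟩
  set δ := ε ^ (1 / η)
  have hδ : 0 < δ := by positivity
  have hδη : δ ^ η = ε := by
    rw [← Real.rpow_mul hε.le, one_div_mul_cancel hη0, Real.rpow_one]
  obtain ⟨N, hNlow, hNup⟩ : ∃ N, a * δ / 2 ≤ ys N ∧ ys N < a * δ := by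
    obtain ⟨m, hm, hle, hlt⟩ := exists_le_and_succ_lt_of_eventually_lt
      (hlim.eventually (gt_mem_nhds (by positivity : 0 < a * δ))) hεk₀
    exact ⟨m + 1, by linarith [hk₀ m hm], hlt⟩
  have hgap : ∀ k ≥ N, ys k - ys (k + 1) < 2 * ε := by
    have haδ : (a * δ) ^ η = 2 / ρ * ε := by
      rw [Real.mul_rpow ha.le hδ.le, hδη, ← Real.rpow_mul (by positivity),
        one_div_mul_cancel hη0, Real.rpow_one]
    intro k hk
    calc ys k - ys (k + 1) ≤ ρ * ys k ^ η := (hcomp k).2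
      _ ≤ ρ * ys N ^ η := by gcongr; exacts [(hpos k).le, hanti hk]
      _ < ρ * (a * δ) ^ η := by gcongr; exact (hpos N).le
      _ = 2 * ε := by rw [haδ]; field_simp
  have hlow := le_toReal_volume_thickening_range hanti (fun k => (hpos k).le) hlim hgap
  have hup := toReal_volume_thickening_range_le hpos hanti hη hρ (fun k => (hcomp k).1) hε.le N
  have hεδ : ε ≤ δ := by
    have hδ1 : δ ≤ 1 := Real.rpow_le_one hε.le hε1.le (by positivity)
    simpa [hδη] using Real.rpow_le_rpow_of_exponent_ge hδ hδ1 hη.le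
  have hcount := rpow_mul_rpow_one_sub_le hδ (half_pos ha) (by linarith) hη.le (y := ys N)
  rw [hδη] at hcount
  have hK : 0 ≤ ρ / (η - 1) := div_nonneg hρ.le (by linarith)
  constructor
  · linarith
  · linarith [mul_le_mul_of_nonneg_left hcount hK]

end ThickeningOfSequence

theorem tendsto_log_div_log_of_le_of_le {f : ℝ → ℝ} {a c C : ℝ} (hc : 0 < c)
    (hf : ∀ᶠ ε in 𝓝[>] 0, c * ε ^ a ≤ f ε ∧ f ε ≤ C * ε ^ a) :
    Tendsto (fun ε => Real.log (f ε) / Real.log ε) (𝓝[>] 0) (𝓝 a) := by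
  set g := fun ε => Real.log (f ε / ε ^ a)
  have hf' := hf.and (Ioo_mem_nhdsGT one_pos)
  have hg : ∀ᶠ ε in 𝓝[>] 0, Real.log c ≤ g ε ∧ g ε ≤ Real.log C := by
    filter_upwards [hf'] with ε ⟨⟨hlow, hup⟩, hε, _⟩
    have hεa := Real.rpow_pos_of_pos hε a
    exact ⟨Real.log_le_log hc ((le_div_iff₀ hεa).2 hlow),
      Real.log_le_log (div_pos ((mul_pos hc hεa).trans_le hlow) hεa) ((div_le_iff₀ hεa).2 hup)⟩
  have hlog_inv : Tendsto (fun ε => (Real.log ε)⁻¹) (𝓝[>] 0) (𝓝 0) :=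
    tendsto_inv_atBot_zero.comp Real.tendsto_log_nhdsGT_zero
  have hlim := (bdd_le_mul_tendsto_zero (hg.mono fun _ h => h.1) (hg.mono fun _ h => h.2)
    hlog_inv).const_add a
  rw [add_zero] at hlim
  refine hlim.congr' ?_
  filter_upwards [hf'] with ε ⟨⟨hlow, _⟩, hε, hε1⟩
  have hεa := Real.rpow_pos_of_pos hε a
  have hfpos : 0 < f ε := (mul_pos hc hεa).trans_le hlow
  have hlogε : Real.log ε ≠ 0 := (Real.log_neg hε hε1).ne
  simp only [g]
  rw [Real.log_div hfpos.ne' hεa.ne', Real.log_rpow hε]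
  field_simp
  ring

/-- If `y_k − y_{k+1} ≍ y_k^η` with `η > 1`, then the Minkowski dimension of
`S = {y_k}` equals `(η−1)/η`; i.e. `log|S_ε| / log ε → 1/η` as `ε → 0⁺`. -/
theorem minkowski_dimension_of_comparable_sequence
    (ys : ℕ → ℝ) (η ρ : ℝ)
    (hpos : ∀ k, 0 < ys k) (hanti : StrictAnti ys)
    (hlim : Filter.Tendsto ys Filter.atTop (nhds 0))
    (hη : 1 < η) (hρ : 1 ≤ ρ)
    (hcomp : ∀ k : ℕ,
      (1/ρ) * ys k ^ η ≤ ys k - ys (k+1) ∧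
      ys k - ys (k+1) ≤ ρ * ys k ^ η) :
    Filter.Tendsto
      (fun ε : ℝ =>
        Real.log (volume (Metric.thickening ε (Set.range ys))).toReal /
          Real.log ε)
      (nhdsWithin 0 (Set.Ioi 0)) (nhds (1/η)) := by
  obtain ⟨c, C, hc, hbounds⟩ := eventually_volume_thickening_range_bounds hpos hanti.antitone
    hlim hη (zero_lt_one.trans_le hρ) hcomp
  exact tendsto_log_div_log_of_le_of_le hc hbounds
end

section
/- Let (y_k)_{k≥0} be a strictly decreasing sequence of positive real numbers converging to 0, let η > 1, and assume there exists ρ ≥ 1 with (1/ρ) · y_k^η ≤ y_k − y_{k+1} ≤ ρ · y_k^η for all k ≥ 0. Then lim_{k→∞} (ln k) / (−ln(y_k − y_{k+1})) = (η−1)/η. -/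
/-!
Put `z k = ys k ^ (1 - η)`. By the mean value theorem, `z (k+1) - z k` is comparable to
`(η - 1) (ys k - ys (k+1)) ys k ^ (-η)`, so it stays between `(η - 1) / ρ` and a constant
(once `ys (k+1) ≥ ys k / 2`), and `z n ≍ n`. Taking logarithms,
`-log (ys n - ys (n+1)) = η (-log (ys n)) + O(1) = η / (η - 1) * log n + O(1)`,
and dividing by `log n` gives the limit.
-/

open Filter Topology Asymptotics Real

theorem Real.rpow_sub_rpow_mem_Icc_of_nonpos {a b p : ℝ} (hb : 0 < b) (hba : b < a) (hp : p ≤ 0) :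
    b ^ p - a ^ p ∈ Set.Icc (-p * (a - b) * a ^ (p - 1)) (-p * (a - b) * b ^ (p - 1)) := by
  obtain ⟨c, ⟨hbc, hca⟩, hslope⟩ := exists_hasDerivAt_eq_slope (fun t => t ^ p)
    (fun t => p * t ^ (p - 1)) hba
    (fun t ht => (continuousAt_rpow_const t p (Or.inl (hb.trans_le ht.1).ne')).continuousWithinAt)
    (fun t ht => hasDerivAt_rpow_const (Or.inl (hb.trans ht.1).ne'))
  have hc : 0 < c := hb.trans hbc
  have hmvt : b ^ p - a ^ p = -p * (a - b) * c ^ (p - 1) := by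
    rw [eq_div_iff (sub_ne_zero.mpr hba.ne')] at hslope
    linear_combination hslope
  have hscale : 0 ≤ -p * (a - b) := mul_nonneg (neg_nonneg.mpr hp) (sub_nonneg.mpr hba.le)
  rw [hmvt]
  exact ⟨mul_le_mul_of_nonneg_left (rpow_le_rpow_of_nonpos hc hca.le (by linarith)) hscale,
    mul_le_mul_of_nonneg_left (rpow_le_rpow_of_nonpos hb hbc.le (by linarith)) hscale⟩

theorem Real.abs_log_sub_log_le_log {x y ρ : ℝ} (hx : 0 < x) (hρ : 0 < ρ)
    (hlow : 1 / ρ * x ≤ y) (hup : y ≤ ρ * x) : |log y - log x| ≤ log ρ := by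
  have hy : 0 < y := lt_of_lt_of_le (by positivity) hlow
  have h₁ := log_le_log (by positivity) hlow
  have h₂ := log_le_log hy hup
  rw [log_mul (by positivity) hx.ne', one_div, log_inv] at h₁
  rw [log_mul hρ.ne' hx.ne'] at h₂
  rw [abs_sub_le_iff]
  constructor <;> linarith

theorem add_mul_le_of_le_sub {z : ℕ → ℝ} {a : ℝ} (h : ∀ k, a ≤ z (k + 1) - z k) (n : ℕ) :
    z 0 + a * n ≤ z n := by
  induction n with
  | zero => simp
  | succ n ih => push_cast; linarith [h n]

theorem le_add_mul_of_sub_le {z : ℕ → ℝ} {b : ℝ} (h : ∀ k, z (k + 1) - z k ≤ b) (n : ℕ) :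
    z n ≤ z 0 + b * n := by
  induction n with
  | zero => simp
  | succ n ih => push_cast; linarith [h n]

theorem exists_eventually_le_mul_of_eventually_sub_le {z : ℕ → ℝ} {b : ℝ}
    (h : ∀ᶠ k in atTop, z (k + 1) - z k ≤ b) : ∃ B, ∀ᶠ n in atTop, z n ≤ B * n := by
  obtain ⟨K, hK⟩ := eventually_atTop.mp h
  have hshift := le_add_mul_of_sub_le (z := fun m => z (K + m)) (b := |b|)
    fun m => (hK (K + m) (Nat.le_add_right K m)).trans (le_abs_self b)
  refine ⟨|z K| + |b|, eventually_atTop.mpr ⟨K + 1, fun n hn => ?_⟩⟩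
  obtain ⟨m, rfl⟩ := Nat.exists_eq_add_of_le (Nat.le_of_succ_le hn)
  have hn1 : (1 : ℝ) ≤ (K + m : ℕ) := by exact_mod_cast Nat.one_le_of_lt hn
  have hm : (m : ℝ) ≤ (K + m : ℕ) := by exact_mod_cast Nat.le_add_left m K
  calc z (K + m) ≤ z K + |b| * m := by simpa using hshift m
    _ ≤ |z K| * (K + m : ℕ) + |b| * (K + m : ℕ) := by
        gcongr
        · exact (le_abs_self _).trans (le_mul_of_one_le_right (abs_nonneg _) hn1)
    _ = (|z K| + |b|) * (K + m : ℕ) := by ring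

theorem isBigO_log_sub_log_of_le_mul {z : ℕ → ℝ} {A B : ℝ} (hA : 0 < A)
    (h : ∀ᶠ n in atTop, A * n ≤ z n ∧ z n ≤ B * n) :
    (fun n : ℕ => log (z n) - log n) =O[atTop] (fun _ => (1 : ℝ)) := by
  refine IsBigO.of_bound (max |log A| |log B|) ?_
  filter_upwards [h, eventually_gt_atTop 0] with n ⟨hlow, hup⟩ hn
  have hn : (0 : ℝ) < n := by exact_mod_cast hn
  have hz : 0 < z n := lt_of_lt_of_le (by positivity) hlow
  have hB : 0 < B := pos_of_mul_pos_left (hz.trans_le hup) hn.le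
  have h₁ := log_le_log (by positivity) hlow
  have h₂ := log_le_log hz hup
  rw [log_mul hA.ne' hn.ne'] at h₁
  rw [log_mul hB.ne' hn.ne'] at h₂
  simpa using abs_le_max_abs_abs (a := log A) (b := log (z n) - log n) (c := log B)
    (by linarith) (by linarith)

theorem isBigO_log_sub_log_of_sub_bounds {z : ℕ → ℝ} {a b : ℝ} (ha : 0 < a) (hz : 0 ≤ z 0)
    (hlow : ∀ k, a ≤ z (k + 1) - z k) (hup : ∀ᶠ k in atTop, z (k + 1) - z k ≤ b) :
    (fun n : ℕ => log (z n) - log n) =O[atTop] (fun _ => (1 : ℝ)) := by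
  obtain ⟨B, hB⟩ := exists_eventually_le_mul_of_eventually_sub_le hup
  refine isBigO_log_sub_log_of_le_mul ha (hB.mono fun n hn => ⟨?_, hn⟩)
  linarith [add_mul_le_of_le_sub hlow n]

theorem tendsto_log_div_of_isBigO_sub_mul_log {f : ℕ → ℝ} {c : ℝ} (hc : c ≠ 0)
    (h : (fun n : ℕ => f n - c * log n) =O[atTop] (fun _ => (1 : ℝ))) :
    Tendsto (fun n : ℕ => log n / f n) atTop (𝓝 c⁻¹) := by
  have hsmall : Tendsto (fun n : ℕ => (f n - c * log n) / log n) atTop (𝓝 0) :=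
    (h.trans_isLittleO isLittleO_const_log_atTop.natCast_atTop).tendsto_div_nhds_zero
  have hratio : Tendsto (fun n : ℕ => f n / log n) atTop (𝓝 c) := by
    refine (by simpa using hsmall.const_add c : Tendsto _ _ (𝓝 c)).congr' ?_
    filter_upwards [eventually_gt_atTop 1] with n hn
    have : log n ≠ 0 := (log_pos (by exact_mod_cast hn)).ne'
    field_simp
    ring
  simpa only [inv_div] using hratio.inv₀ hc

section GapSequence

variable {ys : ℕ → ℝ} {η ρ : ℝ}

theorem le_rpow_one_sub_succ_sub (hpos : ∀ k, 0 < ys k) (hanti : StrictAnti ys) (hη : 1 < η)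
    (hρ : 0 < ρ) (hlow : ∀ k, 1 / ρ * ys k ^ η ≤ ys k - ys (k + 1)) (k : ℕ) :
    (η - 1) / ρ ≤ ys (k + 1) ^ (1 - η) - ys k ^ (1 - η) := by
  have hmvt := (rpow_sub_rpow_mem_Icc_of_nonpos (hpos (k + 1)) (hanti k.lt_succ_self)
    (by linarith : 1 - η ≤ 0)).1
  rw [neg_sub, sub_sub_cancel_left] at hmvt
  calc (η - 1) / ρ = (η - 1) * (1 / ρ * ys k ^ η) * ys k ^ (-η) := by
        rw [rpow_neg (hpos k).le]
        field_simp [(rpow_pos_of_pos (hpos k) η).ne']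
    _ ≤ (η - 1) * (ys k - ys (k + 1)) * ys k ^ (-η) :=
        mul_le_mul_of_nonneg_right (mul_le_mul_of_nonneg_left (hlow k) (by linarith))
          (rpow_nonneg (hpos k).le _)
    _ ≤ _ := hmvt

theorem rpow_one_sub_succ_sub_le (hpos : ∀ k, 0 < ys k) (hanti : StrictAnti ys) (hη : 1 < η)
    (hup : ∀ k, ys k - ys (k + 1) ≤ ρ * ys k ^ η) (k : ℕ) :
    ys (k + 1) ^ (1 - η) - ys k ^ (1 - η) ≤ (η - 1) * ρ * (ys k / ys (k + 1)) ^ η := by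
  have hmvt := (rpow_sub_rpow_mem_Icc_of_nonpos (hpos (k + 1)) (hanti k.lt_succ_self)
    (by linarith : 1 - η ≤ 0)).2
  rw [neg_sub, sub_sub_cancel_left] at hmvt
  calc _ ≤ (η - 1) * (ys k - ys (k + 1)) * ys (k + 1) ^ (-η) := hmvt
    _ ≤ (η - 1) * (ρ * ys k ^ η) * ys (k + 1) ^ (-η) :=
        mul_le_mul_of_nonneg_right (mul_le_mul_of_nonneg_left (hup k) (by linarith))
          (rpow_nonneg (hpos (k + 1)).le _)
    _ = (η - 1) * ρ * (ys k / ys (k + 1)) ^ η := by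
        rw [div_rpow (hpos k).le (hpos (k + 1)).le, rpow_neg (hpos (k + 1)).le]
        ring

theorem eventually_div_succ_le_two (hpos : ∀ k, 0 < ys k) (hlim : Tendsto ys atTop (𝓝 0))
    (hη : 1 < η) (hup : ∀ k, ys k - ys (k + 1) ≤ ρ * ys k ^ η) :
    ∀ᶠ k in atTop, ys k / ys (k + 1) ≤ 2 := by
  have hsmall : Tendsto (fun k => ρ * ys k ^ (η - 1)) atTop (𝓝 0) := by
    simpa [zero_rpow (sub_pos.mpr hη).ne'] using
      (hlim.rpow_const (Or.inr (sub_pos.mpr hη).le)).const_mul ρ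
  filter_upwards [hsmall.eventually_le_const (by norm_num : (0 : ℝ) < 1 / 2)] with k hk
  have hstep : ys k - ys (k + 1) ≤ ys k / 2 :=
    calc ys k - ys (k + 1) ≤ ρ * ys k ^ (η - 1) * ys k := by
          rw [mul_assoc, ← rpow_add_one (hpos k).ne', sub_add_cancel]
          exact hup k
      _ ≤ 1 / 2 * ys k := by gcongr; exact (hpos k).le
      _ = ys k / 2 := by ring
  rw [div_le_iff₀ (hpos (k + 1))]
  linarith

theorem isBigO_log_rpow_one_sub_sub_log (hpos : ∀ k, 0 < ys k) (hanti : StrictAnti ys)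
    (hlim : Tendsto ys atTop (𝓝 0)) (hη : 1 < η) (hρ : 0 < ρ)
    (hlow : ∀ k, 1 / ρ * ys k ^ η ≤ ys k - ys (k + 1))
    (hup : ∀ k, ys k - ys (k + 1) ≤ ρ * ys k ^ η) :
    (fun n : ℕ => log (ys n ^ (1 - η)) - log n) =O[atTop] (fun _ => (1 : ℝ)) := by
  refine isBigO_log_sub_log_of_sub_bounds (z := fun n => ys n ^ (1 - η))
    (b := (η - 1) * ρ * 2 ^ η) (div_pos (sub_pos.mpr hη) hρ) (rpow_nonneg (hpos 0).le _)
    (le_rpow_one_sub_succ_sub hpos hanti hη hρ hlow) ?_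
  filter_upwards [eventually_div_succ_le_two hpos hlim hη hup] with k hk
  refine (rpow_one_sub_succ_sub_le hpos hanti hη hup k).trans ?_
  gcongr
  exact (div_pos (hpos k) (hpos (k + 1))).le

theorem isBigO_log_sub_mul_log (hpos : ∀ k, 0 < ys k) (hρ : 0 < ρ)
    (hlow : ∀ k, 1 / ρ * ys k ^ η ≤ ys k - ys (k + 1))
    (hup : ∀ k, ys k - ys (k + 1) ≤ ρ * ys k ^ η) :
    (fun n : ℕ => log (ys n - ys (n + 1)) - η * log (ys n)) =O[atTop] (fun _ => (1 : ℝ)) := by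
  refine IsBigO.of_bound (log ρ) (Eventually.of_forall fun n => ?_)
  simpa [← log_rpow (hpos n)] using
    abs_log_sub_log_le_log (rpow_pos_of_pos (hpos n) η) hρ (hlow n) (hup n)

end GapSequence

/-- Cahen-type formula: if `y_k − y_{k+1} ≍ y_k^η` with `η > 1`, then
`ln k / (−ln(y_k − y_{k+1})) → (η−1)/η`. -/
theorem cahen_formula
    (ys : ℕ → ℝ) (η ρ : ℝ)
    (hpos : ∀ k, 0 < ys k) (hanti : StrictAnti ys)
    (hlim : Filter.Tendsto ys Filter.atTop (nhds 0))
    (hη : 1 < η) (hρ : 1 ≤ ρ)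
    (hcomp : ∀ k : ℕ,
      (1/ρ) * ys k ^ η ≤ ys k - ys (k+1) ∧
      ys k - ys (k+1) ≤ ρ * ys k ^ η) :
    Filter.Tendsto
      (fun k : ℕ => Real.log (k : ℝ) / (-Real.log (ys k - ys (k+1))))
      Filter.atTop (nhds ((η - 1) / η)) := by
  have hρ0 : 0 < ρ := by linarith
  have hlow := fun k => (hcomp k).1
  have hup := fun k => (hcomp k).2
  have hkey : (fun n : ℕ => -log (ys n - ys (n + 1)) - η / (η - 1) * log n) =O[atTop]
      (fun _ => (1 : ℝ)) := by
    refine (((isBigO_log_rpow_one_sub_sub_log hpos hanti hlim hη hρ0 hlow hup).const_mul_left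
      (η / (η - 1))).sub (isBigO_log_sub_mul_log hpos hρ0 hlow hup)).congr_left fun n => ?_
    have : η - 1 ≠ 0 := by linarith
    rw [log_rpow (hpos n)]
    field_simp
    ring
  simpa only [inv_div] using tendsto_log_div_of_isBigO_sub_mul_log (by positivity) hkey
end

section
/- Let (y_k)_{k≥0} be a strictly decreasing sequence of positive real numbers converging to 0, let η > 1, and assume there exists ρ ≥ 1 with (1/ρ) · y_k^η ≤ y_k − y_{k+1} ≤ ρ · y_k^η for all k ≥ 0. Then lim_{k→∞} 1 / (1 − (ln y_k)/(ln k)) = (η−1)/η. -/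
open Filter Topology Asymptotics Real

/-! With `β = η - 1` and `z k = ys k ^ (-β)`, the mean value theorem for `x ↦ x ^ (-β)` turns
`ys k - ys (k+1) ≍ ys k ^ η` into `β / ρ ≤ z (k+1) - z k ≤ β ρ (ys k / ys (k+1)) ^ η`.
As `ys k → 0`, the ratio `ys k / ys (k+1)` is eventually at most `2`, so the increments of `z`
are bounded above and below by positive constants and `z k ≍ k`. Hence `log z k ∼ log k`, that is
`log (ys k) / log k → -1 / β`, and `1 / (1 + 1 / β) = (η - 1) / η`. -/

theorem Real.rpow_neg_sub_rpow_neg_mem_Icc {β a b : ℝ} (hβ : 0 ≤ β) (hb : 0 < b) (hba : b ≤ a) :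
    b ^ (-β) - a ^ (-β) ∈ Set.Icc (β * a ^ (-β - 1) * (a - b)) (β * b ^ (-β - 1) * (a - b)) := by
  rcases hba.eq_or_lt with rfl | hba
  · simp
  obtain ⟨ξ, ⟨hbξ, hξa⟩, hξ⟩ := exists_hasDerivAt_eq_slope (fun x : ℝ ↦ x ^ (-β))
    (fun x ↦ -β * x ^ (-β - 1)) hba
    (fun x hx ↦ (continuousAt_rpow_const x (-β) (Or.inl (hb.trans_le hx.1).ne')).continuousWithinAt)
    (fun x hx ↦ hasDerivAt_rpow_const (Or.inl (hb.trans hx.1).ne'))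
  have hdiff : b ^ (-β) - a ^ (-β) = β * ξ ^ (-β - 1) * (a - b) := by
    rw [eq_div_iff (sub_pos.2 hba).ne'] at hξ
    linarith
  have hexp : -β - 1 ≤ 0 := by linarith
  rw [hdiff]
  constructor
  · gcongr β * ?_ * _
    exact rpow_le_rpow_of_nonpos (hb.trans hbξ) hξa.le hexp
  · gcongr β * ?_ * _
    exact rpow_le_rpow_of_nonpos hb hbξ.le hexp

theorem Asymptotics.IsTheta.log_isEquivalent {α : Type*} {l : Filter α} {f g : α → ℝ}
    (hfg : f =Θ[l] g) (hg : Tendsto g l atTop) :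
    (fun x ↦ log (f x)) ~[l] (fun x ↦ log (g x)) := by
  obtain ⟨C, hC, hfC⟩ := hfg.1.exists_pos
  obtain ⟨c, hc, hgc⟩ := hfg.2.exists_pos
  have hbdd : (fun x ↦ log (f x) - log (g x)) =O[l] (fun _ ↦ (1 : ℝ)) := by
    refine IsBigO.of_bound (|log C| + |log c|) ?_
    filter_upwards [hfC.bound, hgc.bound, hg.eventually_ne_atTop 0] with x hf hg hg0
    have hf0 : f x ≠ 0 := fun h ↦ hg0 (by simpa [h] using hg)
    rw [← log_abs (f x), ← log_abs (g x)]
    have h1 : log |f x| ≤ log C + log |g x| := by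
      rw [← log_mul hC.ne' (abs_ne_zero.2 hg0)]
      exact log_le_log (abs_pos.2 hf0) hf
    have h2 : log |g x| ≤ log c + log |f x| := by
      rw [← log_mul hc.ne' (abs_ne_zero.2 hf0)]
      exact log_le_log (abs_pos.2 hg0) hg
    rw [norm_eq_abs, norm_one, mul_one, abs_le]
    constructor <;> linarith [le_abs_self (log C), le_abs_self (log c), abs_nonneg (log C),
      abs_nonneg (log c)]
  exact IsLittleO.isEquivalent <| hbdd.trans_isLittleO <| (isLittleO_one_left_iff ℝ).2 <|
      tendsto_norm_atTop_atTop.comp <| tendsto_log_atTop.comp hg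

theorem isTheta_natCast_of_eventually_sub_mem_Icc {z : ℕ → ℝ} {a b : ℝ} (ha : 0 < a)
    (h : ∀ᶠ k in atTop, z (k + 1) - z k ∈ Set.Icc a b) :
    z =Θ[atTop] (fun k ↦ (k : ℝ)) := by
  obtain ⟨N, hN⟩ := eventually_atTop.1 h
  have hlow : MonotoneOn (fun k : ℕ ↦ z k - a * k) {k | N ≤ k} :=
    monotoneOn_nat_Ici_of_le_succ fun k hk ↦ by push_cast; linarith [(hN k hk).1]
  have hup : AntitoneOn (fun k : ℕ ↦ z k - b * k) {k | N ≤ k} :=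
    antitoneOn_nat_Ici_of_succ_le fun k hk ↦ by push_cast; linarith [(hN k hk).2]
  have hb : 0 ≤ b := ha.le.trans <| (hN N le_rfl).1.trans (hN N le_rfl).2
  refine ⟨IsBigO.of_bound (|z N| + b) ?_, IsBigO.of_bound (2 / a) ?_⟩
  · filter_upwards [eventually_ge_atTop (max N 1)] with k hk
    have hkN : N ≤ k := le_of_max_le_left hk
    have hk1 : (1 : ℝ) ≤ k := by exact_mod_cast le_of_max_le_right hk
    have h1 := hlow (le_refl N) hkN hkN
    have h2 := hup (le_refl N) hkN hkN
    have hNk : (N : ℝ) ≤ k := by exact_mod_cast hkN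
    simp only at h1 h2
    rw [norm_eq_abs, norm_natCast, abs_le]
    constructor <;> nlinarith [abs_nonneg (z N), neg_abs_le (z N), le_abs_self (z N)]
  · filter_upwards [eventually_ge_atTop N,
      (tendsto_natCast_atTop_atTop.const_mul_atTop ha).eventually_ge_atTop (2 * (a * N - z N))]
      with k hkN hk
    have h1 := hlow (le_refl N) hkN hkN
    simp only at h1
    have hzk : a / 2 * k ≤ z k := by linarith
    rw [norm_natCast, norm_of_nonneg ((by positivity : 0 ≤ a / 2 * k).trans hzk)]
    calc (k : ℝ) = 2 / a * (a / 2 * k) := by field_simp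
      _ ≤ 2 / a * z k := by gcongr

theorem rpow_neg_sub_rpow_neg_mem_Icc_of_sub_mem_Icc {η ρ a b : ℝ} (hη : 1 ≤ η) (hb : 0 < b)
    (hba : b ≤ a) (hab : a - b ∈ Set.Icc (1 / ρ * a ^ η) (ρ * a ^ η)) :
    b ^ (-(η - 1)) - a ^ (-(η - 1)) ∈ Set.Icc ((η - 1) / ρ) ((η - 1) * ρ * (a / b) ^ η) := by
  have ha : 0 < a := hb.trans_le hba
  obtain ⟨hmvt_low, hmvt_up⟩ := Real.rpow_neg_sub_rpow_neg_mem_Icc (sub_nonneg.2 hη) hb hba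
  rw [show -(η - 1) - 1 = -η by ring] at hmvt_low hmvt_up
  constructor
  · calc (η - 1) / ρ = (η - 1) * a ^ (-η) * (1 / ρ * a ^ η) := by
          rw [rpow_neg ha.le]; field_simp
      _ ≤ (η - 1) * a ^ (-η) * (a - b) := by gcongr; exact hab.1
      _ ≤ _ := hmvt_low
  · calc _ ≤ (η - 1) * b ^ (-η) * (a - b) := hmvt_up
      _ ≤ (η - 1) * b ^ (-η) * (ρ * a ^ η) := by gcongr; exact hab.2
      _ = (η - 1) * ρ * (a / b) ^ η := by
          rw [rpow_neg hb.le, div_rpow ha.le hb.le]; ring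

theorem eventually_half_le_succ_of_sub_le_rpow {y : ℕ → ℝ} {η ρ : ℝ} (hpos : ∀ k, 0 < y k)
    (hlim : Tendsto y atTop (𝓝 0)) (hη : 1 < η) (hup : ∀ k, y k - y (k + 1) ≤ ρ * y k ^ η) :
    ∀ᶠ k in atTop, y k / 2 ≤ y (k + 1) := by
  have hsmall : Tendsto (fun k ↦ ρ * y k ^ (η - 1)) atTop (𝓝 0) := by
    simpa [zero_rpow (sub_pos.2 hη).ne'] using
      ((continuousAt_rpow_const 0 (η - 1) (Or.inr (sub_pos.2 hη).le)).tendsto.comp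
        hlim).const_mul ρ
  filter_upwards [hsmall.eventually (eventually_le_nhds one_half_pos)] with k hk
  have hyη : y k ^ η = y k ^ (η - 1) * y k := by
    rw [← rpow_add_one (hpos k).ne']; ring_nf
  have hstep := hup k
  rw [hyη] at hstep
  linarith [mul_le_mul_of_nonneg_right hk (hpos k).le]

theorem isTheta_rpow_neg_natCast_of_sub_mem_Icc {y : ℕ → ℝ} {η ρ : ℝ} (hpos : ∀ k, 0 < y k)
    (hanti : Antitone y) (hlim : Tendsto y atTop (𝓝 0)) (hη : 1 < η) (hρ : 0 < ρ)
    (hstep : ∀ k, y k - y (k + 1) ∈ Set.Icc (1 / ρ * y k ^ η) (ρ * y k ^ η)) :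
    (fun k ↦ y k ^ (-(η - 1))) =Θ[atTop] (fun k ↦ (k : ℝ)) := by
  refine isTheta_natCast_of_eventually_sub_mem_Icc (b := (η - 1) * ρ * 2 ^ η)
    (div_pos (sub_pos.2 hη) hρ) ?_
  filter_upwards [eventually_half_le_succ_of_sub_le_rpow hpos hlim hη fun k ↦ (hstep k).2]
    with k hk
  obtain ⟨hlow, hup⟩ := rpow_neg_sub_rpow_neg_mem_Icc_of_sub_mem_Icc hη.le (hpos _)
    (hanti (Nat.le_succ k)) (hstep k)
  have hratio : y k / y (k + 1) ≤ 2 := (div_le_iff₀ (hpos _)).2 (by linarith)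
  refine ⟨hlow, hup.trans ?_⟩
  gcongr
  exact div_nonneg (hpos _).le (hpos _).le

/-- Borel-rarefaction formula: if `y_k − y_{k+1} ≍ y_k^η` with `η > 1`, then
`1 / (1 − ln y_k / ln k) → (η−1)/η`. -/
theorem borel_rarefaction_formula
    (ys : ℕ → ℝ) (η ρ : ℝ)
    (hpos : ∀ k, 0 < ys k) (hanti : StrictAnti ys)
    (hlim : Filter.Tendsto ys Filter.atTop (nhds 0))
    (hη : 1 < η) (hρ : 1 ≤ ρ)
    (hcomp : ∀ k : ℕ,
      (1/ρ) * ys k ^ η ≤ ys k - ys (k+1) ∧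
      ys k - ys (k+1) ≤ ρ * ys k ^ η) :
    Filter.Tendsto
      (fun k : ℕ => 1 / (1 - Real.log (ys k) / Real.log (k : ℝ)))
      Filter.atTop (nhds ((η - 1) / η)) := by
  have hz := isTheta_rpow_neg_natCast_of_sub_mem_Icc hpos hanti.antitone hlim hη
    (by linarith) hcomp
  have hβ : 0 < η - 1 := sub_pos.2 hη
  have hlogk : ∀ᶠ k : ℕ in atTop, log (k : ℝ) ≠ 0 :=
    (tendsto_log_atTop.comp tendsto_natCast_atTop_atTop).eventually_ne_atTop 0
  have hlog : Tendsto (fun k ↦ log (ys k) / log k) atTop (𝓝 (-(η - 1)⁻¹)) := by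
    convert ((isEquivalent_iff_tendsto_one hlogk).1
      (hz.log_isEquivalent tendsto_natCast_atTop_atTop)).const_mul (-(η - 1)⁻¹) using 2 with k
    · simp only [Pi.div_apply, log_rpow (hpos k)]
      field_simp
    · ring
  have hden : (1 : ℝ) - -(η - 1)⁻¹ ≠ 0 := by
    rw [sub_neg_eq_add]
    exact (add_pos one_pos (inv_pos.2 hβ)).ne'
  convert (tendsto_const_nhds (x := (1 : ℝ))).div (tendsto_const_nhds.sub hlog) hden using 2
  · rfl
  · rw [show 1 - -(η - 1)⁻¹ = η / (η - 1) by field_simp; ring, one_div_div]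
end
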